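/- arXiv:2204.02083 — 9 statements merged into one kernel-verified Lean document; each statement's English description precedes it below -/
import Mathlib

section
/- Let n be an odd positive integer, r = 2r' an even positive integer with gcd(n, r) = 1. Then gcd(2^{n r'} + 1, 2^r - 1) = 2^{r'} + 1. -/
/-- Let `n` be an odd positive integer, `r = 2r'` an even positive integer with
`gcd(n, r) = 1`. Then `gcd(2^{n r'} + 1, 2^r - 1) = 2^{r'} + 1`. -/
theorem stmt_0 (n r' : ℕ) (hn : 0 < n) (hodd : Odd n) (hr' : 0 < r')
    (hgcd : Nat.gcd n (2 * r') = 1) :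
    Nat.gcd (2 ^ (n * r') + 1) (2 ^ (2 * r') - 1) = 2 ^ r' + 1 := by
  have hpow : (2 : ℕ) ^ (n * r') = (2 ^ r') ^ n := by
    rw [← pow_mul, mul_comm]
  have hfac : (2 : ℕ) ^ (2 * r') - 1 = (2 ^ r' + 1) * (2 ^ r' - 1) := by
    have : (2 : ℕ) ^ (2 * r') = (2 ^ r') ^ 2 := by rw [← pow_mul, mul_comm]
    rw [this]
    have := Nat.sq_sub_sq (2 ^ r') 1
    simpa using this
  -- 2^r' + 1 divides 2^(n r') + 1
  have h1 : (2 ^ r' + 1) ∣ (2 ^ (n * r') + 1) := by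
    have : ((2 : ℤ) ^ r' + 1) ∣ ((2 ^ r') ^ n + 1 ^ n) :=
      Odd.add_dvd_pow_add_pow _ _ hodd
    have : ((2 : ℤ) ^ r' + 1) ∣ (2 ^ (n * r') + 1) := by
      rwa [one_pow, ← pow_mul, mul_comm r' n] at this
    exact_mod_cast this
  -- 2^r' + 1 divides 2^(2r') - 1
  have h2 : (2 ^ r' + 1) ∣ (2 ^ (2 * r') - 1) := by
    rw [hfac]; exact Dvd.intro _ rfl
  -- 2^(n r') + 1 is coprime to 2^r' - 1
  have hd : (2 : ℕ) ^ r' - 1 ∣ 2 ^ (n * r') - 1 := by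
    have := Nat.sub_dvd_pow_sub_pow (2 ^ r') 1 n
    rwa [one_pow, ← pow_mul, mul_comm r' n] at this
  have hcop : Nat.Coprime (2 ^ (n * r') + 1) (2 ^ r' - 1) := by
    have hcop0 : Nat.Coprime (2 ^ (n * r') + 1) (2 ^ (n * r') - 1) := by
      have hm : 1 ≤ (2 : ℕ) ^ (n * r') := Nat.one_le_two_pow
      have hodd' : Odd (2 ^ (n * r') + 1) := by
        have : Even ((2 : ℕ) ^ (n * r')) :=
          (Nat.even_pow' (by positivity)).mpr even_two
        exact this.add_one
      rcases hodd' with ⟨k, hk⟩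
      have h2' : Nat.gcd (2 ^ (n * r') + 1) (2 ^ (n * r') - 1) ∣ 2 := by
        have := Nat.dvd_sub (Nat.gcd_dvd_left (2 ^ (n * r') + 1) (2 ^ (n * r') - 1))
          (Nat.gcd_dvd_right (2 ^ (n * r') + 1) (2 ^ (n * r') - 1))
        have heq : (2 ^ (n * r') + 1) - (2 ^ (n * r') - 1) = 2 := by omega
        rwa [heq] at this
      rcases (Nat.dvd_prime Nat.prime_two).mp h2' with h | h
      · exact h
      · exfalso
        have := Nat.gcd_dvd_left (2 ^ (n * r') + 1) (2 ^ (n * r') - 1)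
        rw [h] at this
        rcases this with ⟨c, hc⟩
        omega
    exact hcop0.coprime_dvd_right hd
  apply Nat.dvd_antisymm
  · have hdvdA : Nat.gcd (2 ^ (n * r') + 1) (2 ^ (2 * r') - 1) ∣ 2 ^ (n * r') + 1 :=
      Nat.gcd_dvd_left _ _
    have hdvdB : Nat.gcd (2 ^ (n * r') + 1) (2 ^ (2 * r') - 1) ∣ (2 ^ r' + 1) * (2 ^ r' - 1) := by
      rw [← hfac]; exact Nat.gcd_dvd_right _ _
    have hcop' : Nat.Coprime (Nat.gcd (2 ^ (n * r') + 1) (2 ^ (2 * r') - 1)) (2 ^ r' - 1) :=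
      Nat.Coprime.coprime_dvd_left hdvdA hcop
    exact (Nat.Coprime.dvd_of_dvd_mul_right hcop' hdvdB)
  · exact Nat.dvd_gcd h1 h2
end

section
/- Let q = 2^n. Matrices A = (a b; c d) in GL_2(F_q) whose induced Möbius transformation maps the set {β : β^{2^r} = β} ∩ (roots of degree-r irreducible polynomials dividing x^{2^r}+x) into itself, in the sense that (Aα)^{2^r} = Aα whenever α^{2^r} = α and α has degree r ≥ 3 over F_q, satisfy: the equations c·a^{2^r} + a·c^{2^r} = 0, d·a^{2^r} + b·c^{2^r} + a·d^{2^r} + c·b^{2^r} = 0, b·d^{2^r} + d·b^{2^r} = 0 hold. Conversely, in PGL_2(F_q) the solutions of this system (with ad - bc ≠ 0, characteristic 2) are exactly the six matrices with entries in F_2: the identity, (0 1;1 0), (1 1;0 1), (1 0;1 1), (1 1;1 0), (0 1;1 1). -/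
/-! Since `α` is fixed by `x ↦ x ^ 2 ^ r`, the Möbius image `(aα + b)/(cα + d)` is fixed as well
exactly when, after clearing denominators, `α` is a root of the quadratic whose coefficients are
the three expressions; as `α` has degree `r ≥ 3`, that quadratic is zero.

Conversely, for `gcd(r, n) = 1` the subfield of `F_{2^n}` fixed by `x ↦ x ^ 2 ^ r` is `F_2`, so
`x y^{2^r} + y x^{2^r} = 0` forces `x = 0`, `y = 0` or `x = y`. This applies to the columns
`(a, c)`, `(b, d)` and to their sum `(a + b, c + d)`, whose expression is the sum of the three;
together with `ad - bc ≠ 0` it leaves only the scalar multiples of the six matrices of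
`GL_2(F_2)`. -/

open Polynomial

theorem pow_eq_self_of_pow_pow_eq_self {F : Type*} [Field F] [Fintype F] {p n r : ℕ}
    (hF : Fintype.card F = p ^ n) (hrn : r.Coprime n) {x : F} (hx : x ^ p ^ r = x) :
    x ^ p = x := by
  have hr : Function.IsPeriodicPt (· ^ p) r x := by
    rw [Function.IsPeriodicPt, Function.IsFixedPt, pow_iterate]; exact hx
  have hn : Function.IsPeriodicPt (· ^ p) n x := by
    rw [Function.IsPeriodicPt, Function.IsFixedPt, pow_iterate, ← hF]
    exact FiniteField.pow_card x
  simpa [hrn.gcd_eq_one, Function.IsPeriodicPt, Function.IsFixedPt] using hr.gcd hn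

theorem eq_zero_or_eq_zero_or_eq_of_mul_pow_add_mul_pow_eq_zero {F : Type*} [Field F]
    [Fintype F] [CharP F 2] {n r : ℕ} (hF : Fintype.card F = 2 ^ n) (hrn : r.Coprime n)
    {x y : F} (h : x * y ^ 2 ^ r + y * x ^ 2 ^ r = 0) : x = 0 ∨ y = 0 ∨ x = y := by
  refine or_iff_not_imp_left.2 fun hx => or_iff_not_imp_left.2 fun hy => ?_
  have hfix : (x / y) ^ 2 ^ r = x / y := by
    rw [div_pow, div_eq_div_iff (pow_ne_zero _ hy) hy, ← CharTwo.add_eq_zero]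
    linear_combination h
  have hidem : IsIdempotentElem (x / y) := by
    rw [IsIdempotentElem, ← sq]; exact pow_eq_self_of_pow_pow_eq_self hF hrn hfix
  simpa [hx, hy, div_eq_one_iff_eq] using IsIdempotentElem.iff_eq_zero_or_one.1 hidem

theorem eq_zero_of_aeval_eq_zero_of_natDegree_lt {F K : Type*} [Field F] [Field K]
    [Algebra F K] {α : K} {P : F[X]} (hP : aeval α P = 0)
    (hlt : P.natDegree < (minpoly F α).natDegree) : P = 0 := by
  by_contra h
  exact hlt.not_ge (natDegree_le_of_dvd (minpoly.dvd F α hP) h)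

theorem eq_zero_of_quadratic_relation {F K : Type*} [Field F] [Field K] [Algebra F K]
    {α : K} (hdeg : 2 < (minpoly F α).natDegree) {u v w : F}
    (h : algebraMap F K u * α ^ 2 + algebraMap F K v * α + algebraMap F K w = 0) :
    u = 0 ∧ v = 0 ∧ w = 0 := by
  have hP : C u * X ^ 2 + C v * X + C w = 0 := by
    refine eq_zero_of_aeval_eq_zero_of_natDegree_lt (α := α) (by simpa using h) ?_
    exact lt_of_le_of_lt (by compute_degree) hdeg
  refine ⟨?_, ?_, ?_⟩
  · simpa using congrArg (coeff · 2) hP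
  · simpa using congrArg (coeff · 1) hP
  · simpa using congrArg (coeff · 0) hP

-- The terms are ordered so that in characteristic 2 `CharTwo.sub_eq_add` gives the paper's sums.
theorem relations_of_mobius_pow_eq_self {F K : Type*} [Field F] [Field K] [Algebra F K] {p r : ℕ}
    [ExpChar K p] {α : K} (hdeg : 2 < (minpoly F α).natDegree) (hα : α ^ p ^ r = α)
    {a b c d : F} (hcd : c ≠ 0 ∨ d ≠ 0)
    (h : ((algebraMap F K a * α + algebraMap F K b) /
          (algebraMap F K c * α + algebraMap F K d)) ^ p ^ r
        = (algebraMap F K a * α + algebraMap F K b) /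
            (algebraMap F K c * α + algebraMap F K d)) :
    c * a ^ p ^ r - a * c ^ p ^ r = 0 ∧
      d * a ^ p ^ r - b * c ^ p ^ r - a * d ^ p ^ r + c * b ^ p ^ r = 0 ∧
      b * d ^ p ^ r - d * b ^ p ^ r = 0 := by
  have hden : algebraMap F K c * α + algebraMap F K d ≠ 0 := by
    intro h0
    obtain ⟨-, hc, hd⟩ := eq_zero_of_quadratic_relation (u := 0) hdeg (by simpa using h0)
    exact hcd.elim (· hc) (· hd)
  have frob : ∀ x y : F, (algebraMap F K x * α + algebraMap F K y) ^ p ^ r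
      = algebraMap F K (x ^ p ^ r) * α + algebraMap F K (y ^ p ^ r) := fun x y => by
    rw [add_pow_expChar_pow, mul_pow, hα, map_pow, map_pow]
  rw [div_pow, div_eq_div_iff (pow_ne_zero _ hden) hden, frob, frob] at h
  obtain ⟨h2, h1, h0⟩ := eq_zero_of_quadratic_relation hdeg (u := c * a ^ p ^ r - a * c ^ p ^ r)
    (v := d * a ^ p ^ r - b * c ^ p ^ r - a * d ^ p ^ r + c * b ^ p ^ r)
    (w := d * b ^ p ^ r - b * d ^ p ^ r)
    (by simp only [map_sub, map_add, map_mul]; linear_combination h)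
  exact ⟨h2, h1, by linear_combination -h0⟩

theorem exists_scalar_mul_GL2_F2 {F : Type*} [Field F] [CharP F 2] {a b c d : F}
    (hdet : a * d - b * c ≠ 0) (hac : c = 0 ∨ a = 0 ∨ c = a) (hbd : b = 0 ∨ d = 0 ∨ b = d)
    (hsum : a + b = 0 ∨ c + d = 0 ∨ a + b = c + d) :
    ∃ lam : F, lam ≠ 0 ∧
      ((a, b, c, d) = (lam, 0, 0, lam) ∨ (a, b, c, d) = (0, lam, lam, 0) ∨
       (a, b, c, d) = (lam, lam, 0, lam) ∨ (a, b, c, d) = (lam, 0, lam, lam) ∨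
       (a, b, c, d) = (lam, lam, lam, 0) ∨ (a, b, c, d) = (0, lam, lam, lam)) := by
  rcases hac with rfl | rfl | rfl <;> rcases hbd with rfl | rfl | rfl <;>
    first | exact ⟨a, by grind⟩ | exact ⟨b, by grind⟩ | exact ⟨c, by grind⟩

theorem stmt_3_general (n r : ℕ) (hr : 3 ≤ r)
    (hrn : Nat.gcd r n = 1)
    (F K : Type) [Field F] [Fintype F] [Field K] [Algebra F K]
    (hF : Fintype.card F = 2 ^ n)
    (a b c d : F) (hdet : a * d - b * c ≠ 0)
    (α : K) (hdeg : (minpoly F α).natDegree = r) (hfix : α ^ 2 ^ r = α) :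
    (((algebraMap F K a * α + algebraMap F K b) /
          (algebraMap F K c * α + algebraMap F K d)) ^ 2 ^ r
        = (algebraMap F K a * α + algebraMap F K b) /
            (algebraMap F K c * α + algebraMap F K d) →
      (c * a ^ 2 ^ r + a * c ^ 2 ^ r = 0 ∧
       d * a ^ 2 ^ r + b * c ^ 2 ^ r + a * d ^ 2 ^ r + c * b ^ 2 ^ r = 0 ∧
       b * d ^ 2 ^ r + d * b ^ 2 ^ r = 0)) ∧
    ((c * a ^ 2 ^ r + a * c ^ 2 ^ r = 0 ∧
      d * a ^ 2 ^ r + b * c ^ 2 ^ r + a * d ^ 2 ^ r + c * b ^ 2 ^ r = 0 ∧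
      b * d ^ 2 ^ r + d * b ^ 2 ^ r = 0) ↔
      ∃ lam : F, lam ≠ 0 ∧
        ((a, b, c, d) = (lam, 0, 0, lam) ∨ (a, b, c, d) = (0, lam, lam, 0) ∨
         (a, b, c, d) = (lam, lam, 0, lam) ∨ (a, b, c, d) = (lam, 0, lam, lam) ∨
         (a, b, c, d) = (lam, lam, lam, 0) ∨ (a, b, c, d) = (0, lam, lam, lam))) := by
  have : Fact (Nat.Prime 2) := ⟨Nat.prime_two⟩
  have : CharP F 2 := charP_of_card_eq_prime_pow hF
  have : CharP K 2 := charP_of_injective_algebraMap (algebraMap F K).injective 2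
  refine ⟨fun h => ?_, fun ⟨e1, e2, e3⟩ => ?_, ?_⟩
  · have hcd : c ≠ 0 ∨ d ≠ 0 := by
      contrapose! hdet
      obtain ⟨rfl, rfl⟩ := hdet
      ring
    simpa only [CharTwo.sub_eq_add] using relations_of_mobius_pow_eq_self (by omega) hfix hcd h
  · have hsum : (a + b) * (c + d) ^ 2 ^ r + (c + d) * (a + b) ^ 2 ^ r = 0 := by
      rw [add_pow_char_pow, add_pow_char_pow]
      linear_combination e1 + e2 + e3
    exact exists_scalar_mul_GL2_F2 hdet
      (eq_zero_or_eq_zero_or_eq_of_mul_pow_add_mul_pow_eq_zero hF hrn e1)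
      (eq_zero_or_eq_zero_or_eq_of_mul_pow_add_mul_pow_eq_zero hF hrn e3)
      (eq_zero_or_eq_zero_or_eq_of_mul_pow_add_mul_pow_eq_zero hF hrn hsum)
  · rintro ⟨lam, -, h | h | h | h | h | h⟩ <;> simp only [Prod.mk.injEq] at h <;>
      obtain ⟨rfl, rfl, rfl, rfl⟩ := h <;> simp [CharTwo.add_self_eq_zero]

/-- Let `q = 2^n` (`n ≥ 5` prime), `r ≥ 3` with `gcd(r,n) = 1`, and let `α` (in an extension
`K` of `F_q`) have degree `r` over `F_q` and satisfy `α^{2^r} = α`.  For a matrix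
`A = (a b; c d)` with `ad - bc ≠ 0`: if the Möbius image `A·α = (aα+b)/(cα+d)` again satisfies
`(A·α)^{2^r} = A·α`, then the three equations
`c·a^{2^r} + a·c^{2^r} = 0`, `d·a^{2^r} + b·c^{2^r} + a·d^{2^r} + c·b^{2^r} = 0`,
`b·d^{2^r} + d·b^{2^r} = 0` hold; and conversely, the invertible solutions of this system are,
up to a nonzero scalar, exactly the six matrices with entries in `F_2`:
`(1 0;0 1), (0 1;1 0), (1 1;0 1), (1 0;1 1), (1 1;1 0), (0 1;1 1)`. -/
theorem stmt_3 (n r : ℕ) (hn : n.Prime) (hn5 : 5 ≤ n) (hr : 3 ≤ r)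
    (hrn : Nat.gcd r n = 1)
    (F K : Type) [Field F] [Fintype F] [Field K] [Algebra F K]
    (hF : Fintype.card F = 2 ^ n)
    (a b c d : F) (hdet : a * d - b * c ≠ 0)
    (α : K) (hdeg : (minpoly F α).natDegree = r) (hfix : α ^ 2 ^ r = α) :
    (((algebraMap F K a * α + algebraMap F K b) /
          (algebraMap F K c * α + algebraMap F K d)) ^ 2 ^ r
        = (algebraMap F K a * α + algebraMap F K b) /
            (algebraMap F K c * α + algebraMap F K d) →
      (c * a ^ 2 ^ r + a * c ^ 2 ^ r = 0 ∧
       d * a ^ 2 ^ r + b * c ^ 2 ^ r + a * d ^ 2 ^ r + c * b ^ 2 ^ r = 0 ∧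
       b * d ^ 2 ^ r + d * b ^ 2 ^ r = 0)) ∧
    ((c * a ^ 2 ^ r + a * c ^ 2 ^ r = 0 ∧
      d * a ^ 2 ^ r + b * c ^ 2 ^ r + a * d ^ 2 ^ r + c * b ^ 2 ^ r = 0 ∧
      b * d ^ 2 ^ r + d * b ^ 2 ^ r = 0) ↔
      ∃ lam : F, lam ≠ 0 ∧
        ((a, b, c, d) = (lam, 0, 0, lam) ∨ (a, b, c, d) = (0, lam, lam, 0) ∨
         (a, b, c, d) = (lam, lam, 0, lam) ∨ (a, b, c, d) = (lam, 0, lam, lam) ∨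
         (a, b, c, d) = (lam, lam, lam, 0) ∨ (a, b, c, d) = (0, lam, lam, lam))) :=
  stmt_3_general n r hr hrn F K hF a b c d hdet α hdeg hfix
end

section
/- Let q be a power of 2 and r ≥ 3. The number of monic irreducible polynomials of degree r over F_q that divide x^{2^r} + x equals (1/r) · Σ_{d | r} μ(d)(2^{r/d} − 1), where μ is the Möbius function. -/
/-!
The roots of `X ^ 2 ^ r - X` in an algebraic closure of `F` are the points of `x ↦ x ^ 2` of
period dividing `r`. For such a root `x`, the degree of its minimal polynomial over `F` is the
minimal period of `x` under `x ↦ x ^ q`, which is `m / gcd(m, n)` where `m ∣ r` is its minimal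
period under squaring; since `gcd(r, n) = 1`, the degree is `m`. Hence `r` times the number of
irreducible factors of degree `r` is the number of points of exact period `r` under squaring,
which Möbius inversion computes from the `2 ^ m` points of period dividing `m`; the `- 1` terms
of the formula add up to `∑_{d ∣ r} μ(d) = 0`.
-/

open Polynomial Function Finset ArithmeticFunction IntermediateField
open scoped ArithmeticFunction.Moebius

namespace Function

variable {α : Type*} (f : α → α)

theorem ncard_isPeriodicPt_eq_sum_ncard_minimalPeriod_eq {m : ℕ} (hm : m ≠ 0)
    (hfin : {x | IsPeriodicPt f m x}.Finite) :
    {x | IsPeriodicPt f m x}.ncard = ∑ d ∈ m.divisors, {x | minimalPeriod f x = d}.ncard := by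
  classical
  have hfiber (d : ℕ) (hd : d ∈ m.divisors) :
      {x | minimalPeriod f x = d} = ↑{x ∈ hfin.toFinset | minimalPeriod f x = d} := by
    ext x
    simp only [Set.mem_ofPred_eq, coe_filter, Set.Finite.mem_toFinset,
      isPeriodicPt_iff_minimalPeriod_dvd]
    exact ⟨fun h => ⟨h ▸ Nat.dvd_of_mem_divisors hd, h⟩, And.right⟩
  rw [sum_congr rfl fun d hd => by rw [hfiber d hd, Set.ncard_coe_finset],
    ← card_eq_sum_card_fiberwise, Set.ncard_eq_toFinset_card _ hfin]
  intro x hx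
  rw [mem_coe, Set.Finite.mem_toFinset, Set.mem_ofPred_eq] at hx
  exact Nat.mem_divisors.mpr ⟨hx.minimalPeriod_dvd, hm⟩

theorem ncard_minimalPeriod_eq_sum_moebius {r : ℕ} (hr : r ≠ 0)
    (hfin : ∀ m, m ∣ r → {x | IsPeriodicPt f m x}.Finite) :
    ({x | minimalPeriod f x = r}.ncard : ℤ) =
      ∑ d ∈ r.divisors, μ d * {x | IsPeriodicPt f (r / d) x}.ncard := by
  have hinv := (sum_eq_iff_sum_mul_moebius_eq_on (R := ℤ) {m | m ∣ r} (fun _ _ => dvd_trans)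
    (f := fun d => {x | minimalPeriod f x = d}.ncard)
    (g := fun m => {x | IsPeriodicPt f m x}.ncard)).mp
    (fun m hm hmr => mod_cast
      (ncard_isPeriodicPt_eq_sum_ncard_minimalPeriod_eq f hm.ne' (hfin m hmr)).symm)
    r (Nat.pos_of_ne_zero hr) dvd_rfl
  simp only [Int.cast_id] at hinv
  rw [← hinv,
    Nat.sum_divisorsAntidiagonal fun a b => μ a * ({x | IsPeriodicPt f b x}.ncard : ℤ)]

theorem isPeriodicPt_pow_iff {M : Type*} [Monoid M] {p m : ℕ} {x : M} :
    IsPeriodicPt (· ^ p) m x ↔ x ^ p ^ m = x := by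
  rw [IsPeriodicPt, IsFixedPt, pow_iterate]

end Function

theorem ArithmeticFunction.sum_divisors_moebius_eq_zero {r : ℕ} (hr : r ≠ 1) :
    ∑ d ∈ r.divisors, (μ d : ℤ) = 0 := by
  rw [← coe_mul_zeta_apply, moebius_mul_coe_zeta, one_apply_ne hr]

namespace Polynomial

section PeriodicPoints

variable {K : Type*} [Field K] {p m : ℕ}

theorem setOf_isPeriodicPt_pow_eq_rootSet (hp : 1 < p) (hm : m ≠ 0) :
    {x : K | IsPeriodicPt (· ^ p) m x} = (X ^ p ^ m - X : K[X]).rootSet K := by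
  ext x
  rw [mem_rootSet, Set.mem_ofPred_eq, isPeriodicPt_pow_iff]
  simp [FiniteField.X_pow_card_pow_sub_X_ne_zero K hm hp, sub_eq_zero]

theorem ncard_isPeriodicPt_pow_char [Fact p.Prime] [CharP K p] (hm : m ≠ 0)
    (hsplit : Splits (X ^ p ^ m - X : K[X])) :
    {x : K | IsPeriodicPt (· ^ p) m x}.ncard = p ^ m := by
  have hp : 1 < p := (Fact.out : p.Prime).one_lt
  rw [setOf_isPeriodicPt_pow_eq_rootSet hp hm, ← Nat.card_coe_set_eq, Nat.card_eq_fintype_card,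
    card_rootSet_eq_natDegree (galois_poly_separable p _ (dvd_pow_self p hm))
      (by simpa using hsplit),
    FiniteField.X_pow_card_pow_sub_X_natDegree_eq K hm hp]

end PeriodicPoints

section Factors

variable {F K : Type*} [Field F] [Field K] [Algebra F K]

theorem rootSet_subset_rootSet_of_dvd {f g : F[X]} (hg : g ≠ 0) (hfg : f ∣ g) :
    f.rootSet K ⊆ g.rootSet K := fun _ hx =>
  mem_rootSet.mpr ⟨hg, aeval_eq_zero_of_dvd_aeval_eq_zero hfg (mem_rootSet.mp hx).2⟩

theorem mem_rootSet_iff_minpoly_eq {f : F[X]} (hirr : Irreducible f) (hmon : f.Monic) {x : K} :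
    x ∈ f.rootSet K ↔ minpoly F x = f := by
  rw [mem_rootSet, eq_comm (a := minpoly F x), minpoly.eq_iff_aeval_eq_zero hirr hmon]
  exact and_iff_right hmon.ne_zero

variable {g : F[X]}

theorem card_rootSet_eq_natDegree_of_dvd (hg : g.Separable)
    (hsplit : Splits (g.map (algebraMap F K))) {f : F[X]} (hfg : f ∣ g) :
    Fintype.card (f.rootSet K) = f.natDegree :=
  card_rootSet_eq_natDegree (hg.of_dvd hfg)
    (hsplit.of_dvd (Polynomial.map_ne_zero hg.ne_zero) (Polynomial.map_dvd _ hfg))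

theorem exists_mem_rootSet_minpoly_eq_iff (hg : g.Separable)
    (hsplit : Splits (g.map (algebraMap F K))) {f : F[X]} :
    (∃ x ∈ g.rootSet K, minpoly F x = f) ↔ f.Monic ∧ Irreducible f ∧ f ∣ g := by
  constructor
  · rintro ⟨x, hx, rfl⟩
    have hint : IsIntegral F x := (isAlgebraic_of_mem_rootSet hx).isIntegral
    exact ⟨minpoly.monic hint, minpoly.irreducible hint, minpoly.dvd F x (mem_rootSet.mp hx).2⟩
  · rintro ⟨hmon, hirr, hfg⟩
    obtain ⟨x, hx⟩ : (f.rootSet K).Nonempty := by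
      rw [← Set.nonempty_coe_sort, ← Fintype.card_pos_iff,
        card_rootSet_eq_natDegree_of_dvd hg hsplit hfg]
      exact hirr.natDegree_pos
    exact ⟨x, rootSet_subset_rootSet_of_dvd hg.ne_zero hfg hx,
      (mem_rootSet_iff_minpoly_eq hirr hmon).mp hx⟩

/-- Each monic irreducible factor of degree `r` of `g` is the minimal polynomial of exactly `r`
roots of `g`. -/
theorem ncard_monic_irreducible_dvd_mul (hg : g.Separable)
    (hsplit : Splits (g.map (algebraMap F K))) (r : ℕ) :
    {f : F[X] | f.Monic ∧ Irreducible f ∧ f.natDegree = r ∧ f ∣ g}.ncard * r =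
      {x : K | aeval x g = 0 ∧ (minpoly F x).natDegree = r}.ncard := by
  classical
  let A : Finset K := {x ∈ (g.rootSet K).toFinset | (minpoly F x).natDegree = r}
  have hA : {x : K | aeval x g = 0 ∧ (minpoly F x).natDegree = r} = A := by
    ext x
    simp [A, mem_rootSet, hg.ne_zero]
  have hfactors : {f : F[X] | f.Monic ∧ Irreducible f ∧ f.natDegree = r ∧ f ∣ g} =
      A.image (minpoly F) := by
    ext f
    simp only [Set.mem_ofPred_eq, coe_image, Set.mem_image, mem_coe, mem_filter,
      Set.mem_toFinset, A]
    constructor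
    · rintro ⟨hmon, hirr, rfl, hfg⟩
      obtain ⟨x, hx, hxf⟩ :=
        (exists_mem_rootSet_minpoly_eq_iff hg hsplit).mpr ⟨hmon, hirr, hfg⟩
      exact ⟨x, ⟨hx, by rw [hxf]⟩, hxf⟩
    · rintro ⟨x, ⟨hx, hdeg⟩, rfl⟩
      obtain ⟨hmon, hirr, hfg⟩ :=
        (exists_mem_rootSet_minpoly_eq_iff hg hsplit).mp ⟨x, hx, rfl⟩
      exact ⟨hmon, hirr, hdeg, hfg⟩
  have hfiber (f : F[X]) (hf : f ∈ A.image (minpoly F)) : #{x ∈ A | minpoly F x = f} = r := by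
    obtain ⟨hmon, hirr, hdeg, hfg⟩ :
        f ∈ {f : F[X] | f.Monic ∧ Irreducible f ∧ f.natDegree = r ∧ f ∣ g} := by
      rwa [hfactors]
    have hroots : {x ∈ A | minpoly F x = f} = (f.rootSet K).toFinset := by
      ext x
      rw [mem_filter, Set.mem_toFinset, mem_rootSet_iff_minpoly_eq hirr hmon]
      refine ⟨And.right, fun hxf => ⟨mem_filter.mpr ⟨?_, by rw [hxf, hdeg]⟩, hxf⟩⟩
      exact Set.mem_toFinset.mpr <| rootSet_subset_rootSet_of_dvd hg.ne_zero hfg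
        ((mem_rootSet_iff_minpoly_eq hirr hmon).mpr hxf)
    rw [hroots, Set.toFinset_card, card_rootSet_eq_natDegree_of_dvd hg hsplit hfg, hdeg]
  rw [hA, hfactors, Set.ncard_coe_finset, Set.ncard_coe_finset,
    card_eq_sum_card_image (minpoly F) A, sum_congr rfl hfiber, sum_const, smul_eq_mul]

end Factors

end Polynomial

namespace FiniteField

variable {F K : Type*} [Field F] [Fintype F] [Field K] [Algebra F K]

theorem minimalPeriod_pow_card_eq_natDegree_minpoly {x : K} (hx : IsIntegral F x) :
    minimalPeriod (· ^ Fintype.card F) x = (minpoly F x).natDegree := by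
  have : FiniteDimensional F F⟮x⟯ := adjoin.finiteDimensional hx
  have : Finite F⟮x⟯ := Module.finite_of_finite F
  set σ := frobeniusAlgHom F F⟮x⟯
  -- `σ` is determined by its value at the generator `x`, and its order is `[F⟮x⟯ : F]`.
  have hperiodic (k : ℕ) : IsPeriodicPt (· ^ Fintype.card F) k x ↔ σ ^ k = 1 := by
    rw [isPeriodicPt_pow_iff]
    refine ⟨fun h => adjoin_algHom_ext F fun y hy => ?_, fun h => ?_⟩
    · obtain rfl := Set.mem_singleton_iff.mp hy
      exact Subtype.ext <| by
        simpa [σ, AlgHom.coe_pow, coe_frobeniusAlgHom, pow_iterate] using h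
    · simpa [σ, AlgHom.coe_pow, coe_frobeniusAlgHom, pow_iterate] using
        congrArg Subtype.val (DFunLike.congr_fun h (AdjoinSimple.gen F x))
  rw [← adjoin.finrank hx, ← orderOf_frobeniusAlgHom]
  exact Nat.dvd_antisymm ((hperiodic _).mpr (pow_orderOf_eq_one σ)).minimalPeriod_dvd
    (orderOf_dvd_of_pow_eq_one ((hperiodic _).mp (isPeriodicPt_minimalPeriod _ x)))

theorem natDegree_minpoly_eq_minimalPeriod {p n : ℕ} (hF : Fintype.card F = p ^ n) {x : K}
    (hx : IsIntegral F x) (hcop : (minimalPeriod (· ^ p) x).Coprime n) :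
    (minpoly F x).natDegree = minimalPeriod (· ^ p) x := by
  have hn : n ≠ 0 := by
    rintro rfl
    exact (Fintype.one_lt_card (α := F)).ne' (by rw [hF, pow_zero])
  rw [← minimalPeriod_pow_card_eq_natDegree_minpoly hx, hF, ← pow_iterate,
    minimalPeriod_iterate_eq_div_gcd hn, hcop, Nat.div_one]

theorem ncard_monic_irreducible_dvd_X_pow_sub_X_mul {p n r : ℕ} [Fact p.Prime]
    (hF : Fintype.card F = p ^ n) (hr : r ≠ 0) (hrn : r.Coprime n) :
    ({f : F[X] | f.Monic ∧ Irreducible f ∧ f.natDegree = r ∧ f ∣ X ^ p ^ r - X}.ncard : ℤ)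
      * r = ∑ d ∈ r.divisors, μ d * p ^ (r / d) := by
  have := charP_of_card_eq_prime_pow hF
  let L := AlgebraicClosure F
  have : CharP L p := charP_of_injective_algebraMap (algebraMap F L).injective p
  have hroots : {x : L | aeval x (X ^ p ^ r - X : F[X]) = 0 ∧ (minpoly F x).natDegree = r} =
      {x | minimalPeriod (· ^ p) x = r} := by
    ext x
    have hint : IsIntegral F x := Algebra.IsIntegral.isIntegral x
    simp only [Set.mem_ofPred_eq, map_sub, map_pow, aeval_X, sub_eq_zero]
    rw [← isPeriodicPt_pow_iff]
    constructor
    · rintro ⟨hx, hdeg⟩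
      rw [← hdeg, natDegree_minpoly_eq_minimalPeriod hF hint
        (hrn.coprime_dvd_left hx.minimalPeriod_dvd)]
    · intro h
      refine ⟨h ▸ isPeriodicPt_minimalPeriod _ x, ?_⟩
      rw [natDegree_minpoly_eq_minimalPeriod hF hint (h ▸ hrn), h]
  have hsep := galois_poly_separable (K := F) p (p ^ r) (dvd_pow_self p hr)
  rw [← Nat.cast_mul, ncard_monic_irreducible_dvd_mul hsep (IsAlgClosed.splits (k := L) _) r,
    hroots, ncard_minimalPeriod_eq_sum_moebius _ hr]
  · refine sum_congr rfl fun d hd => ?_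
    have hd : r / d ≠ 0 := (Nat.div_pos (Nat.divisor_le hd) (Nat.pos_of_mem_divisors hd)).ne'
    rw [ncard_isPeriodicPt_pow_char hd (IsAlgClosed.splits _), Nat.cast_pow]
  · intro m hm
    rw [setOf_isPeriodicPt_pow_eq_rootSet (Fact.out : p.Prime).one_lt
      (ne_zero_of_dvd_ne_zero hr hm)]
    exact rootSet_finite _ _

end FiniteField

theorem stmt_7_general (n r : ℕ) (hr : 3 ≤ r) (hrn : Nat.gcd r n = 1)
    (F : Type) [Field F] [Fintype F] (hF : Fintype.card F = 2 ^ n) :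
    (Set.ncard {f : Polynomial F | f.Monic ∧ Irreducible f ∧ f.natDegree = r ∧
        f ∣ X ^ 2 ^ r + X} : ℤ) * r
      = ∑ d ∈ r.divisors, (ArithmeticFunction.moebius d : ℤ) * (2 ^ (r / d) - 1) := by
  have := charP_of_card_eq_prime_pow hF
  simp only [← CharTwo.sub_eq_add, mul_sub, mul_one, sum_sub_distrib,
    sum_divisors_moebius_eq_zero (show r ≠ 1 by omega), sub_zero]
  exact_mod_cast FiniteField.ncard_monic_irreducible_dvd_X_pow_sub_X_mul hF (by omega) hrn

/-- Let `q = 2^n` and `r ≥ 3` with `gcd(r,n) = 1`.  The number of monic irreducible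
polynomials of degree `r` over `F_q` dividing `x^{2^r} + x` equals
`(1/r)·Σ_{d ∣ r} μ(d)(2^{r/d} − 1)`. -/
theorem stmt_7 (n r : ℕ) (hn : 0 < n) (hr : 3 ≤ r) (hrn : Nat.gcd r n = 1)
    (F : Type) [Field F] [Fintype F] (hF : Fintype.card F = 2 ^ n) :
    (Set.ncard {f : Polynomial F | f.Monic ∧ Irreducible f ∧ f.natDegree = r ∧
        f ∣ X ^ 2 ^ r + X} : ℤ) * r
      = ∑ d ∈ r.divisors, (ArithmeticFunction.moebius d : ℤ) * (2 ^ (r / d) - 1) :=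
  stmt_7_general n r hr hrn F hF
end

section
/- Let n be an odd prime, q = 2^n, and r an even integer ≥ 4 with gcd(r, n) = 1, r = 2r'. A monic irreducible polynomial h of degree r over F_q is self-reciprocal (i.e., x^r h(1/x) normalized equals h) and divides x^{2^r} + x if and only if h divides x^{2^{r'}+1} + 1. Consequently, gcd(x^{q^{r'}+1} + 1, x^{2^r} + x) = x^{2^{r'}+1} + 1 in F_q[x]. -/
/-!
Let `x` be the root of `h` in `K = F[X]/(h) ≅ 𝔽_{q^r}`. The roots of `h` are the conjugates
`x ^ q ^ i = x ^ 2 ^ (n * i)`, and `x ^ q ^ s = x` only when `r ∣ s`. Self-reciprocity says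
that `x⁻¹` is a conjugate of `x`, while `h ∣ X ^ 2 ^ r + X` says that `x ^ 2 ^ r = x`, so
exponents of `2` may be read modulo `r`. Then `x⁻¹ = x ^ 2 ^ (n * i)` forces `r' ∣ i`, so `x⁻¹`
is either `x`, impossible since in characteristic `2` that makes `x = 1 ∈ F`, or `x ^ 2 ^ r'`,
i.e. `x ^ (2 ^ r' + 1) = 1`. Conversely, since `n` is invertible modulo `r`,
`x ^ 2 ^ r' = x ^ q ^ i` for some `i`.

For the gcd, in characteristic `2` both polynomials are of the form `X ^ m - 1` up to a factor `X`,
`gcd (X ^ a - 1) (X ^ b - 1) = X ^ gcd a b - 1`, and `gcd (2 ^ (n r') + 1) (2 ^ (2 r') - 1)` is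
`2 ^ r' + 1` because `n` is odd.
-/

open Polynomial

theorem Nat.gcd_pow_add_one_sq_sub_one (a : ℕ) {n : ℕ} (hn : Odd n) :
    Nat.gcd (a ^ n + 1) (a ^ 2 - 1) = a + 1 := by
  rcases Nat.eq_zero_or_pos a with rfl | ha
  · simp [hn.pos.ne']
  obtain ⟨k, rfl⟩ := hn
  have hsq : a ^ 2 ≡ 1 [MOD a ^ 2 - 1] := Nat.modEq_sub (Nat.one_le_pow _ _ ha)
  have hmod : a ^ (2 * k + 1) + 1 ≡ a + 1 [MOD a ^ 2 - 1] := by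
    have := (hsq.pow k).mul_right a |>.add_right 1
    rwa [one_pow, one_mul, ← pow_mul, ← pow_succ] at this
  rw [hmod.gcd_eq, Nat.gcd_eq_left]
  exact ⟨a - 1, by rw [← Nat.sq_sub_sq, one_pow]⟩

namespace EuclideanDomain

variable {R : Type*} [EuclideanDomain R] [DecidableEq R]

theorem associated_gcd_pow_sub_one (r : R) (a b : ℕ) :
    Associated (gcd (r ^ a - 1) (r ^ b - 1)) (r ^ a.gcd b - 1) := by
  refine associated_of_dvd_dvd ?_ (dvd_gcd (dvd_pow_sub_one_of_dvd (Nat.gcd_dvd_left a b))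
    (dvd_pow_sub_one_of_dvd (Nat.gcd_dvd_right a b)))
  set d := gcd (r ^ a - 1) (r ^ b - 1)
  -- in `R ⧸ (d)`, `d ∣ r ^ c - 1` says that the order of the image of `r` divides `c`
  have key (c : ℕ) : d ∣ r ^ c - 1 ↔ Ideal.Quotient.mk (Ideal.span {d}) r ^ c = 1 := by
    rw [← map_pow, ← map_one (Ideal.Quotient.mk _), Ideal.Quotient.mk_eq_mk_iff_sub_mem,
      Ideal.mem_span_singleton]
  exact (key _).2 (pow_gcd_eq_one.2
    ⟨(key a).1 (gcd_dvd_left _ _), (key b).1 (gcd_dvd_right _ _)⟩)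

theorem associated_gcd_mul_right_of_isCoprime {a b c : R} (h : IsCoprime a c) :
    Associated (gcd a (c * b)) (gcd a b) :=
  associated_of_dvd_dvd
    (dvd_gcd (gcd_dvd_left _ _)
      ((h.of_isCoprime_of_dvd_left (gcd_dvd_left _ _)).dvd_of_dvd_mul_left (gcd_dvd_right _ _)))
    (dvd_gcd (gcd_dvd_left _ _) ((gcd_dvd_right _ _).mul_left c))

end EuclideanDomain

theorem pow_pow_mod_eq_of_pow_pow_eq_self {M : Type*} [Monoid M] {x : M} {p r : ℕ}
    (hx : x ^ p ^ r = x) (a : ℕ) : x ^ p ^ (a % r) = x ^ p ^ a := by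
  have hper : Function.IsPeriodicPt (· ^ p) r x := by
    simpa only [Function.IsPeriodicPt, Function.IsFixedPt, pow_iterate] using hx
  simpa only [pow_iterate] using hper.iterate_mod_apply a

theorem pow_two_pow_add_one_eq_one_of_inv_eq {K : Type*} [Field K] [CharP K 2] {x : K}
    {n r' i : ℕ} (hx0 : x ≠ 0) (hdeg : ∀ s, x ^ 2 ^ (n * s) = x → 2 * r' ∣ s)
    (hx : x ^ 2 ^ (2 * r') = x) (hinv : x⁻¹ = x ^ 2 ^ (n * i)) : x ^ (2 ^ r' + 1) = 1 := by
  have h2i : 2 * r' ∣ 2 * i := hdeg _ <| by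
    rw [two_mul, mul_add, pow_add, pow_mul, ← hinv, inv_pow, ← hinv, inv_inv]
  obtain ⟨k, rfl⟩ : r' ∣ i := Nat.dvd_of_mul_dvd_mul_left two_pos h2i
  have hmod : n * (r' * k) % (2 * r') = r' * (n * k % 2) := by
    rw [mul_left_comm, mul_comm 2, Nat.mul_mod_mul_left]
  rw [← pow_pow_mod_eq_of_pow_pow_eq_self hx, hmod] at hinv
  rcases Nat.mod_two_eq_zero_or_one (n * k) with hk | hk
  · rw [hk, mul_zero, pow_zero, pow_one] at hinv
    have hx1 : x = 1 := by
      rw [← CharTwo.sq_inj, one_pow, sq]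
      nth_rw 1 [← hinv]
      exact inv_mul_cancel₀ hx0
    have := Nat.dvd_one.1 (hdeg 1 (by rw [hx1, one_pow]))
    omega
  · rw [hk, mul_one] at hinv
    rw [pow_succ, ← hinv, inv_mul_cancel₀ hx0]

theorem exists_inv_eq_pow_of_pow_two_pow_add_one_eq_one {M : Type*} [DivisionMonoid M] {x : M}
    {n r' : ℕ} (hrn : Nat.Coprime n (2 * r')) (hr' : 0 < r') (hx : x ^ (2 ^ r' + 1) = 1) :
    x ^ 2 ^ (2 * r') = x ∧ ∃ i, x⁻¹ = x ^ 2 ^ (n * i) := by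
  have hinv : x ^ 2 ^ r' = x⁻¹ := eq_inv_of_mul_eq_one_left (by rwa [← pow_succ])
  have hx2 : x ^ 2 ^ (2 * r') = x := by
    rw [two_mul, pow_add, pow_mul, hinv, inv_pow, hinv, inv_inv]
  obtain ⟨m, -, hm⟩ := Nat.exists_mul_mod_eq_one_of_coprime hrn (by omega)
  refine ⟨hx2, m * r', ?_⟩
  have hmod : n * (m * r') % (2 * r') = r' := by
    rw [← mul_assoc, Nat.mul_mod, hm, one_mul, Nat.mod_mod, Nat.mod_eq_of_lt (by omega)]
  rw [← pow_pow_mod_eq_of_pow_pow_eq_self hx2, hmod, hinv]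

theorem Polynomial.Monic.reverse_eq_C_coeff_zero_mul_iff {F K : Type*} [Field F] [Field K]
    [Algebra F K] {h : F[X]} (hm : h.Monic) (hi : Irreducible h) {x : K} (hx : aeval x h = 0)
    (hx0 : x ≠ 0) : h.reverse = C (h.coeff 0) * h ↔ aeval x⁻¹ h = 0 := by
  have : Invertible x := invertibleOfNonzero hx0
  have hrev : aeval x⁻¹ h = 0 ↔ aeval x h.reverse = 0 := by
    simpa only [invOf_eq_inv, inv_inv, aeval_def] using
      (eval₂_reverse_eq_zero_iff (algebraMap F K) x⁻¹ h).symm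
  rw [hrev]
  refine ⟨fun h' ↦ by rw [h', map_mul, hx, mul_zero], fun hrev0 ↦ ?_⟩
  have hdvd : h ∣ h.reverse := (hi.dvd_iff_aeval_eq_zero hx).1 hrev0
  have hC := eq_leadingCoeff_mul_of_monic_of_dvd_of_natDegree_le hm hdvd (reverse_natDegree_le h)
  have hcoeff := congr_arg (coeff · h.natDegree) hC
  simp only [coeff_C_mul, hm.coeff_natDegree, mul_one, coeff_reverse, revAt_le le_rfl,
    Nat.sub_self] at hcoeff
  rwa [← hcoeff] at hC

section AdjoinRoot

variable {F : Type*} [Field F] [Fintype F] {h : F[X]} [Fact (Irreducible h)]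

open AdjoinRoot FiniteField

instance : Module.Finite F (AdjoinRoot h) :=
  (powerBasis (Fact.out : Irreducible h).ne_zero).finite

instance : Finite (AdjoinRoot h) := Module.finite_of_finite F

theorem AdjoinRoot.aeval_eq_zero_iff_exists_eq_root_pow {y : AdjoinRoot h} :
    aeval y h = 0 ↔ ∃ i, y = root h ^ Fintype.card F ^ i := by
  constructor
  · intro hy
    -- the `F`-endomorphisms of `AdjoinRoot h` are the powers of the Frobenius
    obtain ⟨i, hi⟩ := (bijective_frobeniusAlgHom_pow F (AdjoinRoot h)).2
      (liftAlgHom h (Algebra.ofId F _) y hy)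
    refine ⟨i, ?_⟩
    rw [← liftAlgHom_root h (Algebra.ofId F _) y hy, ← hi]
    simp [AlgHom.coe_pow, coe_frobeniusAlgHom, pow_iterate]
  · rintro ⟨i, rfl⟩
    have := aeval_algHom_apply (frobeniusAlgHom F (AdjoinRoot h) ^ i) (root h) h
    simpa [AlgHom.coe_pow, coe_frobeniusAlgHom, pow_iterate] using this

theorem AdjoinRoot.natDegree_dvd_of_root_pow_eq {s : ℕ}
    (hs : root h ^ Fintype.card F ^ s = root h) : h.natDegree ∣ s := by
  have : frobeniusAlgHom F (AdjoinRoot h) ^ s = 1 :=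
    algHom_ext (by simpa [AlgHom.coe_pow, coe_frobeniusAlgHom, pow_iterate] using hs)
  rw [← powerBasis_dim (Fact.out : Irreducible h).ne_zero, ← PowerBasis.finrank,
    ← orderOf_frobeniusAlgHom]
  exact orderOf_dvd_of_pow_eq_one this

end AdjoinRoot

theorem reverse_eq_C_coeff_zero_mul_and_dvd_iff {F : Type*} [Field F] [Fintype F] {n r' : ℕ}
    (hF : Fintype.card F = 2 ^ n) (hrn : Nat.Coprime n (2 * r')) {h : F[X]} (hm : h.Monic)
    (hi : Irreducible h) (hd : h.natDegree = 2 * r') :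
    (h.reverse = C (h.coeff 0) * h ∧ h ∣ X ^ 2 ^ (2 * r') + X) ↔ h ∣ X ^ (2 ^ r' + 1) + 1 := by
  have : Fact (Irreducible h) := ⟨hi⟩
  have : CharP F 2 := charP_of_card_eq_prime_pow hF
  have : CharP (AdjoinRoot h) 2 := charP_of_injective_algebraMap (algebraMap F _).injective 2
  set x := AdjoinRoot.root h
  have hroot : aeval x h = 0 := AdjoinRoot.aeval_algHom_eq_zero h (AlgHom.id F _)
  have hconj (y : AdjoinRoot h) : aeval y h = 0 ↔ ∃ i, y = x ^ 2 ^ (n * i) := by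
    rw [AdjoinRoot.aeval_eq_zero_iff_exists_eq_root_pow, hF]
    simp only [pow_mul, x]
  have hdeg (s : ℕ) (hs : x ^ 2 ^ (n * s) = x) : 2 * r' ∣ s :=
    hd ▸ AdjoinRoot.natDegree_dvd_of_root_pow_eq (by rwa [hF, ← pow_mul])
  have hx0 : x ≠ 0 := fun hx0 ↦ by
    have := Nat.dvd_one.1 (hdeg 1 (by rw [hx0, zero_pow (by positivity)]))
    omega
  have hr' : 0 < r' := by have := hi.natDegree_pos; omega
  simp only [hm.reverse_eq_C_coeff_zero_mul_iff hi hroot hx0, hconj,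
    ← hi.dvd_iff_aeval_eq_zero hroot, map_add, map_pow, aeval_X, map_one, CharTwo.add_eq_zero]
  constructor
  · rintro ⟨⟨i, hinv⟩, hx⟩
    exact pow_two_pow_add_one_eq_one_of_inv_eq hx0 hdeg hx hinv
  · intro hx
    obtain ⟨hx2, i, hinv⟩ := exists_inv_eq_pow_of_pow_two_pow_add_one_eq_one hrn hr' hx
    exact ⟨⟨i, hinv⟩, hx2⟩

theorem associated_gcd_X_pow_pow_add_one_X_pow_two_pow_add_X {F : Type*} [Field F] [CharP F 2]
    [DecidableEq F] {n : ℕ} (hn : Odd n) (r' : ℕ) :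
    Associated (EuclideanDomain.gcd (X ^ ((2 ^ n) ^ r' + 1) + 1 : F[X]) (X ^ 2 ^ (2 * r') + X))
      (X ^ (2 ^ r' + 1) + 1) := by
  have hsub (m : ℕ) : (X ^ m + 1 : F[X]) = X ^ m - 1 := (CharTwo.sub_eq_add _ _).symm
  have hsplit : (X ^ 2 ^ (2 * r') + X : F[X]) = X * (X ^ (2 ^ (2 * r') - 1) - 1) := by
    rw [mul_sub, ← pow_succ', Nat.sub_add_cancel Nat.one_le_two_pow, mul_one,
      CharTwo.sub_eq_add, add_comm]
  have hcop : IsCoprime (X ^ ((2 ^ n) ^ r' + 1) - 1 : F[X]) X :=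
    ⟨-1, X ^ (2 ^ n) ^ r', by ring⟩
  have hgcd : Nat.gcd ((2 ^ n) ^ r' + 1) (2 ^ (2 * r') - 1) = 2 ^ r' + 1 := by
    have := Nat.gcd_pow_add_one_sq_sub_one (2 ^ r') hn
    rwa [← pow_mul, ← pow_mul, mul_comm r' 2, mul_comm r' n, pow_mul] at this
  rw [hsplit, hsub, hsub, ← hgcd]
  exact (EuclideanDomain.associated_gcd_mul_right_of_isCoprime hcop).trans
    (EuclideanDomain.associated_gcd_pow_sub_one _ _ _)

theorem stmt_8_general (n r r' : ℕ) (hodd : Odd n)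
    (hr : r = 2 * r') (hrn : Nat.gcd r n = 1)
    (F : Type) [Field F] [Fintype F] [DecidableEq F] (hF : Fintype.card F = 2 ^ n) :
    (∀ h : Polynomial F, h.Monic → Irreducible h → h.natDegree = r →
      ((h.reverse = C (h.coeff 0) * h ∧ h ∣ X ^ 2 ^ r + X) ↔
        h ∣ X ^ (2 ^ r' + 1) + 1)) ∧
    Associated
      (EuclideanDomain.gcd ((X : Polynomial F) ^ ((2 ^ n) ^ r' + 1) + 1) (X ^ 2 ^ r + X))
      ((X : Polynomial F) ^ (2 ^ r' + 1) + 1) := by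
  subst hr
  have : CharP F 2 := charP_of_card_eq_prime_pow hF
  exact ⟨fun _ hm hi hd ↦
      reverse_eq_C_coeff_zero_mul_and_dvd_iff hF (Nat.coprime_comm.1 hrn) hm hi hd,
    associated_gcd_X_pow_pow_add_one_X_pow_two_pow_add_X hodd r'⟩

/-- Let `n` be an odd prime, `q = 2^n`, `r = 2r' ≥ 4` with `gcd(r,n) = 1`.  A monic
irreducible `h` of degree `r` over `F_q` is self-reciprocal and divides `x^{2^r} + x` iff
`h` divides `x^{2^{r'}+1} + 1`; consequently
`gcd(x^{q^{r'}+1} + 1, x^{2^r} + x) = x^{2^{r'}+1} + 1` in `F_q[x]`. -/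
theorem stmt_8 (n r r' : ℕ) (hn : n.Prime) (hodd : Odd n) (hr' : 0 < r')
    (hr : r = 2 * r') (hr4 : 4 ≤ r) (hrn : Nat.gcd r n = 1)
    (F : Type) [Field F] [Fintype F] [DecidableEq F] (hF : Fintype.card F = 2 ^ n) :
    (∀ h : Polynomial F, h.Monic → Irreducible h → h.natDegree = r →
      ((h.reverse = C (h.coeff 0) * h ∧ h ∣ X ^ 2 ^ r + X) ↔
        h ∣ X ^ (2 ^ r' + 1) + 1)) ∧
    Associated
      (EuclideanDomain.gcd ((X : Polynomial F) ^ ((2 ^ n) ^ r' + 1) + 1) (X ^ 2 ^ r + X))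
      ((X : Polynomial F) ^ (2 ^ r' + 1) + 1) :=
  stmt_8_general n r r' hodd hr hrn F hF
end

section
/- Let n be an odd prime, q = 2^n, r even with gcd(r, n) = 1, r = 2r'. The number of monic irreducible self-reciprocal polynomials of degree r over F_q that divide x^{2^r} + x equals (1/r) · Σ_{d | r', d odd} μ(d) · 2^{r'/d}. -/
open Polynomial

/-! ### Number-theoretic helper lemmas -/

section NT

/-- existence of multiplicative order of 2 mod odd t -/
lemma ord_exists {t : ℕ} (ht : 0 < t) (hodd : ¬ 2 ∣ t) :
    ∃ o : ℕ, 0 < o ∧ ∀ k, t ∣ 2 ^ k - 1 ↔ o ∣ k := by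
  haveI : NeZero t := ⟨ht.ne'⟩
  have hco : Nat.Coprime 2 t := (Nat.Prime.coprime_iff_not_dvd Nat.prime_two).mpr hodd
  refine ⟨orderOf (ZMod.unitOfCoprime 2 hco), orderOf_pos _, fun k => ?_⟩
  rw [orderOf_dvd_iff_pow_eq_one]
  have h1 : (ZMod.unitOfCoprime 2 hco) ^ k = 1 ↔ ((2:ℕ) : ZMod t) ^ k = 1 := by
    rw [Units.ext_iff, Units.val_pow_eq_pow_val, ZMod.coe_unitOfCoprime, Units.val_one]
  rw [h1]
  have h2 : ((2:ℕ) : ZMod t) ^ k = (((2:ℕ) ^ k : ℕ) : ZMod t) := by push_cast; ring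
  rw [h2, show (1 : ZMod t) = ((1:ℕ) : ZMod t) by norm_num, ZMod.natCast_eq_natCast_iff]
  rw [Nat.ModEq.comm, Nat.modEq_iff_dvd' (Nat.one_le_two_pow)]

/-- transfer congruence to powers of two -/
lemma pow_two_congr {t o : ℕ} (P : ∀ k, t ∣ 2 ^ k - 1 ↔ o ∣ k)
    {i j : ℕ} (hij : i ≡ j [MOD o]) : 2 ^ i ≡ 2 ^ j [MOD t] := by
  rcases le_total i j with h | h
  · obtain ⟨c, hc⟩ := (Nat.modEq_iff_dvd' h).mp hij
    have hj : j = i + o * c := by omega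
    subst hj
    have h1 : t ∣ 2 ^ (o * c) - 1 := (P _).mpr ⟨c, rfl⟩
    have h2 : (2:ℕ) ^ (o*c) ≡ 1 [MOD t] :=
      (Nat.ModEq.comm).mp ((Nat.modEq_iff_dvd' Nat.one_le_two_pow).mpr h1)
    calc (2:ℕ) ^ i = 2 ^ i * 1 := by ring
      _ ≡ 2 ^ i * 2 ^ (o*c) [MOD t] := (Nat.ModEq.mul_left _ h2.symm)
      _ = 2 ^ (i + o * c) := by rw [pow_add]
  · obtain ⟨c, hc⟩ := (Nat.modEq_iff_dvd' h).mp hij.symm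
    have hj : i = j + o * c := by omega
    subst hj
    have h1 : t ∣ 2 ^ (o * c) - 1 := (P _).mpr ⟨c, rfl⟩
    have h2 : (2:ℕ) ^ (o*c) ≡ 1 [MOD t] :=
      (Nat.ModEq.comm).mp ((Nat.modEq_iff_dvd' Nat.one_le_two_pow).mpr h1)
    calc (2:ℕ) ^ (j + o*c) = 2 ^ j * 2 ^ (o*c) := by rw [pow_add]
      _ ≡ 2 ^ j * 1 [MOD t] := (Nat.ModEq.mul_left _ h2)
      _ = 2 ^ j := by ring

/-- congruent exponents transfer divisibility of 2^·+1 -/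
lemma cong_transfer {t o : ℕ} (P : ∀ k, t ∣ 2 ^ k - 1 ↔ o ∣ k)
    {i j : ℕ} (hij : i ≡ j [MOD o]) (hj : t ∣ 2 ^ j + 1) : t ∣ 2 ^ i + 1 := by
  have h2 : (2:ℕ) ^ i + 1 ≡ 2 ^ j + 1 [MOD t] := (pow_two_congr P hij).add_right 1
  exact (Nat.modEq_zero_iff_dvd).mp (h2.trans ((Nat.modEq_zero_iff_dvd).mpr hj))

/-- t ∣ 2^i + 1 gives o ∣ 2i -/
lemma ord_dvd_two_mul {t o i : ℕ} (P : ∀ k, t ∣ 2 ^ k - 1 ↔ o ∣ k)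
    (h : t ∣ 2 ^ i + 1) : o ∣ 2 * i := by
  rw [← P]
  have h1 : (1:ℕ) ≤ 2 ^ i := Nat.one_le_two_pow
  have key : 2 ^ (2*i) - 1 = (2 ^ i + 1) * (2 ^ i - 1) := by
    have h2 : 2 ^ (2*i) = 2 ^ i * 2 ^ i := by rw [two_mul, pow_add]
    rw [h2]
    cases' Nat.exists_eq_add_of_le h1 with y hy
    rw [show (2:ℕ)^i = 1 + y from hy]
    have e1 : (1+y)*(1+y) = y*y + 2*y + 1 := by ring
    have e2 : ((1+y)+1)*((1+y)-1) = (y+2)*y := by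
      rw [Nat.add_sub_cancel_left]; ring
    have e3 : (y+2)*y = y*y + 2*y := by ring
    omega
  rw [key]
  exact Dvd.dvd.mul_right h _

/-- t ∣ 2^i + 1 and t > 2 gives ¬ o ∣ i -/
lemma ord_not_dvd {t o i : ℕ} (ht : 2 < t) (P : ∀ k, t ∣ 2 ^ k - 1 ↔ o ∣ k)
    (h : t ∣ 2 ^ i + 1) : ¬ o ∣ i := by
  intro hoi
  have h1 : t ∣ 2 ^ i - 1 := (P i).mpr hoi
  have h2 : t ∣ (2 ^ i + 1) - (2 ^ i - 1) := Nat.dvd_sub h h1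
  have h3 : (1:ℕ) ≤ 2 ^ i := Nat.one_le_two_pow
  have h4 : (2 ^ i + 1) - (2 ^ i - 1) = 2 := by omega
  rw [h4] at h2
  exact absurd (Nat.le_of_dvd (by norm_num) h2) (by omega)

/-- half-congruence: o ∣ 2i, ¬ o ∣ i implies o even and i ≡ o/2 [MOD o] -/
lemma half_cong {o i : ℕ} (h2 : o ∣ 2 * i) (hn : ¬ o ∣ i) :
    2 ∣ o ∧ i ≡ o / 2 [MOD o] := by
  obtain ⟨k, hk⟩ := h2
  have ho2 : 2 ∣ o := by
    by_contra h
    have hco : Nat.Coprime o 2 := ((Nat.Prime.coprime_iff_not_dvd Nat.prime_two).mpr h).symm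
    exact hn (hco.dvd_of_dvd_mul_left ⟨k, by omega⟩)
  obtain ⟨b, hb⟩ := ho2
  rw [hb] at hk
  have e1 : 2*b*k = 2*(b*k) := by ring
  have hi : i = b * k := by omega
  have hk2 : ¬ 2 ∣ k := by
    rintro ⟨k', rfl⟩
    exact hn ⟨k', by rw [hi, hb]; ring⟩
  obtain ⟨k', hk'⟩ : ∃ k', k = 2 * k' + 1 := ⟨k / 2, by omega⟩
  refine ⟨⟨b, hb⟩, ?_⟩
  have hob : o / 2 = b := by omega
  have hi2 : i = o * k' + o / 2 := by rw [hi, hk', hob, hb]; ring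
  rw [hi2]
  show (o * k' + o / 2) % o = (o / 2) % o
  rw [Nat.mul_add_mod]

/-- main transfer: if t ∣ 2^j+1 and o ∣ 2i, ¬o ∣ i then t ∣ 2^i + 1 -/
lemma neg_transfer {t o i j : ℕ} (ht : 2 < t) (P : ∀ k, t ∣ 2 ^ k - 1 ↔ o ∣ k)
    (hj : t ∣ 2 ^ j + 1) (h2i : o ∣ 2 * i) (hni : ¬ o ∣ i) : t ∣ 2 ^ i + 1 := by
  have hcj := half_cong (ord_dvd_two_mul P hj) (ord_not_dvd ht P hj)
  have hci := half_cong h2i hni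
  exact cong_transfer P (hci.2.trans hcj.2.symm) hj

/-- structure of o from o ∣ 2s, ¬ o ∣ s -/
lemma ord_split {o s : ℕ} (h2 : o ∣ 2 * s) (hn : ¬ o ∣ s) :
    2 ∣ o ∧ o / 2 ∣ s ∧ Odd (s / (o / 2)) := by
  obtain ⟨k, hk⟩ := h2
  have ho2 : 2 ∣ o := by
    by_contra h
    have hco : Nat.Coprime o 2 := ((Nat.Prime.coprime_iff_not_dvd Nat.prime_two).mpr h).symm
    exact hn (hco.dvd_of_dvd_mul_left ⟨k, by omega⟩)
  obtain ⟨b, hb⟩ := ho2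
  rw [hb] at hk
  have e1 : 2*b*k = 2*(b*k) := by ring
  have hs : s = b * k := by omega
  have hb0 : 0 < b := by
    rcases Nat.eq_zero_or_pos b with h | h
    · exfalso
      subst h
      simp only [Nat.mul_zero, Nat.zero_mul] at hk e1
      apply hn
      rw [hb]
      omega
    · exact h
  have hk2 : ¬ 2 ∣ k := by
    rintro ⟨k', rfl⟩
    exact hn ⟨k', by rw [hs, hb]; ring⟩
  have hob : o / 2 = b := by omega
  refine ⟨⟨b, hb⟩, ?_, ?_⟩
  · rw [hob]; exact ⟨k, hs⟩
  · rw [hob, hs, Nat.mul_div_cancel_left _ hb0]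
    exact Nat.odd_iff.mpr (by omega)

/-- d ∣ s with odd quotient means 2d does not divide s -/
lemma not_twod_dvd {d s : ℕ} (hd : 0 < d) (hds : d ∣ s) (hodd : Odd (s / d)) :
    ¬ (2 * d) ∣ s := by
  obtain ⟨k, hk⟩ := hds
  rw [hk, Nat.mul_div_cancel_left _ hd] at hodd
  rintro ⟨j, hj⟩
  have : k = 2 * j := by
    have e1 : 2 * d * j = d * (2 * j) := by ring
    rw [e1] at hj
    exact Nat.eq_of_mul_eq_mul_left hd (hk ▸ hj)
  rw [this] at hodd
  exact (Nat.not_odd_iff_even.mpr ⟨j, by ring⟩) hodd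

/-- modular inverse existence -/
lemma exists_inv_mod {n o s : ℕ} (ho : 0 < o) (hco : Nat.Coprime n o) :
    ∃ j, n * j ≡ s [MOD o] := by
  rcases Nat.eq_or_lt_of_le ho with h1 | h1
  · exact ⟨0, by rw [← h1]; exact Nat.modEq_one⟩
  · obtain ⟨m, -, hm⟩ := Nat.exists_mul_mod_eq_one_of_coprime hco h1
    refine ⟨m * s, ?_⟩
    have h2 : n * m ≡ 1 [MOD o] := by
      show (n * m) % o = 1 % o
      rw [hm, Nat.mod_eq_of_lt h1]
    calc n * (m * s) = (n * m) * s := by ring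
      _ ≡ 1 * s [MOD o] := h2.mul_right s
      _ = s := one_mul s

/-- divisibility of 2^N-1 forces divisibility of exponents -/
lemma exp_dvd_of_pow_sub_one_dvd {N M : ℕ} (hN : 0 < N) (h : 2 ^ N - 1 ∣ 2 ^ M - 1) :
    N ∣ M := by
  have h2N : (2:ℕ) ≤ 2 ^ N := by
    calc (2:ℕ) = 2 ^ 1 := (pow_one 2).symm
    _ ≤ 2 ^ N := Nat.pow_le_pow_right (by norm_num) hN
  rcases Nat.eq_or_lt_of_le h2N with heq | hlt
  · -- 2^N = 2 so N = 1
    have : N = 1 := by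
      by_contra hN1
      have : 2 ≤ N := by omega
      have : (4:ℕ) ≤ 2 ^ N := by
        calc (4:ℕ) = 2 ^ 2 := by norm_num
        _ ≤ 2 ^ N := Nat.pow_le_pow_right (by norm_num) this
      omega
    rw [this]; exact one_dvd _
  · set t := 2 ^ N - 1 with htdef
    have ht0 : 0 < t := by omega
    have htodd : ¬ 2 ∣ t := by
      have : 2 ∣ 2 ^ N := dvd_pow_self 2 hN.ne'
      omega
    obtain ⟨o, ho, P⟩ := ord_exists ht0 htodd
    have hoN : o ∣ N := (P N).mp dvd_rfl
    have hNo : o = N := by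
      rcases Nat.lt_or_ge o N with h1 | h1
      · exfalso
        have h2 : t ∣ 2 ^ o - 1 := (P o).mpr dvd_rfl
        have h3 : (1:ℕ) ≤ 2 ^ o := Nat.one_le_two_pow
        have h4 : 2 ^ o < 2 ^ N := Nat.pow_lt_pow_right (by norm_num) h1
        have h5 : 0 < 2 ^ o - 1 := by
          have : (2:ℕ) ≤ 2 ^ o := by
            calc (2:ℕ) = 2 ^ 1 := (pow_one 2).symm
            _ ≤ 2 ^ o := Nat.pow_le_pow_right (by norm_num) ho
          omega
        have := Nat.le_of_dvd h5 h2
        omega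
      · exact le_antisymm (Nat.le_of_dvd hN hoN) h1
    rw [← hNo]
    exact (P M).mp h

end NT

/-! ### Field-theoretic helper lemmas -/

section FieldPart

open IntermediateField

variable {F : Type} [Field F] [Fintype F] {n : ℕ}

local notation "K" => AlgebraicClosure F

lemma charF (hF : Fintype.card F = 2 ^ n) (hn : n ≠ 0) : CharP F 2 := by
  obtain ⟨m, hp, hc⟩ := FiniteField.card F (ringChar F)
  have h2 : ringChar F = 2 := by
    have hd : ringChar F ∣ 2 ^ n := by
      rw [← hF, hc]
      exact dvd_pow_self _ (by positivity : (0:ℕ) < (m:ℕ)).ne'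
    exact (Nat.prime_dvd_prime_iff_eq hp Nat.prime_two).mp (hp.dvd_of_dvd_pow hd)
  rw [← h2]; exact ringChar.charP F

lemma qpow_hom (hF : Fintype.card F = 2 ^ n) (hn : n ≠ 0) (i : ℕ) :
    ∃ ψ : K →+* K, ∀ x : K, ψ x = x ^ (2 ^ n) ^ i := by
  haveI := charF hF hn
  haveI : CharP K 2 := charP_of_injective_algebraMap (algebraMap F K).injective 2
  haveI : ExpChar K 2 := ExpChar.prime Nat.prime_two
  exact ⟨iterateFrobenius K 2 (n * i), fun x => by
    rw [iterateFrobenius_def, pow_mul]⟩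

lemma charKtwo (hF : Fintype.card F = 2 ^ n) (hn : n ≠ 0) : CharP K 2 := by
  haveI := charF hF hn
  exact charP_of_injective_algebraMap (algebraMap F K).injective 2

/-- roots are closed under the q-power Frobenius -/
lemma root_pow_q (hF : Fintype.card F = 2 ^ n) (hn : n ≠ 0) (h : F[X]) {β : K}
    (hroot : aeval β h = 0) : aeval (β ^ 2 ^ n) h = 0 := by
  obtain ⟨ψ, hψ⟩ := qpow_hom hF hn 1
  have hcomm : ψ.comp (algebraMap F K) = algebraMap F K := by
    ext c
    rw [RingHom.comp_apply, hψ, pow_one, ← map_pow, ← hF, FiniteField.pow_card]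
  rw [aeval_def] at hroot ⊢
  rw [show β ^ 2 ^ n = ψ β by rw [hψ, pow_one]]
  calc eval₂ (algebraMap F K) (ψ β) h
      = eval₂ (ψ.comp (algebraMap F K)) (ψ β) h := by rw [hcomm]
    _ = ψ (eval₂ (algebraMap F K) β h) := (hom_eval₂ h (algebraMap F K) ψ β).symm
    _ = 0 := by rw [hroot, map_zero]

lemma root_pow_q_iter (hF : Fintype.card F = 2 ^ n) (hn : n ≠ 0) (h : F[X]) {β : K}
    (hroot : aeval β h = 0) (j : ℕ) : aeval (β ^ (2 ^ n) ^ j) h = 0 := by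
  induction j with
  | zero => simpa using hroot
  | succ j ih =>
      have : β ^ (2 ^ n) ^ (j + 1) = (β ^ (2 ^ n) ^ j) ^ 2 ^ n := by
        rw [pow_succ, pow_mul]
      rw [this]
      exact root_pow_q hF hn h ih

/-- F1 : an algebraic element is fixed by q^deg -/
lemma F1 (hF : Fintype.card F = 2 ^ n) {α : K} (hint : IsIntegral F α) :
    α ^ (2 ^ n) ^ (minpoly F α).natDegree = α := by
  haveI := IntermediateField.adjoin.finiteDimensional hint
  haveI : Finite ↥F⟮α⟯ := Module.finite_of_finite F
  haveI : Fintype ↥F⟮α⟯ := Fintype.ofFinite _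
  have hcard : Fintype.card ↥F⟮α⟯ = (2 ^ n) ^ (minpoly F α).natDegree := by
    rw [@Module.card_eq_pow_finrank F ↥F⟮α⟯ _ _ _ _ _, hF, IntermediateField.adjoin.finrank hint]
  have hpow := FiniteField.pow_card (IntermediateField.AdjoinSimple.gen F α)
  rw [hcard] at hpow
  have h2 := congrArg (algebraMap ↥F⟮α⟯ K) hpow
  rw [map_pow] at h2
  rwa [IntermediateField.algebraMap_apply, IntermediateField.AdjoinSimple.coe_gen] at h2

/-- fixed by q^(e*m) for any m -/
lemma F1_iter (hF : Fintype.card F = 2 ^ n) {α : K} (hint : IsIntegral F α) (m : ℕ) :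
    α ^ (2 ^ n) ^ ((minpoly F α).natDegree * m) = α := by
  induction m with
  | zero => simp
  | succ m ih =>
      have : (2 ^ n : ℕ) ^ ((minpoly F α).natDegree * (m + 1))
          = (2 ^ n) ^ ((minpoly F α).natDegree * m) * (2 ^ n) ^ (minpoly F α).natDegree := by
        rw [← pow_add]; ring_nf
      rw [this, pow_mul, ih, F1 hF hint]

/-- F2 : the degree divides any Frobenius period -/
lemma F2 (hF : Fintype.card F = 2 ^ n) (hn : n ≠ 0) {i : ℕ} (hi : 0 < i) {α : K}
    (hint : IsIntegral F α) (hfix : α ^ (2 ^ n) ^ i = α) :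
    (minpoly F α).natDegree ∣ i := by
  haveI := charF hF hn
  obtain ⟨ψ, hψ⟩ := qpow_hom hF hn i
  let L0 : Subfield K :=
    { toSubring := RingHom.eqLocus ψ (RingHom.id K)
      inv_mem' := fun x hx => show ψ x⁻¹ = x⁻¹ by
        rw [map_inv₀, show ψ x = x from hx] }
  have halg : ∀ c : F, algebraMap F K c ∈ L0 := by
    intro c
    have hc : c ^ (2 ^ n) ^ i = c := by rw [← hF]; exact FiniteField.pow_card_pow i c
    show ψ _ = _
    rw [hψ, ← map_pow, hc]
    rfl
  let L : IntermediateField F K := L0.toIntermediateField halg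
  have hLsub : (L : Set K) ⊆ {x | ((X : K[X]) ^ (2 ^ n) ^ i - X).IsRoot x} := by
    intro x hx
    have hx' : x ^ (2 ^ n) ^ i = x := by rw [← hψ]; exact hx
    simp only [Set.mem_setOf_eq, IsRoot.def, eval_sub, eval_pow, eval_X]
    rw [hx', sub_self]
  have hgne : ((X : K[X]) ^ (2 ^ n) ^ i - X) ≠ 0 :=
    FiniteField.X_pow_card_pow_sub_X_ne_zero _ hi.ne' (Nat.one_lt_two_pow hn)
  have hLfin : (L : Set K).Finite := (Polynomial.finite_setOf_isRoot hgne).subset hLsub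
  haveI : Finite ↥L := hLfin.to_subtype
  haveI : FiniteDimensional F ↥L := Module.Finite.of_finite
  have hαL : α ∈ L := by show ψ α = α; rw [hψ]; exact hfix
  let x : ↥L := ⟨α, hαL⟩
  have hxint : IsIntegral F x := IsIntegral.of_finite F x
  have hminx : minpoly F α = minpoly F x := by
    have := minpoly.algebraMap_eq (A := F) (B := ↥L) (B' := K) (algebraMap ↥L K).injective x
    rw [← this]; rfl
  have hdeg : (minpoly F α).natDegree ∣ Module.finrank F ↥L := by
    rw [hminx]; exact minpoly.degree_dvd hxint
  -- now show finrank F L ∣ i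
  haveI : Fintype ↥L := Fintype.ofFinite _
  have hcard : Fintype.card ↥L = (2 ^ n) ^ Module.finrank F ↥L := by
    rw [@Module.card_eq_pow_finrank F ↥L _ _ _ _ _, hF]
  classical
  obtain ⟨g, hg⟩ := @IsCyclic.exists_generator (↥L)ˣ _ _
  have horder : orderOf g = (2 ^ n) ^ Module.finrank F ↥L - 1 := by
    rw [orderOf_eq_card_of_forall_mem_zpowers hg, Nat.card_eq_fintype_card,
      Fintype.card_units, hcard]
  have hgK : ((g : ↥L) : K) ^ (2 ^ n) ^ i = ((g : ↥L) : K) := by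
    rw [← hψ]; exact (g : ↥L).2
  have hgfix : (g : ↥L) ^ (2 ^ n) ^ i = (g : ↥L) := by
    apply Subtype.ext
    push_cast
    exact hgK
  have hufix : g ^ (2 ^ n) ^ i = g := by
    ext
    push_cast
    exact_mod_cast congrArg Subtype.val hgfix
  have hq1 : (1:ℕ) ≤ (2 ^ n) ^ i := Nat.one_le_pow _ _ (by positivity)
  have hgpow : g ^ ((2 ^ n) ^ i - 1) = 1 := by
    have h1 : g ^ ((2 ^ n) ^ i - 1) * g = g ^ (2 ^ n) ^ i := by
      rw [← pow_succ, Nat.sub_add_cancel hq1]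
    have h2 : g ^ ((2 ^ n) ^ i - 1) * g = 1 * g := by rw [h1, hufix, one_mul]
    exact mul_right_cancel h2
  have hdvd2 : (2 ^ n) ^ Module.finrank F ↥L - 1 ∣ (2 ^ n) ^ i - 1 := by
    rw [← horder]; exact orderOf_dvd_of_pow_eq_one hgpow
  have hfr : Module.finrank F ↥L ∣ i := by
    have hfrpos : 0 < Module.finrank F ↥L := Module.finrank_pos
    have hd2 : 2 ^ (n * Module.finrank F ↥L) - 1 ∣ 2 ^ (n * i) - 1 := by
      rwa [pow_mul, pow_mul]
    have := exp_dvd_of_pow_sub_one_dvd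
      (Nat.mul_pos (Nat.pos_of_ne_zero hn) hfrpos) hd2
    exact (Nat.mul_dvd_mul_iff_left (Nat.pos_of_ne_zero hn)).mp this
  exact hdeg.trans hfr

end FieldPart

/-! ### self-reciprocal and orbit machinery -/

/-- the self-reciprocal irreducible polynomials of degree 2d dividing X^(2^(2d)) + X -/
def SRP (F : Type) [Field F] (d : ℕ) : Set (Polynomial F) :=
  {h | h.Monic ∧ Irreducible h ∧ h.natDegree = 2*d ∧
    h.reverse = C (h.coeff 0) * h ∧ h ∣ X ^ 2 ^ (2*d) + X}

section FieldPart2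

open IntermediateField

variable {F : Type} [Field F] [Fintype F] {n : ℕ}

local notation "K" => AlgebraicClosure F

lemma pow_eq_self_iff {α : K} (h0 : α ≠ 0) {m : ℕ} (hm : 1 ≤ m) :
    α ^ m = α ↔ orderOf α ∣ m - 1 := by
  rw [orderOf_dvd_iff_pow_eq_one]
  constructor
  · intro h
    have h1 : α ^ (m - 1) * α = 1 * α := by
      rw [← pow_succ, Nat.sub_add_cancel hm, h, one_mul]
    exact mul_right_cancel₀ h0 h1
  · intro h
    calc α ^ m = α ^ (m - 1) * α := by rw [← pow_succ, Nat.sub_add_cancel hm]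
      _ = α := by rw [h, one_mul]

/-- the degree of the minimal polynomial equals the order of 2^n modulo ord(α) -/
lemma deg_eq_ord (hF : Fintype.card F = 2 ^ n) (hn : n ≠ 0) {α : K}
    (hint : IsIntegral F α) (h0 : α ≠ 0)
    {o : ℕ} (ho : 0 < o) (P : ∀ k, orderOf α ∣ 2 ^ k - 1 ↔ o ∣ k)
    (hco : Nat.Coprime o n) : (minpoly F α).natDegree = o := by
  set e := (minpoly F α).natDegree with he
  have hepos : 0 < e := minpoly.natDegree_pos hint
  have key : ∀ k, 0 < k → (o ∣ n * k ↔ e ∣ k) := by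
    intro k hk
    have hq1 : 1 ≤ (2^n : ℕ) ^ k := Nat.one_le_pow _ _ (by positivity)
    have h1 : (α ^ (2 ^ n) ^ k = α) ↔ orderOf α ∣ (2^n)^k - 1 := pow_eq_self_iff h0 hq1
    have h2 : orderOf α ∣ (2^n)^k - 1 ↔ o ∣ n * k := by rw [← pow_mul]; exact P (n*k)
    constructor
    · intro hok
      exact F2 hF hn hk hint (h1.mpr (h2.mpr hok))
    · intro hek
      obtain ⟨m, hm⟩ := hek
      have hfix := F1_iter hF hint m
      rw [← he, ← hm] at hfix
      exact h2.mp (h1.mp hfix)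
  have h1 : o ∣ n * e := (key e hepos).mpr dvd_rfl
  have h2 : o ∣ e := hco.dvd_of_dvd_mul_left h1
  have h3 : e ∣ o := (key o ho).mp (dvd_mul_left o n)
  exact Nat.dvd_antisymm h3 h2

/-- every root of an irreducible polynomial is a q-power of a given nonzero root -/
lemma orbit_lemma (hF : Fintype.card F = 2 ^ n) (hn : n ≠ 0) {h : F[X]}
    (hmon : h.Monic) (hirr : Irreducible h) {α β : K}
    (hα : aeval α h = 0) (hβ : aeval β h = 0) (h0 : α ≠ 0)
    {o : ℕ} (ho : 0 < o) (P : ∀ k, orderOf α ∣ 2 ^ k - 1 ↔ o ∣ k)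
    (hco : Nat.Coprime o n) : ∃ j : ℕ, β = α ^ (2 ^ n) ^ j := by
  classical
  have hmin : h = minpoly F α := minpoly.eq_of_irreducible_of_monic hirr hα hmon
  have hint : IsIntegral F α := ⟨h, hmon, hα⟩
  set e := h.natDegree with he
  have hdeg : e = o := by rw [he, hmin]; exact deg_eq_ord hF hn hint h0 ho P hco
  have hepos : 0 < e := hdeg ▸ ho
  have hsep : (h.map (algebraMap F K)).Separable :=
    (PerfectField.separable_of_irreducible hirr).map
  have hmapne : h.map (algebraMap F K) ≠ 0 := (hmon.map _).ne_zero
  have hcardroots : Multiset.card (h.map (algebraMap F K)).roots = e :=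
    ((IsAlgClosed.splits (h.map (algebraMap F K))).natDegree_eq_card_roots.symm.trans (natDegree_map _))
  set R : Finset K := (h.map (algebraMap F K)).roots.toFinset with hR
  have hRcard : R.card = e := by
    rw [hR, Multiset.toFinset_card_of_nodup (nodup_roots hsep), hcardroots]
  have hmemR : ∀ γ : K, aeval γ h = 0 → γ ∈ R := by
    intro γ hγ
    rw [hR, Multiset.mem_toFinset, mem_roots hmapne, IsRoot.def, eval_map, ← aeval_def]
    exact hγ
  -- injectivity of the orbit map on Fin e
  have hinj : ∀ j1 j2 : ℕ, j1 < e → j2 < e → α ^ (2^n)^j1 = α ^ (2^n)^j2 → j1 = j2 := by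
    have haux : ∀ j1 j2 : ℕ, j1 < e → j2 < e → j1 < j2 →
        α ^ (2^n)^j1 = α ^ (2^n)^j2 → False := by
      intro j1 j2 hj1 hj2 hlt heq
      obtain ⟨ψ, hψ⟩ := qpow_hom hF hn j1
      have hsplit : (2^n : ℕ) ^ j2 = (2^n)^(j2 - j1) * (2^n)^j1 := by
        rw [← pow_add]
        congr 1
        omega
      have h1 : ψ (α ^ (2^n)^(j2 - j1)) = ψ α := by
        rw [hψ, hψ]
        calc (α ^ (2^n)^(j2-j1)) ^ (2^n)^j1
            = α ^ ((2^n)^(j2-j1) * (2^n)^j1) := (pow_mul α _ _).symm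
          _ = α ^ (2^n)^j2 := by rw [← hsplit]
          _ = α ^ (2^n)^j1 := heq.symm
      have h2 : α ^ (2^n)^(j2 - j1) = α := ψ.injective h1
      have h3 : orderOf α ∣ (2^n)^(j2 - j1) - 1 :=
        (pow_eq_self_iff h0 (Nat.one_le_pow _ _ (by positivity))).mp h2
      have h4 : o ∣ n * (j2 - j1) := by
        rw [← P, pow_mul]; exact h3
      have h5 : o ∣ j2 - j1 := hco.dvd_of_dvd_mul_left h4
      have h6 : j2 - j1 < o := by omega
      have h7 : 0 < j2 - j1 := by omega
      exact absurd (Nat.le_of_dvd h7 h5) (by omega)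
    intro j1 j2 hj1 hj2 heq
    rcases lt_trichotomy j1 j2 with h | h | h
    · exact absurd (haux j1 j2 hj1 hj2 h heq) (fun x => x)
    · exact h
    · exact absurd (haux j2 j1 hj2 hj1 h heq.symm) (fun x => x)
  set img : Finset K := Finset.image (fun j : Fin e => α ^ (2^n)^(j:ℕ)) Finset.univ with himg
  have himgcard : img.card = e := by
    rw [himg, Finset.card_image_of_injOn, Finset.card_univ, Fintype.card_fin]
    intro j1 _ j2 _ heq
    exact Fin.ext (hinj j1 j2 j1.2 j2.2 heq)
  have himgsub : img ⊆ R := by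
    intro x hx
    rw [himg, Finset.mem_image] at hx
    obtain ⟨j, _, rfl⟩ := hx
    exact hmemR _ (root_pow_q_iter hF hn h hα j)
  have himgeq : img = R := Finset.eq_of_subset_of_card_le himgsub (by omega)
  have hβR : β ∈ img := himgeq ▸ hmemR β hβ
  rw [himg, Finset.mem_image] at hβR
  obtain ⟨j, _, hj⟩ := hβR
  exact ⟨j, hj.symm⟩

lemma coeff_zero_ne_zero_of_root {h : F[X]} (hmon : h.Monic) (hirr : Irreducible h)
    {α : K} (hα : aeval α h = 0) (h0 : α ≠ 0) : h.coeff 0 ≠ 0 := by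
  intro hc
  have hX : (X : F[X]) ∣ h := X_dvd_iff.mpr hc
  have hassoc : Associated (X : F[X]) h := (irreducible_X).associated_of_dvd hirr hX
  have hXh : h = X := (eq_of_monic_of_associated monic_X hmon hassoc).symm
  rw [hXh, aeval_X] at hα
  exact h0 hα

lemma root_ne_zero_of_coeff {h : F[X]} (hc : h.coeff 0 ≠ 0) {β : K}
    (hβ : aeval β h = 0) : β ≠ 0 := by
  rintro rfl
  rw [aeval_def, eval₂_at_zero] at hβ
  exact hc ((algebraMap F K).injective (by rw [map_zero]; exact hβ))

lemma inv_root_of_SR {h : F[X]} (hne : h ≠ 0) (hSR : h.reverse = C (h.coeff 0) * h)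
    {β : K} (hβ : aeval β h = 0) (h0 : β ≠ 0) : aeval β⁻¹ h = 0 := by
  haveI := invertibleOfNonzero h0
  have hrev : eval₂ (algebraMap F K) (⅟β) h.reverse = 0 :=
    (eval₂_reverse_eq_zero_iff (algebraMap F K) β h).mpr (by rwa [aeval_def] at hβ)
  rw [invOf_eq_inv, hSR, eval₂_mul, eval₂_C] at hrev
  have hc : h.coeff 0 ≠ 0 := by
    intro h1; rw [h1, map_zero, zero_mul] at hSR; exact hne (reverse_eq_zero.mp hSR)
  rw [aeval_def]
  rcases mul_eq_zero.mp hrev with h2 | h2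
  · exact absurd h2 (fun hz => hc ((algebraMap F K).injective (by rw [map_zero]; exact hz)))
  · exact h2

lemma SR_of_inv_root {h : F[X]} (hmon : h.Monic) (hirr : Irreducible h)
    {α : K} (hα : aeval α h = 0) (h0 : α ≠ 0) (hinv : aeval α⁻¹ h = 0) :
    h.reverse = C (h.coeff 0) * h := by
  have hc : h.coeff 0 ≠ 0 := coeff_zero_ne_zero_of_root hmon hirr hα h0
  have hTd : h.natTrailingDegree = 0 := natTrailingDegree_eq_zero.mpr (Or.inr hc)
  have htc : h.trailingCoeff = h.coeff 0 := by rw [trailingCoeff, hTd]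
  set g : F[X] := C (h.coeff 0)⁻¹ * h.reverse with hg
  have hgmon : g.Monic := by
    show g.leadingCoeff = 1
    rw [hg, leadingCoeff_mul, leadingCoeff_C, reverse_leadingCoeff, htc,
      inv_mul_cancel₀ hc]
  have hgdeg : g.natDegree = h.natDegree := by
    rw [hg, natDegree_C_mul (inv_ne_zero hc), reverse_natDegree, hTd, Nat.sub_zero]
  have hmininv : h = minpoly F α⁻¹ := minpoly.eq_of_irreducible_of_monic hirr hinv hmon
  haveI := invertibleOfNonzero h0
  have hroot : aeval α⁻¹ h.reverse = 0 := by
    rw [aeval_def, ← invOf_eq_inv]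
    exact (eval₂_reverse_eq_zero_iff _ α h).mpr (by rwa [aeval_def] at hα)
  have hgroot : aeval α⁻¹ g = 0 := by rw [hg, map_mul, aeval_C, hroot, mul_zero]
  have hdvd : h ∣ g := hmininv ▸ minpoly.dvd F α⁻¹ hgroot
  obtain ⟨u, hu⟩ := hdvd
  have hune : u ≠ 0 := by rintro rfl; rw [mul_zero] at hu; exact hgmon.ne_zero hu
  have hdeg2 : u.natDegree = 0 := by
    have hnd := natDegree_mul hmon.ne_zero hune
    rw [← hu, hgdeg] at hnd
    omega
  have hu1 : u = 1 := by
    have h1 : g.leadingCoeff = h.leadingCoeff * u.leadingCoeff := by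
      rw [hu, leadingCoeff_mul]
    rw [hgmon.leadingCoeff, hmon.leadingCoeff, one_mul] at h1
    have h2 : u.leadingCoeff = u.coeff 0 := by rw [leadingCoeff, hdeg2]
    rw [eq_C_of_natDegree_eq_zero hdeg2, ← h2, ← h1, map_one]
  have hhg : h = g := by rw [hu, hu1, mul_one]
  calc h.reverse = C (h.coeff 0) * (C (h.coeff 0)⁻¹ * h.reverse) := by
        rw [← mul_assoc, ← C_mul, mul_inv_cancel₀ hc, C_1, one_mul]
    _ = C (h.coeff 0) * g := by rw [hg]
    _ = C (h.coeff 0) * h := by rw [← hhg]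

/-- Claim 1 : the minimal polynomial of a nontrivial (2^s+1)-th root of unity lies in some SRP d -/
lemma claim1 (hF : Fintype.card F = 2 ^ n) (hn : n ≠ 0) {r s : ℕ}
    (hrn : Nat.Coprime r n) (h2s : 2*s ∣ r) (hs : 0 < s)
    {α : K} (hαs : α ^ (2 ^ s + 1) = 1) (hα1 : α ≠ 1) :
    ∃ d, d ∣ s ∧ Odd (s / d) ∧ minpoly F α ∈ SRP F d := by
  haveI := charKtwo hF hn
  have h0 : α ≠ 0 := by
    rintro rfl
    rw [zero_pow (by positivity : (0:ℕ) < 2^s+1).ne'] at hαs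
    exact zero_ne_one hαs
  have hint : IsIntegral F α := ⟨X ^ (2^s+1) - C 1,
    monic_X_pow_sub_C 1 (by positivity : (0:ℕ) < 2^s+1).ne', by
      rw [eval₂_sub, eval₂_pow, eval₂_X, eval₂_C, map_one, hαs, sub_self]⟩
  set t := orderOf α with ht
  have htdvd : t ∣ 2 ^ s + 1 := orderOf_dvd_of_pow_eq_one hαs
  have htpos : 0 < t := by
    rcases Nat.eq_zero_or_pos t with h1 | h1
    · exfalso
      rw [h1] at htdvd
      have := Nat.eq_zero_of_zero_dvd htdvd
      have h2 : (0:ℕ) < 2^s := by positivity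
      omega
    · exact h1
  have htodd : ¬ 2 ∣ t := by
    intro h2t
    have h2 : (2:ℕ) ∣ 2 ^ s + 1 := h2t.trans htdvd
    have h3 : (2:ℕ) ∣ 2 ^ s := dvd_pow_self 2 hs.ne'
    omega
  have ht1 : t ≠ 1 := fun h1 => hα1 (orderOf_eq_one_iff.mp (ht ▸ h1))
  have ht2 : 2 < t := by omega
  obtain ⟨o, ho, P⟩ := ord_exists htpos htodd
  have P' : ∀ k, orderOf α ∣ 2 ^ k - 1 ↔ o ∣ k := by rw [← ht]; exact P
  have ho2s : o ∣ 2 * s := ord_dvd_two_mul P htdvd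
  have hnos : ¬ o ∣ s := ord_not_dvd ht2 P htdvd
  obtain ⟨ho2, hd_dvd, hodd⟩ := ord_split ho2s hnos
  set d := o / 2 with hd
  have hod : o = 2 * d := by omega
  have hco : Nat.Coprime o n := Nat.Coprime.coprime_dvd_left (ho2s.trans h2s) hrn
  have hdeg : (minpoly F α).natDegree = o := deg_eq_ord hF hn hint h0 ho P' hco
  refine ⟨d, hd_dvd, hodd, minpoly.monic hint, minpoly.irreducible hint,
    by rw [hdeg, hod], ?_, ?_⟩
  · -- self-reciprocal
    obtain ⟨j, hj⟩ := exists_inv_mod (s := s) ho hco.symm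
    have hnegj : t ∣ 2 ^ (n * j) + 1 := cong_transfer P hj htdvd
    have hpow1 : α ^ (2 ^ (n*j) + 1) = 1 := orderOf_dvd_iff_pow_eq_one.mp (ht ▸ hnegj)
    have hqj : α ^ (2 ^ n) ^ j * α = 1 := by
      rw [← pow_succ, ← pow_mul]
      exact hpow1
    have hinvroot : aeval α⁻¹ (minpoly F α) = 0 := by
      have hroot := root_pow_q_iter hF hn (minpoly F α) (minpoly.aeval F α) j
      rw [eq_inv_of_mul_eq_one_left hqj] at hroot
      exact hroot
    exact SR_of_inv_root (minpoly.monic hint) (minpoly.irreducible hint)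
      (minpoly.aeval F α) h0 hinvroot
  · -- divides X^(2^(2d)) + X
    rw [minpoly.dvd_iff, map_add, map_pow, aeval_X]
    have h2d : t ∣ 2 ^ (2*d) - 1 := (P _).mpr (by rw [← hod])
    have hfix : α ^ 2 ^ (2*d) = α :=
      (pow_eq_self_iff h0 Nat.one_le_two_pow).mpr (ht ▸ h2d)
    rw [hfix]
    exact CharTwo.add_self_eq_zero α

/-- Claim 2 : roots of elements of SRP d are nontrivial (2^s+1)-th roots of unity -/
lemma claim2 (hF : Fintype.card F = 2 ^ n) (hn : n ≠ 0) {r s d : ℕ}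
    (hrn : Nat.Coprime r n) (h2s : 2*s ∣ r) (hds : d ∣ s) (hodd : Odd (s / d))
    {h : F[X]} (hh : h ∈ SRP F d) {β : K} (hβ : aeval β h = 0) :
    β ^ (2 ^ s + 1) = 1 ∧ β ≠ 1 ∧ minpoly F β = h := by
  obtain ⟨hmon, hirr, hdeg, hSR, hdvd⟩ := hh
  haveI := charKtwo hF hn
  have hd0 : 0 < d := by
    rcases Nat.eq_zero_or_pos d with rfl | h1
    · rw [Nat.div_zero] at hodd
      exact absurd hodd (by simp [Nat.odd_iff])
    · exact h1
  have hc : h.coeff 0 ≠ 0 := by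
    intro h1
    rw [h1, map_zero, zero_mul] at hSR
    exact hmon.ne_zero (reverse_eq_zero.mp hSR)
  have h0 : β ≠ 0 := root_ne_zero_of_coeff hc hβ
  have hmin : minpoly F β = h := (minpoly.eq_of_irreducible_of_monic hirr hβ hmon).symm
  have hint : IsIntegral F β := ⟨h, hmon, hβ⟩
  have hfix : β ^ 2 ^ (2*d) = β := by
    have hev : aeval β (X ^ 2 ^ (2*d) + X : F[X]) = 0 := by
      obtain ⟨k, hk⟩ := hdvd
      rw [hk, map_mul, hβ, zero_mul]
    rw [map_add, map_pow, aeval_X] at hev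
    have h2 := eq_neg_of_add_eq_zero_left hev
    rwa [CharTwo.neg_eq] at h2
  set t := orderOf β with htdef
  have htdvd21 : t ∣ 2 ^ (2*d) - 1 :=
    (pow_eq_self_iff h0 Nat.one_le_two_pow).mp hfix
  have htpos : 0 < t := by
    rcases Nat.eq_zero_or_pos t with h1 | h1
    · exfalso
      rw [h1] at htdvd21
      have h2 := Nat.eq_zero_of_zero_dvd htdvd21
      have h3 : (4:ℕ) ≤ 2 ^ (2*d) := by
        calc (4:ℕ) = 2 ^ 2 := by norm_num
        _ ≤ 2 ^ (2*d) := Nat.pow_le_pow_right (by norm_num) (by omega)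
      omega
    · exact h1
  have htodd : ¬ 2 ∣ t := by
    intro h2t
    have h2 : (2:ℕ) ∣ 2 ^ (2*d) - 1 := h2t.trans htdvd21
    have h3 : (2:ℕ) ∣ 2 ^ (2*d) := dvd_pow_self 2 (by omega : 2*d ≠ 0)
    have h4 : (1:ℕ) ≤ 2 ^ (2*d) := Nat.one_le_two_pow
    omega
  have hβ1 : β ≠ 1 := by
    intro h1
    have hX : minpoly F β = X - C 1 := by
      rw [h1, show (1:K) = algebraMap F K 1 by rw [map_one]]
      exact minpoly.eq_X_sub_C _ 1
    have hd1 : h.natDegree = 1 := by rw [← hmin, hX, natDegree_X_sub_C]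
    omega
  have ht1 : t ≠ 1 := fun h1 => hβ1 (orderOf_eq_one_iff.mp (htdef ▸ h1))
  have ht2 : 2 < t := by omega
  obtain ⟨o, ho, P⟩ := ord_exists htpos htodd
  have P' : ∀ k, orderOf β ∣ 2 ^ k - 1 ↔ o ∣ k := by rw [← htdef]; exact P
  have ho2d : o ∣ 2*d := (P _).mp htdvd21
  have hco : Nat.Coprime o n :=
    Nat.Coprime.coprime_dvd_left (ho2d.trans ((mul_dvd_mul_left 2 hds).trans h2s)) hrn
  have hdeg2 : (minpoly F β).natDegree = o := deg_eq_ord hF hn hint h0 ho P' hco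
  have ho_eq : o = 2*d := by rw [hmin, hdeg] at hdeg2; omega
  have hinv : aeval β⁻¹ h = 0 := inv_root_of_SR hmon.ne_zero hSR hβ h0
  obtain ⟨j, hj⟩ := orbit_lemma hF hn hmon hirr hβ hinv h0 ho P' hco
  have hqj : β ^ ((2^n)^j + 1) = 1 := by
    rw [pow_succ, ← hj]
    exact inv_mul_cancel₀ h0
  have hdj : t ∣ 2 ^ (n*j) + 1 := by
    have h1 := orderOf_dvd_of_pow_eq_one hqj
    rwa [← pow_mul, ← htdef] at h1
  have hts : t ∣ 2 ^ s + 1 := by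
    refine neg_transfer ht2 P hdj ?_ ?_
    · rw [ho_eq]; exact mul_dvd_mul_left 2 hds
    · intro hcon
      exact not_twod_dvd hd0 hds hodd (by rwa [← ho_eq])
  exact ⟨orderOf_dvd_iff_pow_eq_one.mp (htdef ▸ hts), hβ1, hmin⟩

end FieldPart2

/-! ### the partition counting lemma -/

lemma SRP_finite (F : Type) [Field F] [Fintype F] (d : ℕ) : (SRP F d).Finite := by
  classical
  apply Set.Finite.of_finite_image (f := fun h : Polynomial F => fun i : Fin (2*d+1) => h.coeff i)
  · exact Set.toFinite _
  · intro h1 hm1 h2 hm2 heq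
    apply Polynomial.ext
    intro i
    by_cases hi : i < 2*d+1
    · exact congrFun heq ⟨i, hi⟩
    · rw [coeff_eq_zero_of_natDegree_lt (by rw [hm1.2.2.1]; omega),
        coeff_eq_zero_of_natDegree_lt (by rw [hm2.2.2.1]; omega)]

section Partition

open IntermediateField

variable {F : Type} [Field F] [Fintype F] {n : ℕ}

local notation "K" => AlgebraicClosure F

lemma partition_lemma (hF : Fintype.card F = 2 ^ n) (hn : n ≠ 0) {r : ℕ}
    (hrn : Nat.Coprime r n) {s : ℕ} (hs : 0 < s) (h2s : 2*s ∣ r) :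
    ∑ d ∈ s.divisors.filter (fun d => Odd (s/d)), (2*d) * (SRP F d).ncard = 2 ^ s := by
  classical
  haveI := charKtwo hF hn
  have hcast : ((2^s + 1 : ℕ) : K) ≠ 0 := by
    have h2 : ((2:K)) = 0 := by
      have := CharP.cast_eq_zero K 2
      exact_mod_cast this
    push_cast
    rw [show ((2:K))^s = 0 from by rw [h2]; exact zero_pow hs.ne']
    simp
  have hsep : ((X : Polynomial K) ^ (2^s+1) - C 1).Separable :=
    separable_X_pow_sub_C 1 hcast one_ne_zero
  have hsplits : Splits ((X: Polynomial K)^(2^s+1) - C 1) :=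
    IsAlgClosed.splits _
  have hdegX : ((X: Polynomial K)^(2^s+1) - C 1).natDegree = 2^s+1 := natDegree_X_pow_sub_C
  have hcroots : Multiset.card ((X: Polynomial K)^(2^s+1) - C 1).roots = 2^s + 1 := by
    have h1 := Polynomial.splits_iff_card_roots.mp hsplits
    rw [hdegX] at h1
    exact h1
  set U0 : Finset K := ((X: Polynomial K)^(2^s+1) - C 1).roots.toFinset with hU0
  have hU0card : U0.card = 2^s + 1 := by
    rw [hU0, Multiset.toFinset_card_of_nodup (nodup_roots hsep), hcroots]
  have hXne : ((X: Polynomial K)^(2^s+1) - C 1) ≠ 0 := by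
    intro h
    rw [h, natDegree_zero] at hdegX
    have : (0:ℕ) < 2^s := by positivity
    omega
  have hmemU0 : ∀ x : K, x ∈ U0 ↔ x ^ (2^s+1) = 1 := by
    intro x
    rw [hU0, Multiset.mem_toFinset, mem_roots hXne, IsRoot.def, eval_sub, eval_pow,
      eval_X, eval_C, sub_eq_zero]
  set U : Finset K := U0.erase 1 with hU
  have hUcard : U.card = 2^s := by
    rw [hU, Finset.card_erase_of_mem ((hmemU0 1).mpr (one_pow _)), hU0card]
    exact Nat.add_sub_cancel _ _
  have hmemU : ∀ x : K, x ∈ U ↔ (x ^ (2^s+1) = 1 ∧ x ≠ 1) := by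
    intro x
    rw [hU, Finset.mem_erase, hmemU0]
    tauto
  set D := s.divisors.filter (fun d => Odd (s/d)) with hD
  set Pf : ℕ → Finset (Polynomial F) := fun d => (SRP_finite F d).toFinset with hPf
  set T : Finset (Polynomial F) := D.biUnion Pf with hT
  have hmap : ∀ x ∈ U, minpoly F x ∈ T := by
    intro x hx
    obtain ⟨hx1, hx2⟩ := (hmemU x).mp hx
    obtain ⟨d, hd1, hd2, hd3⟩ := claim1 hF hn hrn h2s hs hx1 hx2
    rw [hT, Finset.mem_biUnion]
    refine ⟨d, ?_, ?_⟩
    · rw [hD, Finset.mem_filter, Nat.mem_divisors]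
      exact ⟨⟨hd1, hs.ne'⟩, hd2⟩
    · rw [hPf, Set.Finite.mem_toFinset]
      exact hd3
  have hfib := Finset.card_eq_sum_card_fiberwise hmap
  have hdisj : (D : Set ℕ).PairwiseDisjoint Pf := by
    intro d1 _ d2 _ hne
    rw [Function.onFun, Finset.disjoint_left]
    intro p hp1 hp2
    rw [hPf, Set.Finite.mem_toFinset] at hp1 hp2
    have e1 := hp1.2.2.1
    have e2 := hp2.2.2.1
    omega
  have hfibcard : ∀ d ∈ D, ∀ p ∈ Pf d,
      (U.filter (fun x => minpoly F x = p)).card = 2*d := by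
    intro d hd p hp
    rw [hPf, Set.Finite.mem_toFinset] at hp
    rw [hD, Finset.mem_filter, Nat.mem_divisors] at hd
    obtain ⟨⟨hds, _⟩, hodd⟩ := hd
    have hkey : U.filter (fun x => minpoly F x = p)
        = (p.map (algebraMap F K)).roots.toFinset := by
      ext x
      rw [Finset.mem_filter, Multiset.mem_toFinset,
        mem_roots ((hp.1.map (algebraMap F K)).ne_zero), IsRoot.def, eval_map, ← aeval_def]
      constructor
      · rintro ⟨hxU, rfl⟩
        exact minpoly.aeval F x
      · intro hroot
        obtain ⟨c1, c2, c3⟩ := claim2 hF hn hrn h2s hds hodd hp hroot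
        exact ⟨(hmemU x).mpr ⟨c1, c2⟩, c3⟩
    rw [hkey]
    have hsepp : (p.map (algebraMap F K)).Separable :=
      (PerfectField.separable_of_irreducible hp.2.1).map
    rw [Multiset.toFinset_card_of_nodup (nodup_roots hsepp),
      ← (IsAlgClosed.splits (p.map (algebraMap F K))).natDegree_eq_card_roots, natDegree_map, hp.2.2.1]
  have hncard : ∀ d, (SRP F d).ncard = (Pf d).card := by
    intro d
    rw [hPf]
    exact Set.ncard_eq_toFinset_card _ (SRP_finite F d)
  calc ∑ d ∈ D, (2*d) * (SRP F d).ncard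
      = ∑ d ∈ D, ∑ _p ∈ Pf d, 2*d := by
        apply Finset.sum_congr rfl
        intro d _
        rw [Finset.sum_const, hncard d, smul_eq_mul, mul_comm]
    _ = ∑ d ∈ D, ∑ p ∈ Pf d, (U.filter (fun x => minpoly F x = p)).card := by
        apply Finset.sum_congr rfl
        intro d hd
        apply Finset.sum_congr rfl
        intro p hp
        exact (hfibcard d hd p hp).symm
    _ = ∑ p ∈ T, (U.filter (fun x => minpoly F x = p)).card := by
        rw [hT, Finset.sum_biUnion hdisj]
    _ = U.card := hfib.symm
    _ = 2 ^ s := hUcard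

end Partition

/-! ### reindexing sums over odd divisors -/

lemma two_pow_dvd_of_odd_quot {a m' d : ℕ} (hm' : 0 < m') (hdvd : d ∣ 2^a * m')
    (hodd : Odd ((2^a*m')/d)) : 2^a ∣ d := by
  obtain ⟨q, hq⟩ := hdvd
  have hd0 : 0 < d := Nat.pos_of_dvd_of_pos ⟨q, hq⟩ (by positivity)
  have hqd : (2^a * m') / d = q := by rw [hq, Nat.mul_div_cancel_left _ hd0]
  rw [hqd] at hodd
  have hco : Nat.Coprime (2^a) q :=
    Nat.Coprime.pow_left a ((Nat.Prime.coprime_iff_not_dvd Nat.prime_two).mpr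
      (by rw [Nat.odd_iff] at hodd; omega))
  have h2 : (2:ℕ)^a ∣ q * d := ⟨m', by rw [mul_comm q d, ← hq]⟩
  exact hco.dvd_of_dvd_mul_left h2

lemma reindex_sum {M : Type*} [AddCommMonoid M] {a m' : ℕ} (hm' : 0 < m') (hmodd : ¬ 2 ∣ m')
    (f : ℕ → M) :
    ∑ e ∈ m'.divisors, f (2^a * e)
      = ∑ d ∈ (2^a * m').divisors.filter (fun d => Odd ((2^a*m')/d)), f d := by
  have ha0 : (0:ℕ) < 2^a := by positivity
  refine Finset.sum_nbij' (i := fun e => 2^a * e) (j := fun d => d / 2^a)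
    ?_ ?_ ?_ ?_ ?_
  · intro e he
    rw [Nat.mem_divisors] at he
    obtain ⟨hdvd, _⟩ := he
    rw [Finset.mem_filter, Nat.mem_divisors]
    refine ⟨⟨mul_dvd_mul_left _ hdvd, by positivity⟩, ?_⟩
    have hq : (2^a * m') / (2^a * e) = m' / e := by
      rw [Nat.mul_div_mul_left _ _ ha0]
    rw [hq]
    have hq2 : m' / e ∣ m' := Nat.div_dvd_of_dvd hdvd
    rw [Nat.odd_iff]
    have h2 : ¬ 2 ∣ m' / e := fun h2 => hmodd (h2.trans hq2)
    omega
  · intro d hd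
    rw [Finset.mem_filter, Nat.mem_divisors] at hd
    obtain ⟨⟨hdvd, _⟩, hodd⟩ := hd
    have h2ad : 2^a ∣ d := two_pow_dvd_of_odd_quot hm' hdvd hodd
    rw [Nat.mem_divisors]
    obtain ⟨e, rfl⟩ := h2ad
    rw [Nat.mul_div_cancel_left _ ha0]
    exact ⟨(Nat.mul_dvd_mul_iff_left ha0).mp hdvd, hm'.ne'⟩
  · intro e _
    rw [Nat.mul_div_cancel_left _ ha0]
  · intro d hd
    rw [Finset.mem_filter, Nat.mem_divisors] at hd
    obtain ⟨⟨hdvd, _⟩, hodd⟩ := hd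
    exact Nat.mul_div_cancel' (two_pow_dvd_of_odd_quot hm' hdvd hodd)
  · intro e _
    rfl

/-! ### the main theorem -/

/-- Let `n` be an odd prime, `q = 2^n`, `r = 2r'` even with `gcd(r,n) = 1`.  The number of
monic irreducible self-reciprocal polynomials of degree `r` over `F_q` dividing
`x^{2^r} + x` equals `(1/r)·Σ_{d ∣ r', d odd} μ(d)·2^{r'/d}`. -/
theorem stmt_9 (n r r' : ℕ) (hn : n.Prime) (hodd : Odd n) (hr' : 0 < r')
    (hr : r = 2 * r') (hr4 : 4 ≤ r) (hrn : Nat.gcd r n = 1)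
    (F : Type) [Field F] [Fintype F] (hF : Fintype.card F = 2 ^ n) :
    (Set.ncard {h : Polynomial F | h.Monic ∧ Irreducible h ∧ h.natDegree = r ∧
        h.reverse = C (h.coeff 0) * h ∧ h ∣ X ^ 2 ^ r + X} : ℤ) * r
      = ∑ d ∈ r'.divisors.filter (fun d => Odd d),
          (ArithmeticFunction.moebius d : ℤ) * 2 ^ (r' / d) := by
  classical
  subst hr
  have hn0 : n ≠ 0 := hn.pos.ne'
  have hrn' : Nat.Coprime (2*r') n := hrn
  have hset : {h : Polynomial F | h.Monic ∧ Irreducible h ∧ h.natDegree = 2*r' ∧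
      h.reverse = C (h.coeff 0) * h ∧ h ∣ X ^ 2 ^ (2*r') + X} = SRP F r' := rfl
  rw [hset]
  set a := (r').factorization 2 with ha
  set m := r' / 2 ^ a with hm
  have hm_eq : 2 ^ a * m = r' := Nat.ordProj_mul_ordCompl_eq_self r' 2
  have hmodd : ¬ 2 ∣ m := Nat.not_dvd_ordCompl Nat.prime_two hr'.ne'
  have hm0 : 0 < m := by
    rcases Nat.eq_zero_or_pos m with h | h
    · rw [h, mul_zero] at hm_eq; omega
    · exact h
  have hfwd : ∀ m' > 0, m' ∈ {x : ℕ | x ∣ m} →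
      ∑ e ∈ m'.divisors, (((2*(2^a*e)) * (SRP F (2^a*e)).ncard : ℕ) : ℤ)
        = ((2^(2^a*m') : ℕ) : ℤ) := by
    intro m' hm'0 hm'm
    have hmodd' : ¬ 2 ∣ m' := fun h2 => hmodd (h2.trans hm'm)
    have hs : 0 < 2^a * m' := by positivity
    have h2s : 2*(2^a*m') ∣ 2*r' := by
      apply mul_dvd_mul_left
      rw [← hm_eq]
      exact mul_dvd_mul_left _ hm'm
    have hpart := partition_lemma hF hn0 hrn' hs h2s
    have hre := reindex_sum (a := a) hm'0 hmodd'
      (fun d => (2*d) * (SRP F d).ncard)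
    have hnat : ∑ e ∈ m'.divisors, (2*(2^a*e)) * (SRP F (2^a*e)).ncard = 2^(2^a*m') :=
      hre.trans hpart
    exact_mod_cast hnat
  have hinv := (ArithmeticFunction.sum_eq_iff_sum_smul_moebius_eq_on
      {x : ℕ | x ∣ m} (fun x y hxy hy => hxy.trans hy)).mp hfwd m hm0 (dvd_refl m)
  -- identify index sets
  have hsets : r'.divisors.filter (fun d => Odd d) = m.divisors := by
    ext d
    rw [Finset.mem_filter, Nat.mem_divisors, Nat.mem_divisors]
    constructor
    · rintro ⟨⟨hdr, _⟩, hoddd⟩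
      refine ⟨?_, hm0.ne'⟩
      have hco : Nat.Coprime d (2^a) := (Nat.Coprime.pow_left a
        ((Nat.Prime.coprime_iff_not_dvd Nat.prime_two).mpr
          (by rw [Nat.odd_iff] at hoddd; omega))).symm
      apply hco.dvd_of_dvd_mul_left
      rw [hm_eq]
      exact hdr
    · rintro ⟨hdm, _⟩
      refine ⟨⟨hdm.trans ?_, hr'.ne'⟩, ?_⟩
      · rw [← hm_eq]; exact dvd_mul_left m (2^a)
      · rw [Nat.odd_iff]
        have hd2 : ¬ 2 ∣ d := fun h => hmodd (h.trans hdm)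
        omega
  -- rewrite the antidiagonal sum
  have hanti : ∑ x ∈ m.divisorsAntidiagonal,
      (ArithmeticFunction.moebius x.1 : ℤ) • ((2^(2^a*x.2) : ℕ) : ℤ)
        = ∑ i ∈ m.divisors,
          (ArithmeticFunction.moebius i : ℤ) • ((2^(2^a*(m/i)) : ℕ) : ℤ) :=
    Nat.sum_divisorsAntidiagonal
      (fun i j => (ArithmeticFunction.moebius i : ℤ) • ((2^(2^a*j) : ℕ) : ℤ))
  rw [hanti] at hinv
  -- final chain
  have hterm : ∀ d ∈ m.divisors,
      (ArithmeticFunction.moebius d : ℤ) • ((2^(2^a*(m/d)) : ℕ) : ℤ)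
        = (ArithmeticFunction.moebius d : ℤ) * 2 ^ (r' / d) := by
    intro d hd
    rw [Nat.mem_divisors] at hd
    have hrd : r' / d = 2^a * (m/d) := by
      rw [← hm_eq, Nat.mul_div_assoc _ hd.1]
    rw [smul_eq_mul, hrd]
    push_cast
    ring
  calc ((SRP F r').ncard : ℤ) * ((2*r' : ℕ) : ℤ)
      = (((2*(2^a*m)) * (SRP F (2^a*m)).ncard : ℕ) : ℤ) := by
        rw [hm_eq]
        push_cast
        ring
    _ = ∑ i ∈ m.divisors,
          (ArithmeticFunction.moebius i : ℤ) • ((2^(2^a*(m/i)) : ℕ) : ℤ) := hinv.symm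
    _ = ∑ i ∈ m.divisors, (ArithmeticFunction.moebius i : ℤ) * 2 ^ (r' / i) :=
        Finset.sum_congr rfl hterm
    _ = ∑ d ∈ r'.divisors.filter (fun d => Odd d),
          (ArithmeticFunction.moebius d : ℤ) * 2 ^ (r' / d) := by rw [hsets]
end

section
/- Let q = 2^n, let r = 3r_0 with r_0 a positive integer, let f ∈ F_q[x] be monic irreducible of degree r, and let α be a root of f. If α satisfies α^{q^{r_0}} = (α+1)/α, then the polynomial x^{q^{r_0}+1} + x + 1 factors completely over F_{q^r} as (x − α) · Π_{γ ∈ F_{q^{r_0}}} (x − ((γ^2+γ+1)/(α+γ) + γ + 1)), and all these q^{r_0} + 1 roots are distinct. -/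
open Polynomial

/-- Let `q = 2^n`, `r = 3r₀`, `f` monic irreducible of degree `r` over `F_q`, and let
`α ∈ F_{q^r}` be a root of `f` with `α^{q^{r₀}+1} + α + 1 = 0`.  Then
`x^{q^{r₀}+1} + x + 1 = (x−α)·∏_{γ ∈ F_{q^{r₀}}}(x − ((γ²+γ+1)/(α+γ) + γ + 1))` over
`F_{q^r}`, and all these `q^{r₀}+1` roots are distinct. -/
theorem stmt_10 (n r r0 : ℕ) (hn : 0 < n) (hr0 : 0 < r0) (hr : r = 3 * r0)
    (F K : Type) [Field F] [Fintype F] [Field K] [Fintype K] [Algebra F K]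
    [DecidableEq K]
    (hF : Fintype.card F = 2 ^ n) (hK : Fintype.card K = (2 ^ n) ^ r)
    (f : Polynomial F) (hm : f.Monic) (hi : Irreducible f) (hd : f.natDegree = r)
    (α : K) (hroot : Polynomial.aeval α f = 0)
    (hα : α ^ ((2 ^ n) ^ r0 + 1) + α + 1 = 0) :
    ((X : Polynomial K) ^ ((2 ^ n) ^ r0 + 1) + X + 1
        = (X - C α) *
          ∏ γ ∈ Finset.univ.filter (fun γ : K => γ ^ (2 ^ n) ^ r0 = γ),
            (X - C ((γ ^ 2 + γ + 1) / (α + γ) + γ + 1))) ∧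
    Set.InjOn (fun γ : K => (γ ^ 2 + γ + 1) / (α + γ) + γ + 1)
      {γ : K | γ ^ (2 ^ n) ^ r0 = γ} ∧
    (∀ γ : K, γ ^ (2 ^ n) ^ r0 = γ →
      (γ ^ 2 + γ + 1) / (α + γ) + γ + 1 ≠ α) := by
  classical
  set Q : ℕ := (2 ^ n) ^ r0 with hQdef
  have hQ2 : Q = 2 ^ (n * r0) := by rw [hQdef, ← pow_mul]
  have hQ1 : 1 < Q := by
    rw [hQ2]
    exact Nat.one_lt_two_pow (by positivity)
  have hcard : Fintype.card K = Q ^ 3 := by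
    rw [hK, hr]
    ring
  -- characteristic 2
  have h2 : (2 : K) = 0 := by
    have h := FiniteField.cast_card_eq_zero K
    rw [hcard, hQ2] at h
    push_cast at h
    rw [← pow_mul] at h
    have hnr : n * r0 * 3 ≠ 0 := by positivity
    exact pow_eq_zero_iff hnr |>.mp h
  have hcr : ringChar K = 2 := by
    have hdvd : ringChar K ∣ 2 := (ringChar.spec (R := K) 2).mp (by exact_mod_cast h2)
    have h1 : ringChar K ≠ 1 := CharP.ringChar_ne_one
    rcases (Nat.prime_two).eq_one_or_self_of_dvd _ hdvd with h | h
    · exact absurd h h1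
    · exact h
  haveI hchar : CharP K 2 := hcr ▸ ringChar.charP K
  -- Frobenius x ↦ x ^ Q
  have fadd : ∀ x y : K, (x + y) ^ Q = x ^ Q + y ^ Q := by
    intro x y; rw [hQ2]; exact add_pow_char_pow x y 2 (n * r0)
  -- Basic facts about α
  have hα0 : α ≠ 0 := by
    intro h; rw [h] at hα; simp at hα
  have hrel' : α ^ Q * α = α + 1 := by
    rw [pow_succ] at hα
    linear_combination hα - (α + 1) * h2
  obtain ⟨A, hAdef⟩ : ∃ A : K, α ^ Q = A := ⟨_, rfl⟩
  have hrel : A * α = α + 1 := by rw [← hAdef]; exact hrel'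
  have h_no_quad : α ^ 2 + α + 1 ≠ 0 := by
    intro hcon
    have hfm : f = minpoly F α := minpoly.eq_of_irreducible_of_monic hi hroot hm
    have hXne : (X ^ 2 + X + 1 : F[X]) ≠ 0 := by
      intro h0
      have := congrArg (eval 0) h0
      simp at this
    have hdvd : minpoly F α ∣ (X ^ 2 + X + 1 : F[X]) := by
      apply minpoly.dvd F α
      simp only [map_add, map_pow, aeval_X, aeval_one]
      exact hcon
    have hle : (minpoly F α).natDegree ≤ (X ^ 2 + X + 1 : F[X]).natDegree :=
      natDegree_le_of_dvd hdvd hXne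
    have hdd : (X ^ 2 + X + 1 : F[X]).natDegree = 2 := by compute_degree!
    rw [← hfm, hd, hdd] at hle
    omega
  have hA_ne : A ≠ α := by
    intro h
    apply h_no_quad
    rw [h] at hrel
    linear_combination hrel + (α + 1) * h2
  have hne1 : ∀ γ : K, γ ^ Q = γ → α + γ ≠ 0 := by
    intro γ hγ h
    have hαγ : α = γ := by linear_combination h - γ * h2
    apply hA_ne
    rw [← hAdef, hαγ, hγ]
  have hne2 : ∀ γ : K, γ ^ Q = γ → A + γ ≠ 0 := by
    intro γ hγ h
    have hAγ : A = γ := by linear_combination h - γ * h2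
    have h1 : A ^ Q = A := by rw [hAγ, hγ]
    have hKpow : α ^ Q ^ 3 = α := by
      have := FiniteField.pow_card α
      rwa [hcard] at this
    have h3 : ((α ^ Q) ^ Q) ^ Q = α := by
      rw [← pow_mul, ← pow_mul, show Q * (Q * Q) = Q ^ 3 by ring]
      exact hKpow
    rw [hAdef, h1, h1] at h3
    exact hA_ne h3
  -- the third bullet
  have part3 : ∀ γ : K, γ ^ Q = γ →
      (γ ^ 2 + γ + 1) / (α + γ) + γ + 1 ≠ α := by
    intro γ hγ hcon
    apply h_no_quad
    have h1 := hne1 γ hγ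
    field_simp at hcon
    linear_combination hcon + (α^2 - γ - γ^2) * h2
  -- the second bullet
  have part2 : Set.InjOn (fun γ : K => (γ ^ 2 + γ + 1) / (α + γ) + γ + 1)
      {γ : K | γ ^ Q = γ} := by
    intro γ1 h1 γ2 h2' heq
    simp only [Set.mem_setOf_eq] at h1 h2'
    have hg1 := hne1 γ1 h1
    have hg2 := hne1 γ2 h2'
    simp only at heq
    field_simp at heq
    have key : (γ1 - γ2) * (α ^ 2 + α + 1) = 0 := by
      linear_combination heq + (γ1 + γ1*γ2^2 - γ1^2*γ2 - γ1^2*α - γ2 + γ2^2*α) * h2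
    rcases mul_eq_zero.mp key with h | h
    · exact sub_eq_zero.mp h
    · exact absurd h h_no_quad
  -- the root property
  have hrootb : ∀ γ : K, γ ^ Q = γ →
      ((γ ^ 2 + γ + 1) / (α + γ) + γ + 1) ^ (Q + 1)
        + ((γ ^ 2 + γ + 1) / (α + γ) + γ + 1) + 1 = 0 := by
    intro γ hγ
    have hg1 := hne1 γ hγ
    have hg2 := hne2 γ hγ
    have e1 : (α + γ) ^ Q = A + γ := by rw [fadd, hγ, hAdef]

    have e2 : (γ ^ 2 + γ + 1) ^ Q = γ ^ 2 + γ + 1 := by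
      rw [fadd, fadd, one_pow, hγ, ← pow_mul, mul_comm 2 Q, pow_mul, hγ]
    have e3 : ((γ ^ 2 + γ + 1) / (α + γ) + γ + 1) ^ Q
        = (γ ^ 2 + γ + 1) / (A + γ) + γ + 1 := by
      rw [fadd, fadd, one_pow, hγ, div_pow, e1, e2]
    rw [pow_succ, e3]
    field_simp
    linear_combination (3 + 3*γ + γ^2) * hrel +
      (2 + A + 2*α + 4*γ + 3*γ*A + 4*γ*α + 6*γ^2 + 3*γ^2*A + 3*γ^2*α + 5*γ^3 +
        γ^3*A + γ^3*α + 2*γ^4) * h2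
  -- cardinality of the fixed-point set
  set S : Finset K := Finset.univ.filter (fun γ : K => γ ^ Q = γ) with hSdef
  have hQ3 : 1 < Q ^ 3 := Nat.one_lt_pow (by omega) hQ1
  have hPsep : (X ^ Q - X : K[X]).Separable :=
    galois_poly_separable 2 Q (by rw [hQ2]; exact dvd_pow_self 2 (by positivity))
  have hp_ne : (X ^ Q - X : K[X]) ≠ 0 := FiniteField.X_pow_card_sub_X_ne_zero K hQ1
  have hd_ne : (X ^ Q ^ 3 - X : K[X]) ≠ 0 := FiniteField.X_pow_card_sub_X_ne_zero K hQ3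
  have hd_splits : Splits (X ^ Q ^ 3 - X : K[X]) := by
    rw [splits_iff_card_roots]
    have hroots := FiniteField.roots_X_pow_card_sub_X K
    rw [hcard] at hroots
    rw [hroots, FiniteField.X_pow_card_sub_X_natDegree_eq K hQ3, ← hcard]
    exact Finset.card_univ
  have fsubP : ∀ p q : K[X], (p - q) ^ Q = p ^ Q - q ^ Q := by
    intro u v; rw [hQ2]; exact sub_pow_char_pow (p := 2) u v (n * r0)
  have hdvd3 : (X ^ Q - X : K[X]) ∣ (X ^ Q ^ 3 - X) := by
    have s1 : ((X : K[X]) ^ Q - X) ^ Q = X ^ (Q * Q) - X ^ Q := by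
      rw [fsubP, ← pow_mul]
    have s2 : (((X : K[X]) ^ Q - X) ^ Q) ^ Q = X ^ (Q * Q * Q) - X ^ (Q * Q) := by
      rw [s1, fsubP, ← pow_mul, ← pow_mul]
    have key : (X ^ Q ^ 3 - X : K[X])
        = (((X ^ Q - X) ^ Q) ^ Q) + ((X ^ Q - X) ^ Q) + (X ^ Q - X) := by
      rw [s2, s1, show Q * Q * Q = Q ^ 3 by ring]
      ring
    rw [key]
    have hQ0 : Q ≠ 0 := by omega
    refine dvd_add (dvd_add ?_ (dvd_pow_self _ hQ0)) dvd_rfl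
    exact dvd_trans (dvd_pow_self _ hQ0) (dvd_pow_self _ hQ0)
  have hcardroots : Multiset.card (X ^ Q - X : K[X]).roots = Q := by
    have hsp := hd_splits.of_dvd hd_ne hdvd3
    rw [splits_iff_card_roots] at hsp
    rw [hsp, FiniteField.X_pow_card_sub_X_natDegree_eq K hQ1]
  have hSroots : S = (X ^ Q - X : K[X]).roots.toFinset := by
    ext γ
    simp [hSdef, Multiset.mem_toFinset, mem_roots', hp_ne, IsRoot.def, sub_eq_zero]
  have hScard : S.card = Q := by
    rw [hSroots, Multiset.toFinset_card_of_nodup (nodup_roots hPsep), hcardroots]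
  -- degree and monicity facts
  have hdX1 : (X + 1 : K[X]).degree = 1 := by
    rw [← C_1]; exact degree_X_add_C 1
  have hlt1 : (X + 1 : K[X]).degree < ((Q + 1 : ℕ) : WithBot ℕ) := by
    rw [hdX1]; exact_mod_cast Nat.lt_succ_of_lt hQ1
  have hmonP : (X ^ (Q + 1) + X + 1 : K[X]).Monic := by
    rw [add_assoc]
    exact monic_X_pow_add hlt1
  have hdegP : (X ^ (Q + 1) + X + 1 : K[X]).degree = ((Q + 1 : ℕ) : WithBot ℕ) := by
    rw [add_assoc, degree_add_eq_left_of_degree_lt, degree_X_pow]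
    rw [degree_X_pow]; exact hlt1
  have hmon2 : (∏ γ ∈ S, (X - C ((γ ^ 2 + γ + 1) / (α + γ) + γ + 1)) : K[X]).Monic :=
    monic_prod_of_monic S _ fun γ _ => monic_X_sub_C _
  have hmonRp : ((X - C α) * ∏ γ ∈ S,
      (X - C ((γ ^ 2 + γ + 1) / (α + γ) + γ + 1)) : K[X]).Monic :=
    (monic_X_sub_C α).mul hmon2
  have hndeg : ((X - C α) * ∏ γ ∈ S,
      (X - C ((γ ^ 2 + γ + 1) / (α + γ) + γ + 1)) : K[X]).natDegree = Q + 1 := by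
    rw [(monic_X_sub_C α).natDegree_mul hmon2, natDegree_X_sub_C,
      natDegree_prod_of_monic _ _ (fun γ _ => monic_X_sub_C _)]
    simp only [natDegree_X_sub_C, Finset.sum_const, smul_eq_mul, mul_one, hScard]
    exact Nat.add_comm 1 Q
  -- the distinguished finset of roots
  have hInjS : Set.InjOn (fun γ : K => (γ ^ 2 + γ + 1) / (α + γ) + γ + 1) ↑S := by
    intro x hx y hy hxy
    refine part2 ?_ ?_ hxy
    · exact (Finset.mem_filter.mp hx).2
    · exact (Finset.mem_filter.mp hy).2
  have hnotmem : α ∉ S.image (fun γ : K => (γ ^ 2 + γ + 1) / (α + γ) + γ + 1) := by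
    intro hmem
    obtain ⟨γ, hγS, hbγ⟩ := Finset.mem_image.mp hmem
    exact part3 γ (Finset.mem_filter.mp hγS).2 hbγ
  have hcards : (insert α (S.image
      (fun γ : K => (γ ^ 2 + γ + 1) / (α + γ) + γ + 1))).card = Q + 1 := by
    rw [Finset.card_insert_of_notMem hnotmem, Finset.card_image_of_injOn hInjS, hScard]
  -- the main polynomial identity
  have main : (X : K[X]) ^ (Q + 1) + X + 1
      = (X - C α) * ∏ γ ∈ S, (X - C ((γ ^ 2 + γ + 1) / (α + γ) + γ + 1)) := by
    rcases eq_or_ne ((X ^ (Q + 1) + X + 1 : K[X])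
        - (X - C α) * ∏ γ ∈ S, (X - C ((γ ^ 2 + γ + 1) / (α + γ) + γ + 1))) 0 with h | h
    · exact sub_eq_zero.mp h
    · exfalso
      apply h
      apply eq_zero_of_natDegree_lt_card_of_eval_eq_zero' _
        (insert α (S.image (fun γ : K => (γ ^ 2 + γ + 1) / (α + γ) + γ + 1)))
      · intro x hx
        rw [eval_sub, eval_add, eval_add, eval_pow, eval_X, eval_one, eval_mul,
          eval_sub, eval_X, eval_C, eval_prod]
        rcases Finset.mem_insert.mp hx with rfl | hx'
        · rw [hα, sub_self, zero_mul, zero_sub, neg_zero]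
        · obtain ⟨γ, hγS, rfl⟩ := Finset.mem_image.mp hx'
          have hγ : γ ^ Q = γ := (Finset.mem_filter.mp hγS).2
          have hprod : (∏ γ' ∈ S, eval ((γ ^ 2 + γ + 1) / (α + γ) + γ + 1)
              (X - C ((γ' ^ 2 + γ' + 1) / (α + γ') + γ' + 1))) = 0 := by
            apply Finset.prod_eq_zero hγS
            simp
          rw [hprod, mul_zero, sub_zero]
          exact hrootb γ hγ
      · rw [hcards]
        have hdlt : ((X ^ (Q + 1) + X + 1 : K[X])
            - (X - C α) * ∏ γ ∈ S, (X - C ((γ ^ 2 + γ + 1) / (α + γ) + γ + 1))).degree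
            < ((Q + 1 : ℕ) : WithBot ℕ) := by
          have hdR : ((X - C α) * ∏ γ ∈ S,
              (X - C ((γ ^ 2 + γ + 1) / (α + γ) + γ + 1)) : K[X]).degree
              = ((Q + 1 : ℕ) : WithBot ℕ) := by
            rw [degree_eq_natDegree hmonRp.ne_zero, hndeg]
          have := degree_sub_lt (hdegP.trans hdR.symm) hmonP.ne_zero
            (by rw [hmonP.leadingCoeff, hmonRp.leadingCoeff])
          rwa [hdegP] at this
        exact (natDegree_lt_iff_degree_lt h).mpr hdlt
  exact ⟨main, part2, part3⟩
end

section
/- Let r = 3m with m a positive integer and r ≠ 6. Then Σ_{d | m, gcd(3,d)=1} μ(d)·(2^{m/d} − (−1)^{m/d}) > 0. Consequently, there exists a monic irreducible polynomial f of degree r over F_2 fixed by the order-3 Möbius transformation x ↦ (x+1)/x, i.e., satisfying (x+1)^r f(x/(x+1))* = f(x) appropriately; equivalently the count (2/r)·Σ_{d | m, gcd(3,d)=1} μ(d)(2^{m/d} + (−1)^{m/d + 1}) is positive. -/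
open Polynomial IntermediateField ArithmeticFunction

local notation "F2" => ZMod 2
local notation "AC" => AlgebraicClosure (ZMod 2)

lemma key_aux : ∀ k : ℕ, (7+k+1)*(2^((7+k)/2)+1) + 2 < 2^(7+k) := by
  intro k
  induction k using Nat.strong_induction_on with
  | _ k ih =>
    match k with
    | 0 => norm_num
    | 1 => norm_num
    | (j+2) =>
      have h := ih j (by omega)
      have hs : (7 + (j+2))/2 = (7+j)/2 + 1 := by omega
      have h2 : (2:ℕ)^(7+(j+2)) = 4 * 2^(7+j) := by rw [show 7+(j+2) = (7+j)+2 by ring, pow_add]; ring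
      rw [hs, h2, pow_succ]
      nlinarith [h, Nat.one_le_two_pow (n := (7+j)/2)]

lemma key {n : ℕ} (hn : 7 ≤ n) : (n+1)*(2^(n/2)+1) + 2 < 2^n := by
  obtain ⟨k, rfl⟩ : ∃ k, n = 7 + k := ⟨n - 7, by omega⟩
  exact key_aux k

lemma card_divisors_le (m : ℕ) : m.divisors.card ≤ m := by
  have : m.divisors ⊆ Finset.Icc 1 m := by
    intro d hd
    rw [Nat.mem_divisors] at hd
    rw [Finset.mem_Icc]
    refine ⟨Nat.pos_of_ne_zero (fun h => ?_), Nat.le_of_dvd (Nat.pos_of_ne_zero hd.2) hd.1⟩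
    subst h
    exact hd.2 (Nat.eq_zero_of_zero_dvd hd.1)
  calc m.divisors.card ≤ (Finset.Icc 1 m).card := Finset.card_le_card this
    _ = m := by simp

lemma partA (m : ℕ) (hm : 0 < m) (hm2 : m ≠ 2) :
    0 < ∑ d ∈ m.divisors.filter (fun d => Nat.gcd 3 d = 1),
        (ArithmeticFunction.moebius d : ℤ) * (2 ^ (m / d) - (-1 : ℤ) ^ (m / d)) := by
  rcases lt_or_ge m 7 with h7 | h7
  · interval_cases m
    · rw [show (Nat.divisors 1).filter (fun d => Nat.gcd 3 d = 1) = ({1} : Finset ℕ) by rfl,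
        Finset.sum_singleton, moebius_apply_one]; norm_num
    · exact absurd rfl hm2
    · rw [show (Nat.divisors 3).filter (fun d => Nat.gcd 3 d = 1) = ({1} : Finset ℕ) by rfl,
        Finset.sum_singleton, moebius_apply_one]; norm_num
    · rw [show (Nat.divisors 4).filter (fun d => Nat.gcd 3 d = 1) = ({1,2,4} : Finset ℕ) by rfl,
        Finset.sum_insert (by decide), Finset.sum_insert (by decide), Finset.sum_singleton,
        moebius_apply_one, moebius_apply_prime (by norm_num),
        moebius_eq_zero_of_not_squarefree (by decide)]
      norm_num
    · rw [show (Nat.divisors 5).filter (fun d => Nat.gcd 3 d = 1) = ({1,5} : Finset ℕ) by rfl,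
        Finset.sum_insert (by decide), Finset.sum_singleton,
        moebius_apply_one, moebius_apply_prime (by norm_num)]
      norm_num
    · rw [show (Nat.divisors 6).filter (fun d => Nat.gcd 3 d = 1) = ({1,2} : Finset ℕ) by rfl,
        Finset.sum_insert (by decide), Finset.sum_singleton,
        moebius_apply_one, moebius_apply_prime (by norm_num)]
      norm_num
  · set D := m.divisors.filter (fun d => Nat.gcd 3 d = 1) with hD
    have h1D : 1 ∈ D := by
      simp [hD, Nat.mem_divisors, hm.ne']
    rw [← Finset.add_sum_erase _ _ h1D, moebius_apply_one]
    have hbound : |∑ d ∈ D.erase 1,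
        (ArithmeticFunction.moebius d : ℤ) * (2 ^ (m / d) - (-1 : ℤ) ^ (m / d))|
        ≤ (m : ℤ) * (2 ^ (m/2) + 1) := by
      calc |∑ d ∈ D.erase 1, (moebius d : ℤ) * (2 ^ (m / d) - (-1 : ℤ) ^ (m / d))|
          ≤ ∑ d ∈ D.erase 1, |(moebius d : ℤ) * (2 ^ (m / d) - (-1 : ℤ) ^ (m / d))| :=
            Finset.abs_sum_le_sum_abs _ _
        _ ≤ ∑ _d ∈ D.erase 1, ((2:ℤ) ^ (m/2) + 1) := by
            apply Finset.sum_le_sum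
            intro d hd
            have hd1 : d ≠ 1 := (Finset.mem_erase.1 hd).1
            have hdD : d ∈ D := (Finset.mem_erase.1 hd).2
            have hdvd : d ∣ m := (Nat.mem_divisors.1 (Finset.mem_filter.1 hdD).1).1
            have hd2 : 2 ≤ d := by
              rcases Nat.lt_or_ge d 2 with h | h
              · interval_cases d
                · exact absurd (Nat.eq_zero_of_zero_dvd hdvd) (by omega)
                · exact absurd rfl hd1
              · exact h
            have hdiv : m / d ≤ m / 2 := Nat.div_le_div_left hd2 (by norm_num)
            rw [abs_mul]
            have h1 : |(moebius d : ℤ)| ≤ 1 := abs_moebius_le_one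
            have h2 : |(2:ℤ) ^ (m / d) - (-1 : ℤ) ^ (m / d)| ≤ 2 ^ (m/2) + 1 := by
              calc |(2:ℤ) ^ (m / d) - (-1 : ℤ) ^ (m / d)|
                  ≤ |(2:ℤ) ^ (m / d)| + |(-1 : ℤ) ^ (m / d)| := abs_sub _ _
                _ ≤ 2 ^ (m/2) + 1 := by
                    rw [abs_pow, abs_pow]
                    simp only [abs_two, abs_neg, abs_one, one_pow]
                    exact add_le_add (pow_le_pow_right₀ one_le_two hdiv) le_rfl
            calc |(moebius d : ℤ)| * |(2:ℤ) ^ (m / d) - (-1 : ℤ) ^ (m / d)|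
                ≤ 1 * ((2:ℤ)^(m/2)+1) := mul_le_mul h1 h2 (abs_nonneg _) zero_le_one
              _ = (2:ℤ)^(m/2)+1 := one_mul _
        _ = ((D.erase 1).card : ℤ) * ((2:ℤ) ^ (m/2) + 1) := by
            rw [Finset.sum_const, nsmul_eq_mul]
        _ ≤ (m : ℤ) * (2 ^ (m/2) + 1) := by
            have hc : (D.erase 1).card ≤ m :=
              le_trans (Finset.card_le_card (Finset.erase_subset _ _))
                (le_trans (Finset.card_le_card (Finset.filter_subset _ _)) (card_divisors_le m))
            have : ((2:ℤ)^(m/2)+1) ≥ 0 := by positivity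
            exact mul_le_mul_of_nonneg_right (by exact_mod_cast hc) this
    have hkey : ((m:ℤ)) * (2 ^ (m/2) + 1) < 2 ^ m - 1 := by
      have := key h7
      have : ((m+1)*(2^(m/2)+1) + 2 : ℕ) < 2^m := this
      have h' : (((m+1)*(2^(m/2)+1) + 2 : ℕ) : ℤ) < ((2^m : ℕ) : ℤ) := by exact_mod_cast this
      push_cast at h'
      have hexp : ((m:ℤ)+1)*(2^(m/2)+1) = (m:ℤ)*(2^(m/2)+1) + (2^(m/2)+1) := by ring
      have hA : (1:ℤ) ≤ 2^(m/2)+1 := by nlinarith [pow_pos (zero_lt_two (α := ℤ)) (m/2)]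
      linarith
    have hmain : (1:ℤ) * (2 ^ m - (-1:ℤ) ^ m) ≥ 2 ^ m - 1 := by
      rw [one_mul]
      rcases Nat.even_or_odd m with he | ho
      · rw [he.neg_one_pow]
      · rw [ho.neg_one_pow]; linarith
    have habs := abs_le.1 hbound
    simp only [Nat.div_one]
    linarith [habs.1, hmain, hkey]

lemma frob_aeval (f : Polynomial F2) (x : AC) : aeval (x^2) f = (aeval x f)^2 := by
  induction f using Polynomial.induction_on' with
  | add p q hp hq => rw [map_add, map_add, hp, hq, add_pow_char]
  | monomial n a =>
      rw [aeval_monomial, aeval_monomial, mul_pow, ← pow_mul, ← pow_mul, mul_comm 2 n]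
      congr 1
      rw [← map_pow]
      exact congrArg _ (ZMod.pow_card a).symm

lemma frob_aeval_iter (f : Polynomial F2) (x : AC) (k : ℕ) :
    aeval (x^(2^k)) f = (aeval x f)^(2^k) := by
  induction k with
  | zero => simp
  | succ k ih => rw [pow_succ, pow_mul, frob_aeval, ih, ← pow_mul, ← pow_succ]

lemma pow_pow_fix (x : AC) {n : ℕ} (h : x^(2^n) = x) (k : ℕ) : x^(2^(n*k)) = x := by
  induction k with
  | zero => simp
  | succ k ih => rw [Nat.mul_succ, pow_add, pow_mul, ih, h]

lemma isIntegralAC (x : AC) : IsIntegral F2 x := Algebra.IsIntegral.isIntegral x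

lemma fix_of_deg (x : AC) : x^(2^((minpoly F2 x).natDegree)) = x := by
  have hx : IsIntegral F2 x := isIntegralAC x
  haveI : FiniteDimensional F2 F2⟮x⟯ := IntermediateField.adjoin.finiteDimensional hx
  haveI : Finite F2⟮x⟯ := Module.finite_of_finite F2
  haveI : Fintype F2⟮x⟯ := Fintype.ofFinite _
  have hcard : Fintype.card F2⟮x⟯ = 2 ^ (minpoly F2 x).natDegree := by
    rw [Module.card_eq_pow_finrank (K := F2) (V := F2⟮x⟯), IntermediateField.adjoin.finrank hx, ZMod.card]
  have h1 := FiniteField.pow_card (IntermediateField.AdjoinSimple.gen F2 x)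
  rw [hcard] at h1
  have h2 := congrArg (Subtype.val) h1
  rwa [SubmonoidClass.coe_pow] at h2

lemma all_fix (x : AC) {s : ℕ} (hs : x^(2^s) = x) (y : F2⟮x⟯) : y^(2^s) = y := by
  have hx : IsIntegral F2 x := isIntegralAC x
  have hmem : (y : AC) ∈ Algebra.adjoin F2 ({x} : Set AC) := by
    have h1 := IntermediateField.adjoin_simple_toSubalgebra_of_isAlgebraic hx.isAlgebraic
    have hy : (y : AC) ∈ F2⟮x⟯.toSubalgebra := y.2
    rwa [h1] at hy
  rw [Algebra.adjoin_singleton_eq_range_aeval] at hmem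
  obtain ⟨g, hg⟩ := hmem
  have hg' : aeval x g = (y : AC) := hg
  have h2 : (y : AC)^(2^s) = (y : AC) := by
    rw [← hg', ← frob_aeval_iter, hs]
  exact Subtype.ext (by rwa [SubmonoidClass.coe_pow])

lemma deg_dvd_of_fix (x : AC) {n : ℕ} (hn : 0 < n) (h : x^(2^n) = x) :
    (minpoly F2 x).natDegree ∣ n := by
  classical
  have hx : IsIntegral F2 x := isIntegralAC x
  set d := (minpoly F2 x).natDegree with hd
  have hd0 : 0 < d := minpoly.natDegree_pos hx
  have hfix : x^(2^(n % d)) = x := by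
    have e : d * (n/d) + n % d = n := Nat.div_add_mod n d
    have h2 : x^(2^(d*(n/d) + n % d)) = x := by rw [e]; exact h
    rwa [pow_add, pow_mul, pow_pow_fix x (fix_of_deg x) (n/d)] at h2
  by_contra hndvd
  have hs0 : n % d ≠ 0 := fun h0 => hndvd (Nat.dvd_of_mod_eq_zero h0)
  have hlt : n % d < d := Nat.mod_lt n hd0
  haveI : FiniteDimensional F2 F2⟮x⟯ := IntermediateField.adjoin.finiteDimensional hx
  haveI : Finite F2⟮x⟯ := Module.finite_of_finite F2
  haveI : Fintype F2⟮x⟯ := Fintype.ofFinite _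
  have hcard : Fintype.card F2⟮x⟯ = 2 ^ d := by
    rw [Module.card_eq_pow_finrank (K := F2) (V := F2⟮x⟯), IntermediateField.adjoin.finrank hx, ZMod.card]
  have hone : 1 < 2^(n % d) := Nat.one_lt_two_pow hs0
  set Q : Polynomial F2⟮x⟯ := X^(2^(n % d)) - X with hQ
  have hQne : Q ≠ 0 := FiniteField.X_pow_card_sub_X_ne_zero _ hone
  have hQdeg : Q.natDegree = 2^(n % d) := FiniteField.X_pow_card_sub_X_natDegree_eq _ hone
  have hsub : (Finset.univ : Finset F2⟮x⟯) ⊆ Q.roots.toFinset := by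
    intro y _
    rw [Multiset.mem_toFinset, mem_roots hQne]
    simp [hQ, Polynomial.IsRoot, all_fix x hfix y]
  have hle : Fintype.card F2⟮x⟯ ≤ 2^(n % d) := by
    calc Fintype.card F2⟮x⟯ = (Finset.univ : Finset F2⟮x⟯).card := (Finset.card_univ).symm
      _ ≤ Q.roots.toFinset.card := Finset.card_le_card hsub
      _ ≤ Multiset.card Q.roots := Multiset.toFinset_card_le _
      _ ≤ _ := Polynomial.card_roots' _
      _ = 2^(n % d) := hQdeg
  rw [hcard] at hle
  exact absurd hle (by exact Nat.not_le.2 (Nat.pow_lt_pow_right one_lt_two hlt))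

lemma bezout_pos {m t : ℕ} (hm : 0 < m) (ht : 0 < t) :
    ∃ a b : ℕ, 0 < a ∧ a * m = Nat.gcd m t + b * t := by
  have hg : ((Nat.gcd m t : ℕ) : ℤ) = m * Nat.gcdA m t + t * Nat.gcdB m t := by
    exact_mod_cast Nat.gcd_eq_gcd_ab m t
  set x := Nat.gcdA m t with hxdef
  set y := Nat.gcdB m t with hydef
  have ht' : (0:ℤ) < t := by exact_mod_cast ht
  have hx0 : 0 ≤ x % t := Int.emod_nonneg x (by exact_mod_cast ht.ne')
  have hxlt : x % t < t := Int.emod_lt_of_pos x ht'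
  have hdiv : x % t + t * (x / t) = x := Int.emod_add_mul_ediv x t
  set a' : ℤ := x % t + t with ha'
  set b' : ℤ := (m : ℤ) - y - m * (x / t) with hb'
  have heq : a' * m = Nat.gcd m t + t * b' := by
    rw [ha', hb']
    linear_combination (m : ℤ) * hdiv - hg
  have ha'pos : 0 < a' := by omega
  have hcle : (Nat.gcd m t : ℤ) ≤ m := by
    exact_mod_cast Nat.le_of_dvd hm (Nat.gcd_dvd_left m t)
  have hb'nonneg : 0 ≤ b' := by nlinarith
  refine ⟨a'.toNat, b'.toNat, by omega, ?_⟩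
  have h1 : ((a'.toNat : ℤ)) = a' := Int.toNat_of_nonneg ha'pos.le
  have h2 : ((b'.toNat : ℤ)) = b' := Int.toNat_of_nonneg hb'nonneg
  have h3 : (a'.toNat : ℤ) * m = Nat.gcd m t + b'.toNat * t := by
    rw [h1, h2]; linarith [heq]
  exact_mod_cast h3

lemma pow_pow_fix' (x : AC) {n : ℕ} (h : x^(2^n) = x) (k : ℕ) : x^(2^(n*k)) = x := by
  induction k with
  | zero => simp
  | succ k ih => rw [Nat.mul_succ, pow_add, pow_mul, ih, h]

lemma filter_bound (m : ℕ) (hm : 0 < m) (S : Finset AC)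
    (hroot1 : ∀ α ∈ S, α^(2^m) * α = α + 1)
    (hroot2 : ∀ α ∈ S, α^(2^(2*m)) * (α+1) = 1)
    (hroot3 : ∀ α ∈ S, α^(2^(3*m)) = α)
    {t : ℕ} (ht : 0 < t) (hcm : Nat.gcd m t ≠ m)
    [DecidablePred fun α : AC => α^(2^t) = α] :
    (S.filter (fun α => α^(2^t) = α)).card ≤ 2^(m/2) + 1 := by
  classical
  set c := Nat.gcd m t with hc
  have hc0 : 0 < c := Nat.gcd_pos_of_pos_left t hm
  have hcdvd : c ∣ m := Nat.gcd_dvd_left m t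
  have hchalf : c ≤ m / 2 := by
    obtain ⟨k, hk⟩ := hcdvd
    have hk2 : 2 ≤ k := by
      rcases Nat.lt_or_ge k 2 with h | h
      · interval_cases k
        · omega
        · exact absurd (by omega : c = m) hcm
      · exact h
    rw [Nat.le_div_iff_mul_le (by norm_num)]
    nlinarith
  obtain ⟨a, b, ha0, hab⟩ := bezout_pos hm ht
  have h11 : (1 : AC) + 1 = 0 := CharTwo.add_self_eq_zero 1
  have hkey : ∀ α ∈ S.filter (fun α => α^(2^t) = α), α^(2^c) = α^(2^((a % 3) * m)) := by
    intro α hα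
    rw [Finset.mem_filter] at hα
    obtain ⟨hαS, hfix⟩ := hα
    have h1 : α^(2^(a*m)) = α^(2^c) := by
      rw [hab, pow_add, mul_comm ((2:ℕ)^c) _, pow_mul, mul_comm b t, pow_pow_fix' α hfix b]
    have e : a * m = 3 * m * (a/3) + a % 3 * m := by
      conv_lhs => rw [← Nat.div_add_mod a 3]
      ring
    have h2 : α^(2^(a*m)) = α^(2^((a % 3) * m)) := by
      rw [e, pow_add, pow_mul, pow_pow_fix' α (hroot3 α hαS) (a/3)]
    rw [← h1, h2]
  have hmod : a % 3 < 3 := Nat.mod_lt _ (by norm_num)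
  have hmono : (2:ℕ)^c ≤ 2^(m/2) := Nat.pow_le_pow_right (by norm_num) hchalf
  interval_cases h : a % 3
  · set Q : Polynomial AC := X^(2^c) - X with hQ
    have hQne : Q ≠ 0 := FiniteField.X_pow_card_sub_X_ne_zero _ (Nat.one_lt_two_pow hc0.ne')
    have hQdeg : Q.natDegree = 2^c :=
      FiniteField.X_pow_card_sub_X_natDegree_eq _ (Nat.one_lt_two_pow hc0.ne')
    have hsub : S.filter (fun α => α^(2^t) = α) ⊆ Q.roots.toFinset := by
      intro α hα
      have hfix := hkey α hα
      simp only [Nat.zero_mul, pow_zero, pow_one] at hfix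
      rw [Multiset.mem_toFinset, mem_roots hQne]
      simp [hQ, Polynomial.IsRoot, hfix]
    calc (S.filter _).card ≤ Q.roots.toFinset.card := Finset.card_le_card hsub
      _ ≤ Multiset.card Q.roots := Multiset.toFinset_card_le _
      _ ≤ Q.natDegree := Polynomial.card_roots' _
      _ = 2^c := hQdeg
      _ ≤ 2^(m/2) + 1 := by omega
  · set Q : Polynomial AC := X^(2^c+1) + X + 1 with hQ
    have hQdeg : Q.natDegree = 2^c+1 := by
      rw [hQ]
      compute_degree!
    have hQne : Q ≠ 0 := by
      intro h0
      rw [h0, natDegree_zero] at hQdeg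
      have := Nat.one_le_two_pow (n := c)
      omega
    have hsub : S.filter (fun α => α^(2^t) = α) ⊆ Q.roots.toFinset := by
      intro α hα
      have hfix := hkey α hα
      simp only [one_mul] at hfix
      have hαS := (Finset.mem_filter.1 hα).1
      have hr1 := hroot1 α hαS
      have h2α : α + α = 0 := CharTwo.add_self_eq_zero α
      rw [Multiset.mem_toFinset, mem_roots hQne]
      simp only [hQ, Polynomial.IsRoot, eval_add, eval_pow, eval_X, eval_one]
      rw [pow_succ, hfix]
      linear_combination hr1 + h11 + h2α
    calc (S.filter _).card ≤ Q.roots.toFinset.card := Finset.card_le_card hsub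
      _ ≤ Multiset.card Q.roots := Multiset.toFinset_card_le _
      _ ≤ Q.natDegree := Polynomial.card_roots' _
      _ = 2^c + 1 := hQdeg
      _ ≤ 2^(m/2) + 1 := by omega
  · set Q : Polynomial AC := X^(2^c+1) + X^(2^c) + 1 with hQ
    have hQdeg : Q.natDegree = 2^c+1 := by
      rw [hQ]
      compute_degree!
    have hQne : Q ≠ 0 := by
      intro h0
      rw [h0, natDegree_zero] at hQdeg
      have := Nat.one_le_two_pow (n := c)
      omega
    have hsub : S.filter (fun α => α^(2^t) = α) ⊆ Q.roots.toFinset := by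
      intro α hα
      have hfix := hkey α hα
      have hαS := (Finset.mem_filter.1 hα).1
      have hr2 := hroot2 α hαS
      rw [Multiset.mem_toFinset, mem_roots hQne]
      simp only [hQ, Polynomial.IsRoot, eval_add, eval_pow, eval_X, eval_one]
      rw [pow_succ, hfix]
      linear_combination hr2 + h11
    calc (S.filter _).card ≤ Q.roots.toFinset.card := Finset.card_le_card hsub
      _ ≤ Multiset.card Q.roots := Multiset.toFinset_card_le _
      _ ≤ Q.natDegree := Polynomial.card_roots' _
      _ = 2^c + 1 := hQdeg
      _ ≤ 2^(m/2) + 1 := by omega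

lemma P_natDegree (m : ℕ) : (X^(2^m+1) + X + 1 : Polynomial F2).natDegree = 2^m+1 := by
  compute_degree!

lemma X_add_one_eq (R : Type*) [CommRing R] [CharP R 2] : (X + 1 : Polynomial R) = X - C 1 := by
  rw [map_one, sub_eq_add_neg, CharTwo.neg_eq]

lemma P_sep (m : ℕ) (hm : 0 < m) : Separable (X^(2^m+1) + X + 1 : Polynomial F2) := by
  rw [Polynomial.separable_def]
  have hderiv : derivative (X^(2^m+1) + X + 1 : Polynomial F2) = (X + 1)^(2^m) := by
    rw [derivative_add, derivative_add, derivative_one, derivative_X, derivative_X_pow]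
    have h1 : ((2^m+1 : ℕ) : F2) = 1 := by
      push_cast
      rw [show (2:F2) = 0 by decide, zero_pow hm.ne', zero_add]
    rw [h1, map_one, one_mul, Nat.add_sub_cancel, add_pow_char_pow, one_pow, add_zero]
  rw [hderiv]
  have heval : (X^(2^m+1) + X + 1 : Polynomial F2).eval 1 = 1 := by
    simp only [eval_add, eval_pow, eval_X, eval_one, one_pow]
    decide
  have hnd : ¬ (X - C 1 : Polynomial F2) ∣ (X^(2^m+1) + X + 1) := by
    rw [dvd_iff_isRoot]
    intro hroot
    rw [Polynomial.IsRoot, heval] at hroot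
    exact one_ne_zero hroot
  have hcop : IsCoprime (X^(2^m+1) + X + 1 : Polynomial F2) (X - C 1) :=
    ((Irreducible.coprime_iff_not_dvd (irreducible_X_sub_C 1)).2 hnd).symm
  rw [X_add_one_eq]
  exact hcop.pow_right

lemma partB (m : ℕ) (hm : 0 < m) (hm2 : m ≠ 2) :
    ∃ α : AC, (aeval α (X^(2^m+1) + X + 1 : Polynomial F2) = 0) ∧
      (minpoly F2 α).natDegree = 3*m := by
  classical
  by_contra hcon
  push_neg at hcon
  set P : Polynomial F2 := X^(2^m+1) + X + 1 with hP
  set Pm : Polynomial AC := P.map (algebraMap F2 AC) with hPm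
  have hPdeg : P.natDegree = 2^m+1 := P_natDegree m
  have hPne : P ≠ 0 := fun h0 => by
    rw [h0, natDegree_zero] at hPdeg; have := Nat.one_le_two_pow (n := m); omega
  have hPmne : Pm ≠ 0 := by
    rw [hPm]; exact Polynomial.map_ne_zero hPne
  set S : Finset AC := Pm.roots.toFinset with hS
  have hSmem : ∀ α : AC, α ∈ S ↔ aeval α P = 0 := by
    intro α
    rw [hS, Multiset.mem_toFinset, mem_roots hPmne, Polynomial.IsRoot, hPm,
      Polynomial.eval_map, ← aeval_def]
  have hcardS : S.card = 2^m+1 := by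
    have hsplit : Splits Pm := IsAlgClosed.splits Pm
    have hnodup : Pm.roots.Nodup := Polynomial.nodup_roots (Separable.map (P_sep m hm))
    rw [hS, Multiset.toFinset_card_of_nodup hnodup, ← hsplit.natDegree_eq_card_roots, hPm, natDegree_map, hPdeg]
  have hE1 : ∀ α ∈ S, α^(2^m) * α = α + 1 := by
    intro α hα
    have h0 := (hSmem α).1 hα
    rw [hP] at h0
    simp only [map_add, map_pow, map_one, aeval_X, aeval_one] at h0
    have h2a : α + α = 0 := CharTwo.add_self_eq_zero α
    have h11 : (1:AC) + 1 = 0 := CharTwo.add_self_eq_zero 1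
    linear_combination h0 - h2a - h11
  have hE1' : ∀ α ∈ S, α^(2^(2*m)) * α^(2^m) = α^(2^m) + 1 := by
    intro α hα
    have h := congrArg (fun z : AC => z^(2^m)) (hE1 α hα)
    simp only [mul_pow] at h
    rw [← pow_mul, add_pow_char_pow, one_pow] at h
    rwa [show (2:ℕ)^m * 2^m = 2^(2*m) by rw [← pow_add, two_mul]] at h
  have hE2 : ∀ α ∈ S, α^(2^(2*m)) * (α+1) = 1 := by
    intro α hα
    calc α^(2^(2*m)) * (α+1) = α^(2^(2*m)) * (α^(2^m) * α) := by rw [hE1 α hα]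
      _ = (α^(2^(2*m)) * α^(2^m)) * α := by ring
      _ = (α^(2^m)+1) * α := by rw [hE1' α hα]
      _ = (α^(2^m) * α) + α := by ring
      _ = (α + 1) + α := by rw [hE1 α hα]
      _ = 1 := by linear_combination CharTwo.add_self_eq_zero α
  have hE3 : ∀ α ∈ S, α^(2^(3*m)) = α := by
    intro α hα
    have hinv : α * (α^(2^m)+1) = 1 := by
      calc α * (α^(2^m)+1) = (α^(2^m) * α) + α := by ring
        _ = (α+1) + α := by rw [hE1 α hα]
        _ = 1 := by linear_combination CharTwo.add_self_eq_zero α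
    have hE2' : α^(2^(3*m)) * (α^(2^m)+1) = 1 := by
      have h := congrArg (fun z : AC => z^(2^m)) (hE2 α hα)
      simp only [mul_pow, one_pow] at h
      rw [← pow_mul, add_pow_char_pow, one_pow] at h
      rwa [show (2:ℕ)^(2*m) * 2^m = 2^(3*m) by rw [← pow_add]; ring_nf] at h
    linear_combination α * hE2' - α^(2^(3*m)) * hinv
  set E := m.primeFactors.erase 3 with hE
  have hcover : S ⊆ (S.filter (fun α => α^(2^m) = α)) ∪
      E.biUnion (fun p => S.filter (fun α => α^(2^(3*m/p)) = α)) := by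
    intro α hα
    have hd3m : (minpoly F2 α).natDegree ∣ 3*m := deg_dvd_of_fix α (by omega) (hE3 α hα)
    have hdne : (minpoly F2 α).natDegree ≠ 3*m := hcon α ((hSmem α).1 hα)
    set d := (minpoly F2 α).natDegree with hd
    obtain ⟨k, hk⟩ := hd3m
    have hk2 : 2 ≤ k := by
      rcases Nat.lt_or_ge k 2 with h | h
      · interval_cases k <;> omega
      · exact h
    set p := k.minFac with hp
    have hpp : p.Prime := Nat.minFac_prime (by omega)
    obtain ⟨l, hl⟩ := Nat.minFac_dvd k
    have hdl : 3*m/p = d * l := by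
      rw [hk, hl, show d * (p*l) = p * (d*l) by ring, Nat.mul_div_cancel_left _ hpp.pos]
    have hfixdl : α^(2^(3*m/p)) = α := by
      rw [hdl]
      exact pow_pow_fix' α (fix_of_deg α) l
    rcases eq_or_ne p 3 with hp3 | hp3
    · apply Finset.mem_union_left
      rw [Finset.mem_filter]
      refine ⟨hα, ?_⟩
      have he : 3*m/p = m := by rw [hp3]; omega
      rwa [he] at hfixdl
    · apply Finset.mem_union_right
      rw [Finset.mem_biUnion]
      have hpm : p ∣ m := by
        have hk3m : k ∣ 3*m := Dvd.intro_left d hk.symm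
        have hp3m : p ∣ 3*m := dvd_trans (Nat.minFac_dvd k) hk3m
        rcases (Nat.Prime.dvd_mul hpp).1 hp3m with h3 | hmm
        · exact absurd ((Nat.prime_dvd_prime_iff_eq hpp (by norm_num)).1 h3) hp3
        · exact hmm
      refine ⟨p, ?_, Finset.mem_filter.2 ⟨hα, hfixdl⟩⟩
      rw [hE]
      exact Finset.mem_erase.2 ⟨hp3, Nat.mem_primeFactors.2 ⟨hpp, hpm, hm.ne'⟩⟩
  have hA : (S.filter (fun α => α^(2^m) = α)).card ≤ 2 := by
    set Q : Polynomial AC := X^2 + X + 1 with hQ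
    have hQdeg : Q.natDegree = 2 := by rw [hQ]; compute_degree!
    have hQne : Q ≠ 0 := fun h0 => by rw [h0, natDegree_zero] at hQdeg; omega
    have hsub : S.filter (fun α => α^(2^m) = α) ⊆ Q.roots.toFinset := by
      intro α hα
      rw [Finset.mem_filter] at hα
      obtain ⟨hαS, hfix⟩ := hα
      have h1 := hE1 α hαS
      rw [hfix] at h1
      rw [Multiset.mem_toFinset, mem_roots hQne]
      simp only [hQ, Polynomial.IsRoot, eval_add, eval_pow, eval_X, eval_one]
      have h2a : α + α = 0 := CharTwo.add_self_eq_zero α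
      have h11 : (1:AC) + 1 = 0 := CharTwo.add_self_eq_zero 1
      linear_combination h1 + h2a + h11
    calc (S.filter _).card ≤ Q.roots.toFinset.card := Finset.card_le_card hsub
      _ ≤ Multiset.card Q.roots := Multiset.toFinset_card_le _
      _ ≤ Q.natDegree := Polynomial.card_roots' _
      _ = 2 := hQdeg
  have hB : ∀ p ∈ E, (S.filter (fun α => α^(2^(3*m/p)) = α)).card ≤ 2^(m/2)+1 := by
    intro p hpE
    rw [hE, Finset.mem_erase, Nat.mem_primeFactors] at hpE
    obtain ⟨hp3, hpp, hpm, _⟩ := hpE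
    have ht : 0 < 3*m/p := Nat.div_pos (le_trans (Nat.le_of_dvd hm hpm) (by omega)) hpp.pos
    apply filter_bound m hm S hE1 hE2 hE3 ht
    intro hgcd
    have hmdvd : m ∣ 3*m/p := by
      have h := Nat.gcd_dvd_right m (3*m/p); rwa [hgcd] at h
    have hpdvd3m : p ∣ 3*m := Dvd.dvd.mul_left hpm 3
    obtain ⟨u, hu⟩ := hmdvd
    have hpu : p * (3*m/p) = 3*m := Nat.mul_div_cancel' hpdvd3m
    have hpmdvd : p * m ∣ 3 * m := by
      refine Dvd.intro u ?_
      rw [← hpu, hu]; ring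
    have hp3' : p ∣ 3 := (Nat.mul_dvd_mul_iff_right hm).1 hpmdvd
    exact hp3 ((Nat.prime_dvd_prime_iff_eq hpp (by norm_num)).1 hp3')
  have hfinal : 2^m + 1 ≤ 2 + E.card * (2^(m/2)+1) := by
    calc 2^m + 1 = S.card := hcardS.symm
      _ ≤ ((S.filter (fun α => α^(2^m) = α)) ∪
            E.biUnion (fun p => S.filter (fun α => α^(2^(3*m/p)) = α))).card :=
          Finset.card_le_card hcover
      _ ≤ (S.filter (fun α => α^(2^m) = α)).card +
            (E.biUnion (fun p => S.filter (fun α => α^(2^(3*m/p)) = α))).card :=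
          Finset.card_union_le _ _
      _ ≤ 2 + E.card * (2^(m/2)+1) := by
          refine Nat.add_le_add hA ?_
          calc (E.biUnion _).card ≤ ∑ p ∈ E, (S.filter (fun α => α^(2^(3*m/p)) = α)).card :=
                Finset.card_biUnion_le
            _ ≤ ∑ _p ∈ E, (2^(m/2)+1) := Finset.sum_le_sum hB
            _ = E.card * (2^(m/2)+1) := by rw [Finset.sum_const, smul_eq_mul]
  rcases lt_or_ge m 7 with hlt | hge
  · interval_cases m <;>
      first
        | exact absurd rfl hm2
        | (rw [hE, Nat.primeFactors_eq_to_filter_divisors_prime] at hfinal;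
           exact absurd hfinal (by decide))
  · have hEcard : E.card ≤ m := by
      calc E.card ≤ m.primeFactors.card := Finset.card_le_card (Finset.erase_subset _ _)
        _ ≤ m.divisors.card := Finset.card_le_card (by
              rw [Nat.primeFactors_eq_to_filter_divisors_prime]
              exact Finset.filter_subset _ _)
        _ ≤ m := card_divisors_le m
    have hkey := key hge
    have hX : 1 ≤ 2^(m/2)+1 := Nat.le_add_left 1 (2^(m/2))
    nlinarith [hfinal, hkey, hEcard, hX]


/-- Let `r = 3m`, `m ≥ 1`, `r ≠ 6`.  Then `Σ_{d ∣ m, gcd(3,d)=1} μ(d)(2^{m/d} − (−1)^{m/d}) > 0`;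
consequently there exists a monic irreducible polynomial `f` of degree `r` over `F₂` fixed by
the order-3 Möbius transformation `x ↦ (x+1)/x`, i.e. with
`Σ_i f_i (x+1)^i x^{r-i} = f(x)`. -/
theorem stmt_11 (r m : ℕ) (hm : 0 < m) (hr : r = 3 * m) (hr6 : r ≠ 6) :
    (0 < ∑ d ∈ m.divisors.filter (fun d => Nat.gcd 3 d = 1),
        (ArithmeticFunction.moebius d : ℤ) * (2 ^ (m / d) - (-1 : ℤ) ^ (m / d))) ∧
    ∃ f : Polynomial (ZMod 2), f.Monic ∧ Irreducible f ∧ f.natDegree = r ∧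
      (∑ i ∈ Finset.range (r + 1), C (f.coeff i) * (X + 1) ^ i * X ^ (r - i)) = f := by
  have hm2 : m ≠ 2 := fun h => hr6 (by omega)
  refine ⟨partA m hm hm2, ?_⟩
  obtain ⟨α, hαroot, hαdeg⟩ := partB m hm hm2
  have hint : IsIntegral F2 α := isIntegralAC α
  set f : Polynomial F2 := minpoly F2 α with hf
  have hmonic : f.Monic := minpoly.monic hint
  have hirr : Irreducible f := minpoly.irreducible hint
  have hdeg : f.natDegree = r := by rw [hf, hαdeg, hr]
  have hr3 : 3 ≤ r := by omega
  refine ⟨f, hmonic, hirr, hdeg, ?_⟩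
  set g : Polynomial F2 := ∑ i ∈ Finset.range (r+1), C (f.coeff i) * (X+1)^i * X^(r-i) with hg
  have hX1 : (X + 1 : Polynomial F2) = X + C 1 := by rw [map_one]
  -- f.eval 1 = 1
  have hfe1 : f.eval 1 = 1 := by
    have hne : f.eval 1 ≠ 0 := by
      intro h0
      have hdvd : (X - C 1) ∣ f := dvd_iff_isRoot.2 h0
      obtain ⟨u, hu⟩ := hdvd
      rcases hirr.isUnit_or_isUnit hu with h | h
      · exact not_isUnit_X_sub_C 1 h
      · have hu0 : u ≠ 0 := fun h0' => by simp [h0'] at hu; exact hirr.ne_zero hu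
        have hud : u.natDegree = 0 := natDegree_eq_zero_of_isUnit h
        have : f.natDegree = 1 := by
          rw [hu, natDegree_mul (X_sub_C_ne_zero 1) hu0, natDegree_X_sub_C, hud]
        omega
    have hall : ∀ x : F2, x ≠ 0 → x = 1 := by decide
    exact hall _ hne
  -- coefficient r of g
  have hgcoeff : g.coeff r = 1 := by
    rw [hg, finset_sum_coeff]
    have hterm : ∀ i ∈ Finset.range (r+1),
        (C (f.coeff i) * (X+1)^i * X^(r-i)).coeff r = f.coeff i := by
      intro i hi
      rw [Finset.mem_range] at hi
      rw [coeff_mul_X_pow', if_pos (Nat.sub_le r i), show r - (r - i) = i by omega, coeff_C_mul]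
      have hmon : ((X + 1 : Polynomial F2)^i).Monic := by
        rw [hX1]; exact (monic_X_add_C 1).pow i
      have hdeg' : ((X + 1 : Polynomial F2)^i).natDegree = i := by
        rw [hX1, natDegree_pow, natDegree_X_add_C, mul_one]
      have := hmon.coeff_natDegree
      rw [hdeg'] at this
      rw [this, mul_one]
    rw [Finset.sum_congr rfl hterm]
    have := Polynomial.eval_eq_sum_range' (show f.natDegree < r + 1 by omega) (1 : F2)
    simp only [one_pow, mul_one] at this
    rw [← this, hfe1]
  -- natDegree g ≤ r
  have hgdegle : g.natDegree ≤ r := by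
    rw [hg]
    apply natDegree_sum_le_of_forall_le
    intro i hi
    rw [Finset.mem_range] at hi
    calc (C (f.coeff i) * (X+1)^i * X^(r-i)).natDegree
        ≤ (C (f.coeff i) * (X+1)^i).natDegree + (X^(r-i) : Polynomial F2).natDegree :=
          natDegree_mul_le
      _ ≤ ((C (f.coeff i) : Polynomial F2).natDegree + ((X+1 : Polynomial F2)^i).natDegree) + (r-i) := by
          rw [natDegree_X_pow]
          exact Nat.add_le_add_right natDegree_mul_le _
      _ ≤ (0 + i) + (r - i) := by
          apply Nat.add_le_add_right
          apply Nat.add_le_add (le_of_eq (natDegree_C _))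
          rw [hX1, natDegree_pow, natDegree_X_add_C, mul_one]
      _ ≤ r := by omega
  have hgdeg : g.natDegree = r :=
    natDegree_eq_of_le_of_coeff_ne_zero hgdegle (by rw [hgcoeff]; exact one_ne_zero)
  have hgmonic : g.Monic := by
    rw [Polynomial.Monic, Polynomial.leadingCoeff, hgdeg, hgcoeff]
  -- α+1 = α^(2^m) * α
  have hαeq : α + 1 = α^(2^m) * α := by
    simp only [map_add, map_pow, map_one, aeval_X, aeval_one] at hαroot
    have h2a : α + α = 0 := CharTwo.add_self_eq_zero α
    have h11 : (1:AC) + 1 = 0 := CharTwo.add_self_eq_zero 1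
    linear_combination -hαroot + h2a + h11
  -- aeval α g = 0
  have haeval : aeval α g = 0 := by
    rw [hg, map_sum]
    have hterm : ∀ i ∈ Finset.range (r+1),
        aeval α (C (f.coeff i) * (X+1)^i * X^(r-i)) =
          (algebraMap F2 AC (f.coeff i) * (α^(2^m))^i) * α^r := by
      intro i hi
      rw [Finset.mem_range] at hi
      rw [map_mul, map_mul, aeval_C, map_pow, map_pow, map_add, aeval_X, map_one]
      rw [hαeq, mul_pow, mul_assoc, mul_assoc, ← pow_add,
        show i + (r - i) = r by omega, ← mul_assoc]
    rw [Finset.sum_congr rfl hterm, ← Finset.sum_mul]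
    have hsum : ∑ i ∈ Finset.range (r+1), algebraMap F2 AC (f.coeff i) * (α^(2^m))^i
        = aeval (α^(2^m)) f := by
      rw [Polynomial.aeval_eq_sum_range' (show f.natDegree < r + 1 by omega)]
      exact Finset.sum_congr rfl (fun i _ => (Algebra.smul_def _ _).symm)
    rw [hsum, frob_aeval_iter f α m, hf, minpoly.aeval, zero_pow (by positivity), zero_mul]
  have hfdvdg : f ∣ g := by rw [hf]; exact minpoly.dvd F2 α haeval
  -- conclude g = f
  obtain ⟨q, hq⟩ := hfdvdg
  have hg0 : g ≠ 0 := hgmonic.ne_zero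
  have hq0 : q ≠ 0 := fun h0 => hg0 (by rw [hq, h0, mul_zero])
  have hqdeg : q.natDegree = 0 := by
    have := natDegree_mul (hmonic.ne_zero) hq0
    rw [← hq, hgdeg, hdeg] at this
    omega
  have hqlc : q.leadingCoeff = 1 := by
    have hlc : g.leadingCoeff = f.leadingCoeff * q.leadingCoeff := by rw [hq, leadingCoeff_mul]
    rw [hgmonic.leadingCoeff, hmonic.leadingCoeff, one_mul] at hlc
    exact hlc.symm
  have hq1 : q = 1 := eq_one_of_monic_natDegree_zero hqlc hqdeg
  rw [hq1, mul_one] at hq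
  exact hq
end

section
/- Let n ≥ 5 be an odd prime, q = 2^n, r = 3r_0 with gcd(r, n) = 1 and r_0 ≠ 2. Then the polynomial F(x) = gcd(x^{q^{r_0}+1} + x + 1, x^{2^r} + x) in F_q[x] has no irreducible factor of degree 1 over F_q; moreover F has an irreducible factor of degree 2 over F_q if and only if r_0 is even, and in that case x^2 + x + 1 is the unique monic irreducible factor of degree 2. -/
open Polynomial

private lemma pow2_fix_mul {M : Type*} [Monoid M] {α : M} {a : ℕ} (h : α ^ 2 ^ a = α) :
    ∀ k, α ^ 2 ^ (a * k) = α
  | 0 => by simp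
  | k + 1 => by
    rw [Nat.mul_succ, pow_add, pow_mul, pow2_fix_mul h k, h]

private lemma pow2_fix_gcd {M : Type*} [Monoid M] {α : M} {g a b : ℕ} (hb : 1 < b)
    (hab : Nat.Coprime a b) (h1 : α ^ 2 ^ (g * a) = α) (h2 : α ^ 2 ^ (g * b) = α) :
    α ^ 2 ^ g = α := by
  have ht : 0 < Nat.totient b := Nat.totient_pos.mpr (by omega)
  set x := a ^ (Nat.totient b - 1) with hx
  have hax : a * x = a ^ Nat.totient b := by
    rw [hx, ← pow_succ']
    congr 1
    omega
  have hmod : (a * x) % b = 1 := by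
    have hmq := Nat.ModEq.pow_totient hab
    unfold Nat.ModEq at hmq
    rw [hax]
    have h1b : 1 % b = 1 := Nat.mod_eq_of_lt hb
    omega
  have key : a * x = b * ((a * x) / b) + 1 := by
    conv_lhs => rw [← Nat.div_add_mod (a * x) b]
    rw [hmod]
  have e1 : α ^ 2 ^ (g * (a * x)) = α := by
    rw [← mul_assoc]; exact pow2_fix_mul h1 x
  have e2 : α ^ 2 ^ (g * (a * x)) = α ^ 2 ^ g := by
    rw [key, mul_add, mul_one, ← mul_assoc, pow_add, pow_mul, pow2_fix_mul h2 _]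
  rw [← e2, e1]

private lemma three_dvd_pow_sub_one {m : ℕ} (hm : Even m) : 2 ^ m = 3 * ((2 ^ m - 1) / 3) + 1 := by
  obtain ⟨k, rfl⟩ := hm
  have h4 : (2 : ℕ) ^ (k + k) = 4 ^ k := by
    rw [pow_add, ← mul_pow]
    norm_num
  have hd := Nat.sub_dvd_pow_sub_pow 4 1 k
  norm_num at hd
  have h1 : 1 ≤ (4:ℕ) ^ k := Nat.one_le_pow _ _ (by norm_num)
  obtain ⟨t, ht⟩ := hd
  rw [h4]
  generalize hg : (4:ℕ) ^ k = A at ht h1 ⊢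
  omega

private lemma three_not_dvd_pow_sub_one {m : ℕ} (hm : Odd m) : ¬ 3 ∣ 2 ^ m - 1 := by
  obtain ⟨k, rfl⟩ := hm
  have h := three_dvd_pow_sub_one (even_two_mul k)
  set t := (2 ^ (2 * k) - 1) / 3 with ht
  have hpow : (2:ℕ) ^ (2 * k + 1) = 2 * 2 ^ (2 * k) := by
    rw [pow_succ]; ring
  rw [hpow, h]
  intro hdvd
  omega

private lemma two_eq_zero_of_card {F : Type} [Field F] [Fintype F] {n : ℕ} (hn : n ≠ 0)
    (hF : Fintype.card F = 2 ^ n) : (2 : F) = 0 := by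
  have h := FiniteField.cast_card_eq_zero F
  rw [hF] at h
  push_cast at h
  exact pow_eq_zero_iff hn |>.mp h

private lemma two_eq_zero_adjoin {F : Type} [Field F] {p : Polynomial F}
    (h2F : (2 : F) = 0) : (2 : AdjoinRoot p) = 0 := by
  have : (2 : AdjoinRoot p) = algebraMap F (AdjoinRoot p) 2 := (map_ofNat _ 2).symm
  rw [this, h2F, map_zero]

private lemma root_pow_fix {F : Type} [Field F] [Fintype F] [DecidableEq F]
    {p : Polynomial F} (hp : Irreducible p) {n r g a b : ℕ}
    (hF : Fintype.card F = 2 ^ n)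
    (hdvd : p ∣ X ^ 2 ^ r + X) (h2F : (2 : F) = 0)
    (hb : 1 < b) (hab : Nat.Coprime a b) (hga : g * a = r)
    (hgb : g * b = n * p.natDegree) :
    AdjoinRoot.root p ^ 2 ^ g = AdjoinRoot.root p := by
  haveI := Fact.mk hp
  set α := AdjoinRoot.root p with hα
  have hp0 : p ≠ 0 := hp.ne_zero
  let pb := AdjoinRoot.powerBasis hp0
  haveI : Module.Finite F (AdjoinRoot p) := Module.Finite.of_basis pb.basis
  haveI : Finite (AdjoinRoot p) := Module.finite_of_finite F
  haveI : Fintype (AdjoinRoot p) := Fintype.ofFinite _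
  have hcardK : Fintype.card (AdjoinRoot p) = 2 ^ (n * p.natDegree) := by
    rw [Module.card_fintype pb.basis, hF, Fintype.card_fin, ← pow_mul]
    congr 1
  have h2K : (2 : AdjoinRoot p) = 0 := two_eq_zero_adjoin h2F
  have hneg : ∀ x : AdjoinRoot p, -x = x := fun x =>
    neg_eq_of_add_eq_zero_left (by rw [← two_mul, h2K, zero_mul])
  have hfix_r : α ^ 2 ^ r = α := by
    have hm : AdjoinRoot.mk p (X ^ 2 ^ r + X) = 0 := AdjoinRoot.mk_eq_zero.mpr hdvd
    rw [map_add, map_pow, AdjoinRoot.mk_X] at hm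
    have h := eq_neg_of_add_eq_zero_left hm
    rw [hneg α] at h
    exact h
  have hfix_card : α ^ 2 ^ (n * p.natDegree) = α := by
    rw [← hcardK]; exact FiniteField.pow_card α
  exact pow2_fix_gcd hb hab (by rw [hga]; exact hfix_r) (by rw [hgb]; exact hfix_card)

private lemma no_trivial_root {F : Type} [Field F] [DecidableEq F]
    {p : Polynomial F} (hp : Irreducible p) {e : ℕ} (he : e ≠ 0)
    (hdvd : p ∣ X ^ e + X + 1) (h2F : (2 : F) = 0)
    (h01 : AdjoinRoot.root p = 0 ∨ AdjoinRoot.root p = 1) : False := by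
  haveI := Fact.mk hp
  have h2K : (2 : AdjoinRoot p) = 0 := two_eq_zero_adjoin h2F
  have hm : AdjoinRoot.mk p (X ^ e + X + 1) = 0 := AdjoinRoot.mk_eq_zero.mpr hdvd
  rw [map_add, map_add, map_pow, AdjoinRoot.mk_X, map_one] at hm
  rcases h01 with h | h
  · rw [h, zero_pow he, add_zero, zero_add] at hm
    exact one_ne_zero hm
  · rw [h, one_pow] at hm
    have h11 : (1 : AdjoinRoot p) + 1 = 2 := by norm_num
    rw [h11, h2K, zero_add] at hm
    exact one_ne_zero hm

/-- Let `n ≥ 5` be an odd prime, `q = 2^n`, `r = 3r₀` with `gcd(r,n) = 1` and `r₀ ≠ 2`.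
Then `F(x) = gcd(x^{q^{r₀}+1} + x + 1, x^{2^r} + x)` over `F_q` has no irreducible factor of
degree 1; it has an irreducible factor of degree 2 iff `r₀` is even, and in that case
`x² + x + 1` is the unique monic irreducible factor of degree 2. -/
theorem stmt_13 (n r r0 : ℕ) (hn : n.Prime) (hn5 : 5 ≤ n) (hodd : Odd n)
    (hr0 : 0 < r0) (hr02 : r0 ≠ 2) (hr : r = 3 * r0) (hrn : Nat.gcd r n = 1)
    (F : Type) [Field F] [Fintype F] [DecidableEq F] (hF : Fintype.card F = 2 ^ n) :
    (∀ p : Polynomial F, Irreducible p →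
      p ∣ EuclideanDomain.gcd ((X : Polynomial F) ^ ((2 ^ n) ^ r0 + 1) + X + 1)
            (X ^ 2 ^ r + X) →
      p.natDegree ≠ 1) ∧
    ((∃ p : Polynomial F, Irreducible p ∧ p.natDegree = 2 ∧
        p ∣ EuclideanDomain.gcd ((X : Polynomial F) ^ ((2 ^ n) ^ r0 + 1) + X + 1)
              (X ^ 2 ^ r + X)) ↔ Even r0) ∧
    (Even r0 → ∀ p : Polynomial F, p.Monic → Irreducible p → p.natDegree = 2 →
      p ∣ EuclideanDomain.gcd ((X : Polynomial F) ^ ((2 ^ n) ^ r0 + 1) + X + 1)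
            (X ^ 2 ^ r + X) →
      p = X ^ 2 + X + 1) := by
  have hn0 : n ≠ 0 := by omega
  have h2F : (2 : F) = 0 := two_eq_zero_of_card hn0 hF
  have he0 : (2 ^ n) ^ r0 + 1 ≠ 0 := Nat.succ_ne_zero _
  have h2P : (2 : Polynomial F) = 0 := by
    have : (2 : Polynomial F) = C (2 : F) := (map_ofNat C 2).symm
    rw [this, h2F, map_zero]
  have hnegP : ∀ v : Polynomial F, -v = v := fun v =>
    neg_eq_of_add_eq_zero_left (by rw [← two_mul, h2P, zero_mul])
  set q2 : Polynomial F := X ^ 2 + X + 1 with hq2def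
  have hq2deg : q2.natDegree = 2 := by
    rw [hq2def]; compute_degree!
  have hq2mon : q2.Monic := by
    have hq : q2 = X ^ 2 + (X + 1) := by rw [hq2def]; ring
    rw [hq]
    apply monic_X_pow_add
    have hdeg1 : (X + 1 : Polynomial F).degree = 1 := by
      simpa using degree_X_add_C (1 : F)
    rw [hdeg1]
    decide
  have hq2X3 : q2 ∣ X ^ 3 - 1 := ⟨X - 1, by rw [hq2def]; ring⟩
  -- no root of q2 in F
  have hnoroot : ∀ α : F, α ^ 2 + α + 1 ≠ 0 := by
    intro α h
    have hα0 : α ≠ 0 := by rintro rfl; simp at h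
    have h3 : α ^ 3 = 1 := by linear_combination (α - 1) * h
    have ho3 : orderOf α ∣ 3 := orderOf_dvd_of_pow_eq_one h3
    have hoc : orderOf α ∣ 2 ^ n - 1 := orderOf_dvd_of_pow_eq_one
      (by rw [← hF]; exact FiniteField.pow_card_sub_one_eq_one α hα0)
    have hdv : orderOf α ∣ Nat.gcd 3 (2 ^ n - 1) := Nat.dvd_gcd ho3 hoc
    have hg : Nat.gcd 3 (2 ^ n - 1) = 1 :=
      (Nat.Prime.coprime_iff_not_dvd Nat.prime_three).mpr (three_not_dvd_pow_sub_one hodd)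
    rw [hg, Nat.dvd_one] at hdv
    have hα1 : α = 1 := orderOf_eq_one_iff.mp hdv
    rw [hα1] at h
    have : (1 : F) = 0 := by linear_combination h - h2F
    exact one_ne_zero this
  -- q2 irreducible
  have hq2irr : Irreducible q2 := by
    by_contra hnot
    obtain ⟨b, c, hbc, hsum⟩ := (hq2mon.not_irreducible_iff_exists_add_mul_eq_coeff hq2deg).mp hnot
    have hc0 : q2.coeff 0 = 1 := by rw [hq2def]; simp
    have hc1 : q2.coeff 1 = 1 := by rw [hq2def]; simp [coeff_one]
    rw [hc0] at hbc
    rw [hc1] at hsum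
    exact hnoroot b (by linear_combination -b * hsum + hbc + b * h2F)
  -- part 1
  refine ⟨?_, ?_, ?_⟩
  · intro p hp hdvd hdeg
    have hd1 : p ∣ X ^ ((2 ^ n) ^ r0 + 1) + X + 1 :=
      hdvd.trans (EuclideanDomain.gcd_dvd_left _ _)
    have hd2 : p ∣ X ^ 2 ^ r + X := hdvd.trans (EuclideanDomain.gcd_dvd_right _ _)
    haveI := Fact.mk hp
    have hfix := root_pow_fix hp hF hd2 h2F (g := 1) (a := r) (b := n)
      (by omega) hrn (one_mul r) (by rw [hdeg]; ring)
    set α := AdjoinRoot.root p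
    have hsq : α ^ 2 = α := by
      have : (2:ℕ) ^ 1 = 2 := by norm_num
      rwa [this] at hfix
    have hfac : α * (α - 1) = 0 := by
      have : α * (α - 1) = α ^ 2 - α := by ring
      rw [this, hsq, sub_self]
    rcases mul_eq_zero.mp hfac with h | h
    · exact no_trivial_root hp he0 hd1 h2F (Or.inl h)
    · exact no_trivial_root hp he0 hd1 h2F (Or.inr (sub_eq_zero.mp h))
  · constructor
    · rintro ⟨p, hp, hdeg, hdvd⟩
      by_contra hnotev
      have hr0odd : Odd r0 := Nat.not_even_iff_odd.mp hnotev
      have hrodd : Odd r := by rw [hr]; exact Odd.mul (by decide) hr0odd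
      have c2 : Nat.Coprime r 2 := Nat.coprime_two_right.mpr hrodd
      have capp : Nat.Coprime r (2 * n) := Nat.Coprime.mul_right c2 hrn
      have hd1 : p ∣ X ^ ((2 ^ n) ^ r0 + 1) + X + 1 :=
        hdvd.trans (EuclideanDomain.gcd_dvd_left _ _)
      have hd2 : p ∣ X ^ 2 ^ r + X := hdvd.trans (EuclideanDomain.gcd_dvd_right _ _)
      haveI := Fact.mk hp
      have hfix := root_pow_fix hp hF hd2 h2F (g := 1) (a := r) (b := 2 * n)
        (by omega) capp (one_mul r) (by rw [hdeg]; ring)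
      set α := AdjoinRoot.root p
      have hsq : α ^ 2 = α := by
        have : (2:ℕ) ^ 1 = 2 := by norm_num
        rwa [this] at hfix
      have hfac : α * (α - 1) = 0 := by
        have : α * (α - 1) = α ^ 2 - α := by ring
        rw [this, hsq, sub_self]
      rcases mul_eq_zero.mp hfac with h | h
      · exact no_trivial_root hp he0 hd1 h2F (Or.inl h)
      · exact no_trivial_root hp he0 hd1 h2F (Or.inr (sub_eq_zero.mp h))
    · intro heven
      -- q2 divides both polynomials
      have hrev : Even r := by rw [hr]; exact heven.mul_left 3
      have h2r := three_dvd_pow_sub_one hrev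
      set m := (2 ^ r - 1) / 3 with hm
      have div2 : q2 ∣ X ^ 2 ^ r + X := by
        have hdd : q2 ∣ ((X : Polynomial F) ^ 3) ^ m - 1 := by
          refine hq2X3.trans ?_
          simpa using sub_dvd_pow_sub_pow ((X : Polynomial F) ^ 3) 1 m
        have hfac : (X : Polynomial F) ^ (3 * m + 1) - X = (((X : Polynomial F) ^ 3) ^ m - 1) * X := by
          rw [pow_add, pow_mul, pow_one]; ring
        have : q2 ∣ (X : Polynomial F) ^ (3 * m + 1) - X := hfac ▸ hdd.mul_right X
        rw [h2r]
        rwa [sub_eq_add_neg, hnegP X] at this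
      have hnr0ev : Even (n * r0) := heven.mul_left n
      have hq := three_dvd_pow_sub_one hnr0ev
      set m' := (2 ^ (n * r0) - 1) / 3 with hm'
      have hqe : (2 ^ n) ^ r0 = 2 ^ (n * r0) := (pow_mul 2 n r0).symm
      have div1 : q2 ∣ X ^ ((2 ^ n) ^ r0 + 1) + X + 1 := by
        have hdd : q2 ∣ ((X : Polynomial F) ^ 3) ^ m' - 1 := by
          refine hq2X3.trans ?_
          simpa using sub_dvd_pow_sub_pow ((X : Polynomial F) ^ 3) 1 m'
        have hfac : (X : Polynomial F) ^ (3 * m' + 2) + X + 1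
            = (((X : Polynomial F) ^ 3) ^ m' - 1) * X ^ 2 + q2 := by
          rw [hq2def, pow_add, pow_mul]; ring
        have he2 : (2 ^ n) ^ r0 + 1 = 3 * m' + 2 := by rw [hqe]; omega
        rw [he2, hfac]
        exact dvd_add (hdd.mul_right _) dvd_rfl
      exact ⟨q2, hq2irr, hq2deg, EuclideanDomain.dvd_gcd div1 div2⟩
  · -- uniqueness
    intro heven p hmon hp hdeg hdvd
    obtain ⟨k, hk⟩ := heven
    have hd1 : p ∣ X ^ ((2 ^ n) ^ r0 + 1) + X + 1 :=
      hdvd.trans (EuclideanDomain.gcd_dvd_left _ _)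
    have hd2 : p ∣ X ^ 2 ^ r + X := hdvd.trans (EuclideanDomain.gcd_dvd_right _ _)
    have hdvd3k : 3 * k ∣ r := ⟨2, by omega⟩
    have cop : Nat.Coprime (3 * k) n := Nat.Coprime.coprime_dvd_left hdvd3k hrn
    haveI := Fact.mk hp
    have hfix := root_pow_fix hp hF hd2 h2F (g := 2) (a := 3 * k) (b := n)
      (by omega) cop (by omega) (by rw [hdeg]; ring)
    set α := AdjoinRoot.root p with hα
    have h4 : α ^ 4 = α := by
      have : (2:ℕ) ^ 2 = 4 := by norm_num
      rwa [this] at hfix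
    have hfac : α * (α - 1) * (α ^ 2 + α + 1) = 0 := by
      have : α * (α - 1) * (α ^ 2 + α + 1) = α ^ 4 - α := by ring
      rw [this, h4, sub_self]
    rcases mul_eq_zero.mp hfac with h | h
    · rcases mul_eq_zero.mp h with h' | h'
      · exact absurd (no_trivial_root hp he0 hd1 h2F (Or.inl h')) not_false
      · exact absurd (no_trivial_root hp he0 hd1 h2F (Or.inr (sub_eq_zero.mp h'))) not_false
    · -- α² + α + 1 = 0, so p ∣ q2
      have hmk : AdjoinRoot.mk p q2 = 0 := by
        rw [hq2def, map_add, map_add, map_pow, AdjoinRoot.mk_X, map_one]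
        exact h
      have hpq : p ∣ q2 := AdjoinRoot.mk_eq_zero.mp hmk
      obtain ⟨c, hc⟩ := hpq
      have hq2ne : q2 ≠ 0 := hq2mon.ne_zero
      have hc0 : c ≠ 0 := by rintro rfl; rw [mul_zero] at hc; exact hq2ne hc
      have hp0 : p ≠ 0 := hp.ne_zero
      have hdegc : c.natDegree = 0 := by
        have := hq2deg
        rw [hc, natDegree_mul hp0 hc0, hdeg] at this
        omega
      have hcC : c = C (c.coeff 0) := eq_C_of_natDegree_eq_zero hdegc
      have hlead := congrArg leadingCoeff hc
      rw [hq2mon.leadingCoeff, leadingCoeff_mul, hmon.leadingCoeff, one_mul] at hlead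
      have hlc : c.leadingCoeff = c.coeff 0 := by rw [Polynomial.leadingCoeff, hdegc]
      have hc1 : c = 1 := by
        rw [hcC, ← hlc, ← hlead, map_one]
      rw [hc1, mul_one] at hc
      rw [← hc, hq2def]
end

section
/- Let n ≥ 5 be an odd prime, q = 2^n, r = 3r_0 with gcd(r, n) = 1, r_0 ≠ 2. Suppose f ∈ F_2[x] is monic irreducible of degree r with root α satisfying α^{q^{r_0}+1} + α + 1 = 0 and α^{2^r} = α. Then over F_{2^r}, gcd(x^{q^{r_0}+1} + x + 1, x^{2^r} + x) = (x − α)·Π_{γ ∈ F_{2^{r_0}}} (x − ((γ^2+γ+1)/(α+γ) + γ + 1)); in particular this gcd has degree 2^{r_0} + 1. -/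
open Polynomial

private lemma frob_inj {K : Type} [Field K] [CharP K 2] (b : ℕ) {x y : K}
    (h : x ^ 2 ^ b = y ^ 2 ^ b) : x = y := by
  have h2 : (x - y) ^ 2 ^ b = 0 := by rw [sub_pow_char_pow, h, sub_self]
  have h3 := pow_eq_zero_iff (pow_ne_zero b two_ne_zero) |>.1 h2
  exact sub_eq_zero.1 h3

private lemma fix_mul {K : Type} [Monoid K] {x : K} {a : ℕ} (h : x ^ 2 ^ a = x) (k : ℕ) :
    x ^ 2 ^ (a * k) = x := by
  induction k with
  | zero => simp
  | succ k ih => rw [Nat.mul_succ, pow_add, pow_mul, ih, h]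

private lemma fix_gcd {K : Type} [Field K] [CharP K 2] {x : K} (a b : ℕ)
    (ha : x ^ 2 ^ a = x) (hb : x ^ 2 ^ b = x) : x ^ 2 ^ Nat.gcd a b = x := by
  induction a, b using Nat.gcd.induction with
  | H0 b => simpa using hb
  | H1 a b hpos IH =>
    rw [Nat.gcd_rec a b]
    refine IH ?_ ha
    have hq : x ^ 2 ^ (a * (b / a)) = x := fix_mul ha _
    have hb' : (x ^ 2 ^ (b % a)) ^ 2 ^ (a * (b / a)) = x := by
      rw [← pow_mul, ← pow_add, Nat.mod_add_div]
      exact hb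
    apply frob_inj (a * (b / a))
    rw [hb', hq]

private lemma beta_identity {K : Type} [Field K] (h2 : (2 : K) = 0) (a g : K) (ha : a ≠ 0)
    (hag : a + g ≠ 0) (htg : (a + 1) / a + g ≠ 0) :
    ((g ^ 2 + g + 1) / (a + g) + g + 1) * ((g ^ 2 + g + 1) / ((a + 1) / a + g) + g + 1)
      = ((g ^ 2 + g + 1) / (a + g) + g + 1) + 1 := by
  have htg' : a + 1 + g * a ≠ 0 := by
    intro h; apply htg
    field_simp
    linear_combination h
  field_simp
  linear_combination (2*a*g + a^2*g + g^2 + 4*a*g^2 + 2*a^2*g^2 + g^3 + 4*a*g^3 + a^2*g^3 + 2*a*g^4) * h2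
private lemma taus_sum {K : Type} [Field K] (h2 : (2 : K) = 0) (a c : K) (ha : a ≠ 0)
    (hc : c ≠ 0) (hac : a + c ≠ 0) :
    (a + 1) / a + (c + 1) / c = (a + c) / (a * c) := by
  field_simp
  linear_combination (a*c) * h2
private lemma gamma_fix_identity {K : Type} [Field K] (h2 : (2 : K) = 0) (a c : K) (ha : a ≠ 0)
    (hc : c ≠ 0) (hac : a + c ≠ 0) :
    ((a + 1) / a * ((c + 1) / c) + (a + 1) / a + 1) / ((a + 1) / a + (c + 1) / c)
      = (a * c + a + 1) / (a + c) := by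
  rw [taus_sum h2 a c ha hc hac]
  field_simp
  linear_combination (a*c + c) * h2
private lemma beta_eq_c {K : Type} [Field K] (h2 : (2 : K) = 0) (a c g : K)
    (hag : a + g ≠ 0) (h : g * (a + c) = a * c + a + 1) :
    (g ^ 2 + g + 1) / (a + g) + g + 1 = c := by
  field_simp
  linear_combination h + (1 + g + g^2 + (-1)*c*g + a) * h2
private lemma beta_ne_a {K : Type} [Field K] (h2 : (2 : K) = 0) (a g : K)
    (hag : a + g ≠ 0) (hA : a ^ 2 + a + 1 ≠ 0) :
    (g ^ 2 + g + 1) / (a + g) + g + 1 ≠ a := by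
  intro h
  apply hA
  field_simp at h
  linear_combination h + ((-1)*g + (-1)*g^2 + a^2) * h2
private lemma key_I {K : Type} [Field K] (h2 : (2 : K) = 0) (a g : K) (hag : a + g ≠ 0) :
    g * (a + ((g ^ 2 + g + 1) / (a + g) + g + 1))
      = a * ((g ^ 2 + g + 1) / (a + g) + g + 1) + a + 1 := by
  field_simp
  linear_combination (g^2 + g^3 + (-1)*a + (-1)*a*g + (-1)*a^2) * h2
/-- Let `n ≥ 5` be an odd prime, `q = 2^n`, `r = 3r₀` with `gcd(r,n) = 1`, `r₀ ≠ 2`.  If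
`f ∈ F₂[x]` is monic irreducible of degree `r` with root `α ∈ F_{2^r}` satisfying
`α^{q^{r₀}+1} + α + 1 = 0` and `α^{2^r} = α`, then over `F_{2^r}` we have
`gcd(x^{q^{r₀}+1}+x+1, x^{2^r}+x) = (x−α)·∏_{γ ∈ F_{2^{r₀}}}(x − ((γ²+γ+1)/(α+γ)+γ+1))`;
in particular this gcd has degree `2^{r₀} + 1`. -/
theorem stmt_14 (n r r0 : ℕ) (hn : n.Prime) (hn5 : 5 ≤ n) (hodd : Odd n)
    (hr0 : 0 < r0) (hr02 : r0 ≠ 2) (hr : r = 3 * r0) (hrn : Nat.gcd r n = 1)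
    (K : Type) [Field K] [Fintype K] [Algebra (ZMod 2) K] [DecidableEq K]
    (hK : Fintype.card K = 2 ^ r)
    (f : Polynomial (ZMod 2)) (hm : f.Monic) (hi : Irreducible f) (hd : f.natDegree = r)
    (α : K) (hroot : Polynomial.aeval α f = 0)
    (hα : α ^ ((2 ^ n) ^ r0 + 1) + α + 1 = 0) (hfix : α ^ 2 ^ r = α) :
    Associated
      (EuclideanDomain.gcd ((X : Polynomial K) ^ ((2 ^ n) ^ r0 + 1) + X + 1)
        (X ^ 2 ^ r + X))
      ((X - C α) *
        ∏ γ ∈ Finset.univ.filter (fun γ : K => γ ^ 2 ^ r0 = γ),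
          (X - C ((γ ^ 2 + γ + 1) / (α + γ) + γ + 1))) ∧
    (EuclideanDomain.gcd ((X : Polynomial K) ^ ((2 ^ n) ^ r0 + 1) + X + 1)
        (X ^ 2 ^ r + X)).natDegree = 2 ^ r0 + 1 := by
  classical
  haveI hch : CharP K 2 := charP_of_injective_algebraMap (algebraMap (ZMod 2) K).injective 2
  have h2K : (2 : K) = 0 := CharTwo.two_eq_zero
  have hE : (2 ^ n) ^ r0 = 2 ^ (n * r0) := (pow_mul 2 n r0).symm
  have hexp : ∀ x : K, x ^ ((2 ^ n) ^ r0 + 1) = x ^ 2 ^ (n * r0) * x := by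
    intro x; rw [pow_succ, hE]
  -- additivity of frobenius power
  have τadd : ∀ x y : K, (x + y) ^ 2 ^ (n * r0) = x ^ 2 ^ (n * r0) + y ^ 2 ^ (n * r0) :=
    fun x y => add_pow_char_pow x y 2 (n * r0)
  have hfixall : ∀ x : K, x ^ 2 ^ r = x := fun x => by rw [← hK]; exact FiniteField.pow_card x
  have hfix_to : ∀ {γ : K}, γ ^ 2 ^ r0 = γ → γ ^ 2 ^ (n * r0) = γ := by
    intro γ h; rw [mul_comm]; exact fix_mul h n
  have hn3 : Nat.gcd n 3 = 1 := by
    have h3 : Nat.Coprime 3 n := Nat.Coprime.coprime_dvd_left ⟨r0, hr⟩ hrn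
    exact h3.symm
  have hgcd : Nat.gcd (n * r0) r = r0 := by
    rw [hr, mul_comm 3 r0, mul_comm n r0, Nat.gcd_mul_left, hn3, mul_one]
  have hfix_iff : ∀ {γ : K}, γ ^ 2 ^ (n * r0) = γ ↔ γ ^ 2 ^ r0 = γ := by
    intro γ
    constructor
    · intro h
      have h5 := fix_gcd (n * r0) r h (hfixall γ)
      rwa [hgcd] at h5
    · exact hfix_to
  have hα0 : α ≠ 0 := by
    rintro rfl
    rw [zero_pow (by positivity), zero_add, zero_add] at hα
    exact one_ne_zero hα
  have hταα : α ^ 2 ^ (n * r0) * α = α + 1 := by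
    have h := hα
    rw [hexp α] at h
    linear_combination h + (-α - 1) * h2K
  -- minimal polynomial argument
  have hminpoly : minpoly (ZMod 2) α = f := (minpoly.eq_of_irreducible_of_monic hi hroot hm).symm
  have hA : α ^ 2 + α + 1 ≠ 0 := by
    intro h
    have hev : (Polynomial.aeval α) ((X : (ZMod 2)[X]) ^ 2 + X + 1) = 0 := by
      simpa using h
    have hdvdf : f ∣ (X : (ZMod 2)[X]) ^ 2 + X + 1 := hminpoly ▸ minpoly.dvd (ZMod 2) α hev
    have hne : ((X : (ZMod 2)[X]) ^ 2 + X + 1) ≠ 0 := by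
      intro h0
      have := congrArg (fun p => Polynomial.eval 0 p) h0
      simp at this
    have hle := Polynomial.natDegree_le_of_dvd hdvdf hne
    have h22 : ((X : (ZMod 2)[X]) ^ 2 + X + 1).natDegree ≤ 2 := by
      compute_degree
    omega
  have hnotfix : α ^ 2 ^ (n * r0) ≠ α := by
    intro h
    apply hA
    rw [h] at hταα
    linear_combination hταα + (α + 1) * h2K
  have hαne : ∀ {γ : K}, γ ^ 2 ^ r0 = γ → α ≠ γ := by
    intro γ hγ h
    exact hnotfix (by rw [h]; exact hfix_to hγ)
  have hαγ : ∀ {γ : K}, γ ^ 2 ^ r0 = γ → α + γ ≠ 0 := by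
    intro γ hγ h
    exact hαne hγ (by rw [eq_neg_of_add_eq_zero_left h, CharTwo.neg_eq])
  have hτα : α ^ 2 ^ (n * r0) = (α + 1) / α := by
    rw [eq_div_iff hα0]; exact hταα
  -- τα + γ ≠ 0 for γ in the small field
  have hβfix_ne : ∀ {γ : K}, γ ^ 2 ^ r0 = γ → (α + 1) / α + γ ≠ 0 := by
    intro γ hγ h
    have hτg : (α + 1) / α = γ := by linear_combination h - γ * h2K
    have hγα : γ * α = α + 1 := by rw [← hτg]; field_simp
    have hγ1 : γ ≠ 1 := by
      intro h1
      rw [h1, one_mul] at hγα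
      have : (1 : K) = 0 := by linear_combination -hγα
      exact one_ne_zero this
    have hγ1' : γ + 1 ≠ 0 := by
      intro h1
      exact hγ1 (by linear_combination h1 - h2K)
    have h5 : (γ + 1) * α = 1 := by linear_combination hγα + α * h2K
    have hαval : α = (γ + 1)⁻¹ := (inv_eq_of_mul_eq_one_right h5).symm
    have hαfix : α ^ 2 ^ r0 = α := by
      rw [hαval, inv_pow, add_pow_char_pow, one_pow, hγ]
    exact hnotfix (hfix_to hαfix)
  -- the beta map
  set β : K → K := fun γ => (γ ^ 2 + γ + 1) / (α + γ) + γ + 1 with hβdef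
  set T : Finset K := Finset.univ.filter (fun γ : K => γ ^ 2 ^ r0 = γ) with hTdef
  have hmemT : ∀ {γ : K}, γ ∈ T ↔ γ ^ 2 ^ r0 = γ := by
    intro γ; simp [hTdef]
  -- τ of β γ
  have hτpow : ∀ x : K, (x ^ 2) ^ 2 ^ (n * r0) = (x ^ 2 ^ (n * r0)) ^ 2 := fun x =>
    pow_right_comm x 2 (2 ^ (n * r0))
  have hone : (1 : K) ^ 2 ^ (n * r0) = 1 := one_pow _
  have hτβ : ∀ {γ : K}, γ ^ 2 ^ r0 = γ →
      (β γ) ^ 2 ^ (n * r0) = (γ ^ 2 + γ + 1) / ((α + 1) / α + γ) + γ + 1 := by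
    intro γ hγ
    have hγfix : γ ^ 2 ^ (n * r0) = γ := hfix_to hγ
    rw [hβdef]
    simp only [τadd, div_pow, hτpow, hγfix, hone, hτα]
  have hβroot : ∀ {γ : K}, γ ^ 2 ^ r0 = γ →
      (β γ) ^ ((2 ^ n) ^ r0 + 1) + β γ + 1 = 0 := by
    intro γ hγ
    rw [hexp, hτβ hγ]
    have hid := beta_identity h2K α γ hα0 (hαγ hγ) (hβfix_ne hγ)
    rw [hβdef]
    simp only
    linear_combination ((γ ^ 2 + γ + 1) / (α + γ) + γ + 1 + 1) * h2K + hid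
  -- injectivity facts
  have hβne : ∀ {γ : K}, γ ^ 2 ^ r0 = γ → β γ ≠ α := fun hγ =>
    beta_ne_a h2K α _ (hαγ hγ) hA
  have hkeyI : ∀ {γ : K}, γ ^ 2 ^ r0 = γ → γ * (α + β γ) = α * β γ + α + 1 := fun hγ =>
    key_I h2K α _ (hαγ hγ)
  have hβinj : ∀ γ₁ ∈ T, ∀ γ₂ ∈ T, β γ₁ = β γ₂ → γ₁ = γ₂ := by
    intro γ₁ h1 γ₂ h2 heq
    have k1 := hkeyI (hmemT.1 h1)
    have k2 := hkeyI (hmemT.1 h2)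
    rw [heq] at k1
    have hz : (γ₁ - γ₂) * (α + β γ₂) = 0 := by linear_combination k1 - k2
    have hne2 : α + β γ₂ ≠ 0 := by
      intro h0
      exact hβne (hmemT.1 h2)
        (by rw [← CharTwo.neg_eq α]; exact eq_neg_of_add_eq_zero_right h0)
    rcases mul_eq_zero.1 hz with h | h
    · exact sub_eq_zero.1 h
    · exact absurd h hne2
  -- classification of roots in K
  set S : Finset K := insert α (T.image β) with hSdef
  have hmemS : ∀ c : K, c ∈ S ↔ c ^ ((2 ^ n) ^ r0 + 1) + c + 1 = 0 := by
    intro c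
    constructor
    · intro hc
      rcases Finset.mem_insert.1 hc with rfl | hc
      · exact hα
      · obtain ⟨γ, hγT, rfl⟩ := Finset.mem_image.1 hc
        exact hβroot (hmemT.1 hγT)
    · intro hc
      have hc0 : c ≠ 0 := by
        rintro rfl
        rw [zero_pow (by positivity), zero_add, zero_add] at hc
        exact one_ne_zero hc
      by_cases hcα : c = α
      · exact hcα ▸ Finset.mem_insert_self α _
      have hac : α + c ≠ 0 := by
        intro h0
        exact hcα ((eq_neg_of_add_eq_zero_right h0).trans (CharTwo.neg_eq α))
      have hτcc : c ^ 2 ^ (n * r0) * c = c + 1 := by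
        rw [hexp] at hc
        linear_combination hc + (-c - 1) * h2K
      have hτc : c ^ 2 ^ (n * r0) = (c + 1) / c := by rw [eq_div_iff hc0]; exact hτcc
      set γ := (α * c + α + 1) / (α + c) with hγdef
      have hγfix : γ ^ 2 ^ (n * r0) = γ := by
        rw [hγdef]
        simp only [div_pow, τadd, mul_pow, hτα, hτc, hone]
        exact gamma_fix_identity h2K α c hα0 hc0 hac
      have hγT : γ ∈ T := hmemT.2 (hfix_iff.1 hγfix)
      have hγeq : γ * (α + c) = α * c + α + 1 := div_mul_cancel₀ _ hac
      have hβγ : β γ = c := beta_eq_c h2K α c γ (hαγ (hfix_iff.1 hγfix)) hγeq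
      exact Finset.mem_insert_of_mem (Finset.mem_image.2 ⟨γ, hγT, hβγ⟩)
  -- now the polynomial part
  have himg : α ∉ T.image β := by
    intro h
    obtain ⟨γ, hγT, hβγ⟩ := Finset.mem_image.1 h
    exact hβne (hmemT.1 hγT) hβγ
  set P : K[X] := X ^ ((2 ^ n) ^ r0 + 1) + X + 1 with hPdef
  set Qp : K[X] := X ^ 2 ^ r + X with hQdef
  have hone_lt : 1 < 2 ^ r := by
    have h1r : 1 ≤ r := by omega
    calc 1 < 2 ^ 1 := by norm_num
    _ ≤ 2 ^ r := Nat.pow_le_pow_right (by norm_num) h1r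
  haveI hchX : CharP (Polynomial K) 2 := by infer_instance
  have hQsub : Qp = X ^ 2 ^ r - X := by
    rw [hQdef, CharTwo.sub_eq_add]
  have hQroots : Qp.roots = Finset.univ.val := by
    rw [hQsub, ← hK]; exact FiniteField.roots_X_pow_card_sub_X K
  have hQne : Qp ≠ 0 := by
    rw [hQsub]; exact FiniteField.X_pow_card_sub_X_ne_zero K hone_lt
  have hQdeg : Qp.natDegree = 2 ^ r := by
    rw [hQsub]; exact FiniteField.X_pow_card_sub_X_natDegree_eq K hone_lt
  have hQsplits : Qp.Splits := by
    rw [splits_iff_card_roots, hQroots, hQdeg]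
    simpa using hK
  have hQsep : Qp.Separable := by
    have hd2 : Qp.derivative = 1 := by
      rw [hQdef]
      simp [derivative_X_pow]
      exact ⟨h2K, by omega⟩
    rw [Polynomial.separable_def, hd2]
    exact isCoprime_one_right
  have hPne : P ≠ 0 := by
    intro h0
    have h1 := congrArg (Polynomial.eval 0) h0
    rw [hPdef] at h1
    simp [zero_pow] at h1
  have hevalP : ∀ c : K, P.IsRoot c ↔ c ^ ((2 ^ n) ^ r0 + 1) + c + 1 = 0 := by
    intro c
    rw [hPdef]
    simp [IsRoot]
  have hRroots : (∏ c ∈ S, (X - C c)).roots = S.val := roots_prod_X_sub_C S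
  have hRmonic : (∏ c ∈ S, (X - C c)).Monic :=
    monic_prod_of_monic _ _ fun c _ => monic_X_sub_C c
  have hRne : (∏ c ∈ S, (X - C c)) ≠ 0 := hRmonic.ne_zero
  have hRsplits : (∏ c ∈ S, (X - C c)).Splits :=
    Splits.prod fun c _ => Splits.X_sub_C _
  have hSnodup : S.val.Nodup := S.nodup
  have hdvdP : (∏ c ∈ S, (X - C c)) ∣ P := by
    apply hRsplits.dvd_of_roots_le_roots hRne
    rw [hRroots]
    refine (Multiset.le_iff_subset hSnodup).2 ?_
    intro c hc
    rw [Polynomial.mem_roots hPne, hevalP c]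
    exact (hmemS c).1 (Finset.mem_val.mp hc)
  have hdvdQ : (∏ c ∈ S, (X - C c)) ∣ Qp := by
    apply hRsplits.dvd_of_roots_le_roots hRne
    rw [hRroots, hQroots]
    exact (Multiset.le_iff_subset hSnodup).2 fun c _ => Finset.mem_val.mpr (Finset.mem_univ c)
  set G := EuclideanDomain.gcd P Qp with hGdef
  have hGP : G ∣ P := EuclideanDomain.gcd_dvd_left P Qp
  have hGQ : G ∣ Qp := EuclideanDomain.gcd_dvd_right P Qp
  have hGne : G ≠ 0 := by
    rw [hGdef, Ne, EuclideanDomain.gcd_eq_zero_iff]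
    rintro ⟨h1, -⟩; exact hPne h1
  have hGsplits : G.Splits := Splits.of_dvd hQsplits hQne hGQ
  have hGsep : G.Separable := hQsep.of_dvd hGQ
  have hGnodup : G.roots.Nodup := nodup_roots hGsep
  have hdvdG : G ∣ ∏ c ∈ S, (X - C c) := by
    apply hGsplits.dvd_of_roots_le_roots hGne
    rw [hRroots]
    refine (Multiset.le_iff_subset hGnodup).2 ?_
    intro c hc
    have hcG : G.IsRoot c := (Polynomial.mem_roots hGne).1 hc
    have hcP : P.IsRoot c := hcG.dvd hGP
    exact Finset.mem_val.mpr ((hmemS c).2 ((hevalP c).1 hcP))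
  have hGdvd : (∏ c ∈ S, (X - C c)) ∣ G := EuclideanDomain.dvd_gcd hdvdP hdvdQ
  have hassoc : Associated G (∏ c ∈ S, (X - C c)) := associated_of_dvd_dvd hdvdG hGdvd
  -- cardinality of T
  have hr0lt : 1 < 2 ^ r0 := Nat.one_lt_pow (by omega) (by norm_num)
  set Q0 : K[X] := X ^ 2 ^ r0 - X with hQ0def
  have hQ0ne : Q0 ≠ 0 := FiniteField.X_pow_card_sub_X_ne_zero K hr0lt
  have hQ0deg : Q0.natDegree = 2 ^ r0 := FiniteField.X_pow_card_sub_X_natDegree_eq K hr0lt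
  have hdvd01 : (2 : ℕ) ^ r0 - 1 ∣ 2 ^ r - 1 := by
    have h3 : (2 : ℕ) ^ r = (2 ^ r0) ^ 3 := by rw [← pow_mul, hr, mul_comm]
    rw [h3]
    simpa using Nat.sub_dvd_pow_sub_pow (2 ^ r0) 1 3
  have hQ0dvd : Q0 ∣ Qp := by
    rw [hQsub, hQ0def]
    obtain ⟨k, hk⟩ := hdvd01
    have e1 : ∀ m : ℕ, 0 < m → (X : K[X]) ^ m - X = X * (X ^ (m - 1) - 1) := by
      intro m hm
      rw [mul_sub, mul_one, ← pow_succ']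
      congr 2
      omega
    rw [e1 _ (by positivity), e1 _ (by positivity)]
    apply mul_dvd_mul_left
    have h4 : (X : K[X]) ^ (2 ^ r - 1) - 1 = (X ^ (2 ^ r0 - 1)) ^ k - 1 ^ k := by
      rw [one_pow, ← pow_mul, ← hk]
    rw [h4]
    exact sub_dvd_pow_sub_pow _ _ k
  have hQ0splits : Q0.Splits := Splits.of_dvd hQsplits hQne hQ0dvd
  have hQ0sep : Q0.Separable := hQsep.of_dvd hQ0dvd
  have hQ0card : Multiset.card Q0.roots = 2 ^ r0 := by
    rw [splits_iff_card_roots.1 hQ0splits, hQ0deg]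
  have hTQ0 : T = Q0.roots.toFinset := by
    ext γ
    simp only [hmemT, Multiset.mem_toFinset, Polynomial.mem_roots (p := X ^ 2 ^ r0 - X) hQ0ne, hQ0def, IsRoot,
      eval_sub, eval_pow, eval_X, sub_eq_zero]
  have hTcard : T.card = 2 ^ r0 := by
    rw [hTQ0, Multiset.toFinset_card_of_nodup (nodup_roots hQ0sep), hQ0card]
  have hScard : S.card = 2 ^ r0 + 1 := by
    rw [hSdef, Finset.card_insert_of_notMem himg,
      Finset.card_image_of_injOn fun x hx y hy h => hβinj x hx y hy h, hTcard]
  have hRdeg : (∏ c ∈ S, (X - C c)).natDegree = 2 ^ r0 + 1 := by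
    rw [Polynomial.natDegree_prod _ _ fun c _ => X_sub_C_ne_zero c]
    simp [Polynomial.natDegree_X_sub_C, hScard]
  have hGdeg : G.natDegree = 2 ^ r0 + 1 := by
    obtain ⟨u, hu⟩ := hassoc
    have hudeg : (u : K[X]).natDegree = 0 := Polynomial.natDegree_eq_zero_of_isUnit u.isUnit
    have hune : (u : K[X]) ≠ 0 := u.isUnit.ne_zero
    rw [← hRdeg, ← hu, Polynomial.natDegree_mul hGne hune, hudeg, add_zero]
  have hRHSeq : ((X : K[X]) - C α) *
      ∏ γ ∈ T, (X - C ((γ ^ 2 + γ + 1) / (α + γ) + γ + 1)) = ∏ c ∈ S, (X - C c) := by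
    have hstep : ∏ γ ∈ T, ((X : K[X]) - C ((γ ^ 2 + γ + 1) / (α + γ) + γ + 1))
        = ∏ γ ∈ T, ((X : K[X]) - C (β γ)) :=
      Finset.prod_congr rfl fun γ _ => by rw [hβdef]
    rw [hstep, hSdef, Finset.prod_insert himg]
    congr 1
    exact (Finset.prod_image (s := T) (g := β) (f := fun c => (X : K[X]) - C c)
      fun x hx y hy h => hβinj x hx y hy h).symm
  constructor
  · rw [hRHSeq]; exact hassoc
  · exact hGdeg
end
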